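/- arXiv:2111.04292 — 8 statements merged into one kernel-verified Lean document; each statement's English description precedes it below -/
import Mathlib

section
/- For every odd natural number n, 2·B(n) = s(n)·I + t(n)·R, where I is the 4×4 identity matrix and R is the 4×4 integer matrix R = [[a−b, 2(−1+a+2b), 2(a−b), −2a], [2a, b−a, 2a, 0], [0, 2a, b−a, 2a], [−2a, 2(a−b), 2(−1+a+2b), a−b]]. -/
open Matrix

/-- The combinatorial Seifert-type matrix of a 2-bridge knot of genus two with
Alexander polynomial `A(z) = a + (b-a)z + (1-2b)z² + (b-a)z³ + a z⁴`. -/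
def Gamma (a b : ℤ) : Matrix (Fin 4) (Fin 4) ℤ :=
  !![a, -1 + b, -b, -a;
     a, b, -b, -a;
     a, b, 1 - b, -a;
     a, b, 1 - b, 1 - a]

/-- `B(n) = Γⁿ − (Γ − I)ⁿ`. -/
def B (a b : ℤ) (n : ℕ) : Matrix (Fin 4) (Fin 4) ℤ :=
  Gamma a b ^ n - (Gamma a b - 1) ^ n

namespace TwoBridgeAux
variable {α : Type*}
lemma m4ext {x00 x01 x02 x03 x10 x11 x12 x13 x20 x21 x22 x23 x30 x31 x32 x33 y00 y01 y02 y03 y10 y11 y12 y13 y20 y21 y22 y23 y30 y31 y32 y33 : α}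
    (h00 : x00 = y00) (h01 : x01 = y01) (h02 : x02 = y02) (h03 : x03 = y03) (h10 : x10 = y10) (h11 : x11 = y11) (h12 : x12 = y12) (h13 : x13 = y13) (h20 : x20 = y20) (h21 : x21 = y21) (h22 : x22 = y22) (h23 : x23 = y23) (h30 : x30 = y30) (h31 : x31 = y31) (h32 : x32 = y32) (h33 : x33 = y33)
    : (!![x00, x01, x02, x03; x10, x11, x12, x13; x20, x21, x22, x23; x30, x31, x32, x33] : Matrix (Fin 4) (Fin 4) α) = !![y00, y01, y02, y03; y10, y11, y12, y13; y20, y21, y22, y23; y30, y31, y32, y33] := by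
  subst_vars; rfl

lemma mul4 (x00 x01 x02 x03 x10 x11 x12 x13 x20 x21 x22 x23 x30 x31 x32 x33 y00 y01 y02 y03 y10 y11 y12 y13 y20 y21 y22 y23 y30 y31 y32 y33 : ℤ) : !![x00, x01, x02, x03; x10, x11, x12, x13; x20, x21, x22, x23; x30, x31, x32, x33] * !![y00, y01, y02, y03; y10, y11, y12, y13; y20, y21, y22, y23; y30, y31, y32, y33] =
    !![x00*y00 + x01*y10 + x02*y20 + x03*y30, x00*y01 + x01*y11 + x02*y21 + x03*y31, x00*y02 + x01*y12 + x02*y22 + x03*y32, x00*y03 + x01*y13 + x02*y23 + x03*y33; x10*y00 + x11*y10 + x12*y20 + x13*y30, x10*y01 + x11*y11 + x12*y21 + x13*y31, x10*y02 + x11*y12 + x12*y22 + x13*y32, x10*y03 + x11*y13 + x12*y23 + x13*y33; x20*y00 + x21*y10 + x22*y20 + x23*y30, x20*y01 + x21*y11 + x22*y21 + x23*y31, x20*y02 + x21*y12 + x22*y22 + x23*y32, x20*y03 + x21*y13 + x22*y23 + x23*y33; x30*y00 + x31*y10 + x32*y20 + x33*y30, x30*y01 + x31*y11 + x32*y21 +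 x33*y31, x30*y02 + x31*y12 + x32*y22 + x33*y32, x30*y03 + x31*y13 + x32*y23 + x33*y33] := by
  ext i j
  fin_cases i <;> fin_cases j <;> simp [Matrix.mul_apply, dotProduct, Fin.sum_univ_succ, ← add_assoc]

lemma smul4 (c : ℤ) (x00 x01 x02 x03 x10 x11 x12 x13 x20 x21 x22 x23 x30 x31 x32 x33 : ℤ) : c • (!![x00, x01, x02, x03; x10, x11, x12, x13; x20, x21, x22, x23; x30, x31, x32, x33] : Matrix (Fin 4) (Fin 4) ℤ) = !![c * x00, c * x01, c * x02, c * x03; c * x10, c * x11, c * x12, c * x13; c * x20, c * x21, c * x22, c * x23; c * x30, c * x31, c * x32, c * x33] := by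
  ext i j; fin_cases i <;> fin_cases j <;> simp [Matrix.vecHead, Matrix.vecTail]

lemma add4 (x00 x01 x02 x03 x10 x11 x12 x13 x20 x21 x22 x23 x30 x31 x32 x33 y00 y01 y02 y03 y10 y11 y12 y13 y20 y21 y22 y23 y30 y31 y32 y33 : ℤ) : (!![x00, x01, x02, x03; x10, x11, x12, x13; x20, x21, x22, x23; x30, x31, x32, x33] : Matrix (Fin 4) (Fin 4) ℤ) + !![y00, y01, y02, y03; y10, y11, y12, y13; y20, y21, y22, y23; y30, y31, y32, y33] = !![x00 + y00, x01 + y01, x02 + y02, x03 + y03; x10 + y10, x11 + y11, x12 + y12, x13 + y13; x20 + y20, x21 + y21, x22 + y22, x23 + y23; x30 + y30, x31 + y31, x32 + y32, x33 + y33] := by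
  ext i j; fin_cases i <;> fin_cases j <;> simp [Matrix.vecHead, Matrix.vecTail]

lemma sub4 (x00 x01 x02 x03 x10 x11 x12 x13 x20 x21 x22 x23 x30 x31 x32 x33 y00 y01 y02 y03 y10 y11 y12 y13 y20 y21 y22 y23 y30 y31 y32 y33 : ℤ) : (!![x00, x01, x02, x03; x10, x11, x12, x13; x20, x21, x22, x23; x30, x31, x32, x33] : Matrix (Fin 4) (Fin 4) ℤ) - !![y00, y01, y02, y03; y10, y11, y12, y13; y20, y21, y22, y23; y30, y31, y32, y33] = !![x00 - y00, x01 - y01, x02 - y02, x03 - y03; x10 - y10, x11 - y11, x12 - y12, x13 - y13; x20 - y20, x21 - y21, x22 - y22, x23 - y23; x30 - y30, x31 - y31, x32 - y32, x33 - y33] := by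
  ext i j; fin_cases i <;> fin_cases j <;> simp [Matrix.vecHead, Matrix.vecTail]

lemma one4 : (1 : Matrix (Fin 4) (Fin 4) ℤ) = !![1,0,0,0; 0,1,0,0; 0,0,1,0; 0,0,0,1] := by
  ext i j; fin_cases i <;> fin_cases j <;> simp [Matrix.one_apply, Matrix.vecHead, Matrix.vecTail]

lemma zero4 : (0 : Matrix (Fin 4) (Fin 4) ℤ) = !![0,0,0,0; 0,0,0,0; 0,0,0,0; 0,0,0,0] := by
  ext i j; fin_cases i <;> fin_cases j <;> simp [Matrix.vecHead, Matrix.vecTail]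

lemma hexpN (a b : ℤ) : Gamma a b - 1 = !![a - 1, -1 + b, -b, -a;
      a, b - 1, -b, -a;
      a, b, -b, -a;
      a, b, 1 - b, -a] := by
  show (!![a, -1 + b, -b, -a; a, b, -b, -a; a, b, 1 - b, -a; a, b, 1 - b, 1 - a]
    : Matrix (Fin 4) (Fin 4) ℤ) - 1 = _
  rw [one4, sub4]
  apply m4ext <;> ring

lemma hexpG (a b : ℤ) : Gamma a b = !![a, -1 + b, -b, -a; a, b, -b, -a; a, b, 1 - b, -a; a, b, 1 - b, 1 - a] := rfl

set_option maxHeartbeats 1600000 in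
lemma pG2 (a b : ℤ) : (Gamma a b) ^ 2 = !![-a, -b + -a, -a, 0;
      0, -a, -b + -a, -a;
      a, b + -a, (1) + (-2)*b + -a, (-2)*a;
      (2)*a, (2)*b + -a, (2) + (-3)*b + -a, (1) + (-3)*a] := by
  rw [pow_two, hexpG, mul4]
  apply m4ext <;> ring

set_option maxHeartbeats 1600000 in
lemma pG3 (a b : ℤ) : (Gamma a b) ^ 3 = !![-a*b + (-3)*a^2, -b^2 + a + (-3)*a*b, b^2 + -a + (3)*a*b, a*b + (3)*a^2;
      -a*b + (-3)*a^2, -b^2 + (-3)*a*b, -b + b^2 + (-2)*a + (3)*a*b, -a + a*b + (3)*a^2;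
      a + -a*b + (-3)*a^2, b + -b^2 + -a + (-3)*a*b, (1) + (-3)*b + b^2 + (-3)*a + (3)*a*b, (-3)*a + a*b + (3)*a^2;
      (3)*a + -a*b + (-3)*a^2, (3)*b + -b^2 + (-2)*a + (-3)*a*b, (3) + (-6)*b + b^2 + (-4)*a + (3)*a*b, (1) + (-6)*a + a*b + (3)*a^2] := by
  rw [pow_succ, pG2, hexpG, mul4]
  apply m4ext <;> ring

set_option maxHeartbeats 1600000 in
lemma pG4 (a b : ℤ) : (Gamma a b) ^ 4 = !![0, a*b + (3)*a^2, b^2 + -a + (4)*a*b + (3)*a^2, a*b + (3)*a^2;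
      -a*b + (-3)*a^2, -b^2 + (-2)*a*b + (3)*a^2, -b + (2)*b^2 + (-3)*a + (7)*a*b + (3)*a^2, -a + (2)*a*b + (6)*a^2;
      a + (-2)*a*b + (-6)*a^2, b + (-2)*b^2 + -a + (-5)*a*b + (3)*a^2, (1) + (-4)*b + (3)*b^2 + (-6)*a + (10)*a*b + (3)*a^2, (-4)*a + (3)*a*b + (9)*a^2;
      (4)*a + (-3)*a*b + (-9)*a^2, (4)*b + (-3)*b^2 + (-3)*a + (-8)*a*b + (3)*a^2, (4) + (-10)*b + (4)*b^2 + (-10)*a + (13)*a*b + (3)*a^2, (1) + (-10)*a + (4)*a*b + (12)*a^2] := by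
  rw [pow_succ, pG3, hexpG, mul4]
  apply m4ext <;> ring

set_option maxHeartbeats 1600000 in
lemma pG5 (a b : ℤ) : (Gamma a b) ^ 5 = !![a*b^2 + -a^2 + (6)*a^2*b + (9)*a^3, b^3 + -a*b + (6)*a*b^2 + (9)*a^2*b, b^2 + -b^3 + -a + (6)*a*b + (-6)*a*b^2 + (6)*a^2 + (-9)*a^2*b, a*b + -a*b^2 + (4)*a^2 + (-6)*a^2*b + (-9)*a^3;
      -a*b + a*b^2 + (-4)*a^2 + (6)*a^2*b + (9)*a^3, -b^2 + b^3 + (-3)*a*b + (6)*a*b^2 + (3)*a^2 + (9)*a^2*b, -b + (3)*b^2 + -b^3 + (-4)*a + (13)*a*b + (-6)*a*b^2 + (9)*a^2 + (-9)*a^2*b, -a + (3)*a*b + -a*b^2 + (10)*a^2 + (-6)*a^2*b + (-9)*a^3;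
      a + (-3)*a*b + a*b^2 + (-10)*a^2 + (6)*a^2*b + (9)*a^3, b + (-3)*b^2 + b^3 + -a + (-8)*a*b + (6)*a*b^2 + (6)*a^2 + (9)*a^2*b, (1) + (-5)*b + (6)*b^2 + -b^3 + (-10)*a + (23)*a*b + (-6)*a*b^2 + (12)*a^2 + (-9)*a^2*b, (-5)*a + (6)*a*b + -a*b^2 + (19)*a^2 + (-6)*a^2*b + (-9)*a^3;
      (5)*a + (-6)*a*b + a*b^2 + (-19)*a^2 + (6)*a^2*b + (9)*a^3, (5)*b + (-6)*b^2 + b^3 + (-4)*a + (-16)*a*b + (6)*a*b^2 + (9)*a^2 + (9)*a^2*b, (5) + (-15)*b + (10)*b^2 + -b^3 + (-20)*a + (36)*a*b + (-6)*a*b^2 + (15)*a^2 + (-9)*a^2*b, (1) + (-15)*a + (10)*a*b + -a*b^2 + (31)*a^2 + (-6)*a^2*b + (-9)*a^3] := by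
  rw [pow_succ, pG4, hexpG, mul4]
  apply m4ext <;> ring

set_option maxHeartbeats 1600000 in
lemma pG6 (a b : ℤ) : (Gamma a b) ^ 6 = !![a*b^2 + -a^2 + (6)*a^2*b + (9)*a^3, b^3 + -a*b + (5)*a*b^2 + a^2 + (3)*a^2*b + (-9)*a^3, b^2 + (-2)*b^3 + -a + (8)*a*b + (-13)*a*b^2 + (10)*a^2 + (-24)*a^2*b + (-9)*a^3, a*b + (-2)*a*b^2 + (5)*a^2 + (-12)*a^2*b + (-18)*a^3;
      -a*b + (2)*a*b^2 + (-5)*a^2 + (12)*a^2*b + (18)*a^3, -b^2 + (2)*b^3 + (-4)*a*b + (11)*a*b^2 + (4)*a^2 + (12)*a^2*b + (-9)*a^3, -b + (4)*b^2 + (-3)*b^3 + (-5)*a + (21)*a*b + (-19)*a*b^2 + (19)*a^2 + (-33)*a^2*b + (-9)*a^3, -a + (4)*a*b + (-3)*a*b^2 + (15)*a^2 + (-18)*a^2*b + (-27)*a^3;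
      a + (-4)*a*b + (3)*a*b^2 + (-15)*a^2 + (18)*a^2*b + (27)*a^3, b + (-4)*b^2 + (3)*b^3 + -a + (-12)*a*b + (17)*a*b^2 + (10)*a^2 + (21)*a^2*b + (-9)*a^3, (1) + (-6)*b + (10)*b^2 + (-4)*b^3 + (-15)*a + (44)*a*b + (-25)*a*b^2 + (31)*a^2 + (-42)*a^2*b + (-9)*a^3, (-6)*a + (10)*a*b + (-4)*a*b^2 + (34)*a^2 + (-24)*a^2*b + (-36)*a^3;
      (6)*a + (-10)*a*b + (4)*a*b^2 + (-34)*a^2 + (24)*a^2*b + (36)*a^3, (6)*b + (-10)*b^2 + (4)*b^3 + (-5)*a + (-28)*a*b + (23)*a*b^2 + (19)*a^2 + (30)*a^2*b + (-9)*a^3, (6) + (-21)*b + (20)*b^2 + (-5)*b^3 + (-35)*a + (80)*a*b + (-31)*a*b^2 + (46)*a^2 + (-51)*a^2*b + (-9)*a^3, (1) + (-21)*a + (20)*a*b + (-5)*a*b^2 + (65)*a^2 + (-30)*a^2*b + (-45)*a^3] := by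
  rw [pow_succ, pG5, hexpG, mul4]
  apply m4ext <;> ring

set_option maxHeartbeats 1600000 in
lemma pG7 (a b : ℤ) : (Gamma a b) ^ 7 = !![a*b^2 + -a*b^3 + -a^2 + (8)*a^2*b + (-9)*a^2*b^2 + (15)*a^3 + (-27)*a^3*b + (-27)*a^4, b^3 + -b^4 + -a*b + (7)*a*b^2 + (-9)*a*b^3 + a^2 + (9)*a^2*b + (-27)*a^2*b^2 + (-9)*a^3 + (-27)*a^3*b, b^2 + (-3)*b^3 + b^4 + -a + (10)*a*b + (-23)*a*b^2 + (9)*a*b^3 + (15)*a^2 + (-51)*a^2*b + (27)*a^2*b^2 + (-27)*a^3 + (27)*a^3*b, a*b + (-3)*a*b^2 + a*b^3 + (6)*a^2 + (-20)*a^2*b + (9)*a^2*b^2 + (-33)*a^3 + (27)*a^3*b + (27)*a^4;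
      -a*b + (3)*a*b^2 + -a*b^3 + (-6)*a^2 + (20)*a^2*b + (-9)*a^2*b^2 + (33)*a^3 + (-27)*a^3*b + (-27)*a^4, -b^2 + (3)*b^3 + -b^4 + (-5)*a*b + (18)*a*b^2 + (-9)*a*b^3 + (5)*a^2 + (21)*a^2*b + (-27)*a^2*b^2 + (-18)*a^3 + (-27)*a^3*b, -b + (5)*b^2 + (-6)*b^3 + b^4 + (-6)*a + (31)*a*b + (-42)*a*b^2 + (9)*a*b^3 + (34)*a^2 + (-84)*a^2*b + (27)*a^2*b^2 + (-36)*a^3 + (27)*a^3*b, -a + (5)*a*b + (-6)*a*b^2 + a*b^3 + (21)*a^2 + (-38)*a^2*b + (9)*a^2*b^2 + (-60)*a^3 + (27)*a^3*b + (27)*a^4;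
      a + (-5)*a*b + (6)*a*b^2 + -a*b^3 + (-21)*a^2 + (38)*a^2*b + (-9)*a^2*b^2 + (60)*a^3 + (-27)*a^3*b + (-27)*a^4, b + (-5)*b^2 + (6)*b^3 + -b^4 + -a + (-17)*a*b + (35)*a*b^2 + (-9)*a*b^3 + (15)*a^2 + (42)*a^2*b + (-27)*a^2*b^2 + (-27)*a^3 + (-27)*a^3*b, (1) + (-7)*b + (15)*b^2 + (-10)*b^3 + b^4 + (-21)*a + (75)*a*b + (-67)*a*b^2 + (9)*a*b^3 + (65)*a^2 + (-126)*a^2*b + (27)*a^2*b^2 + (-45)*a^3 + (27)*a^3*b, (-7)*a + (15)*a*b + (-10)*a*b^2 + a*b^3 + (55)*a^2 + (-62)*a^2*b + (9)*a^2*b^2 + (-96)*a^3 + (27)*a^3*b + (27)*a^4;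
      (7)*a + (-15)*a*b + (10)*a*b^2 + -a*b^3 + (-55)*a^2 + (62)*a^2*b + (-9)*a^2*b^2 + (96)*a^3 + (-27)*a^3*b + (-27)*a^4, (7)*b + (-15)*b^2 + (10)*b^3 + -b^4 + (-6)*a + (-45)*a*b + (58)*a*b^2 + (-9)*a*b^3 + (34)*a^2 + (72)*a^2*b + (-27)*a^2*b^2 + (-36)*a^3 + (-27)*a^3*b, (7) + (-28)*b + (35)*b^2 + (-15)*b^3 + b^4 + (-56)*a + (155)*a*b + (-98)*a*b^2 + (9)*a*b^3 + (111)*a^2 + (-177)*a^2*b + (27)*a^2*b^2 + (-54)*a^3 + (27)*a^3*b, (1) + (-28)*a + (35)*a*b + (-15)*a*b^2 + a*b^3 + (120)*a^2 + (-92)*a^2*b + (9)*a^2*b^2 + (-141)*a^3 + (27)*a^3*b + (27)*a^4] := by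
  rw [pow_succ, pG6, hexpG, mul4]
  apply m4ext <;> ring

set_option maxHeartbeats 1600000 in
lemma pG8 (a b : ℤ) : (Gamma a b) ^ 8 = !![a*b^2 + (-2)*a*b^3 + -a^2 + (10)*a^2*b + (-18)*a^2*b^2 + (21)*a^3 + (-54)*a^3*b + (-54)*a^4, b^3 + (-2)*b^4 + -a*b + (9)*a*b^2 + (-17)*a*b^3 + a^2 + (13)*a^2*b + (-45)*a^2*b^2 + (-15)*a^3 + (-27)*a^3*b + (27)*a^4, b^2 + (-4)*b^3 + (3)*b^4 + -a + (12)*a*b + (-36)*a*b^2 + (28)*a*b^3 + (21)*a^2 + (-92)*a^2*b + (90)*a^2*b^2 + (-60)*a^3 + (108)*a^3*b + (27)*a^4, a*b + (-4)*a*b^2 + (3)*a*b^3 + (7)*a^2 + (-30)*a^2*b + (27)*a^2*b^2 + (-54)*a^3 + (81)*a^3*b + (81)*a^4;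
      -a*b + (4)*a*b^2 + (-3)*a*b^3 + (-7)*a^2 + (30)*a^2*b + (-27)*a^2*b^2 + (54)*a^3 + (-81)*a^3*b + (-81)*a^4, -b^2 + (4)*b^3 + (-3)*b^4 + (-6)*a*b + (27)*a*b^2 + (-26)*a*b^3 + (6)*a^2 + (34)*a^2*b + (-72)*a^2*b^2 + (-33)*a^3 + (-54)*a^3*b + (27)*a^4, -b + (6)*b^2 + (-10)*b^3 + (4)*b^4 + (-7)*a + (43)*a*b + (-78)*a*b^2 + (37)*a*b^3 + (55)*a^2 + (-176)*a^2*b + (117)*a^2*b^2 + (-96)*a^3 + (135)*a^3*b + (27)*a^4, -a + (6)*a*b + (-10)*a*b^2 + (4)*a*b^3 + (28)*a^2 + (-68)*a^2*b + (36)*a^2*b^2 + (-114)*a^3 + (108)*a^3*b + (108)*a^4;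
      a + (-6)*a*b + (10)*a*b^2 + (-4)*a*b^3 + (-28)*a^2 + (68)*a^2*b + (-36)*a^2*b^2 + (114)*a^3 + (-108)*a^3*b + (-108)*a^4, b + (-6)*b^2 + (10)*b^3 + (-4)*b^4 + -a + (-23)*a*b + (62)*a*b^2 + (-35)*a*b^3 + (21)*a^2 + (76)*a^2*b + (-99)*a^2*b^2 + (-60)*a^3 + (-81)*a^3*b + (27)*a^4, (1) + (-8)*b + (21)*b^2 + (-20)*b^3 + (5)*b^4 + (-28)*a + (118)*a*b + (-145)*a*b^2 + (46)*a*b^3 + (120)*a^2 + (-302)*a^2*b + (144)*a^2*b^2 + (-141)*a^3 + (162)*a^3*b + (27)*a^4, (-8)*a + (21)*a*b + (-20)*a*b^2 + (5)*a*b^3 + (83)*a^2 + (-130)*a^2*b + (45)*a^2*b^2 + (-210)*a^3 + (135)*a^3*b + (135)*a^4;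
      (8)*a + (-21)*a*b + (20)*a*b^2 + (-5)*a*b^3 + (-83)*a^2 + (130)*a^2*b + (-45)*a^2*b^2 + (210)*a^3 + (-135)*a^3*b + (-135)*a^4, (8)*b + (-21)*b^2 + (20)*b^3 + (-5)*b^4 + (-7)*a + (-68)*a*b + (120)*a*b^2 + (-44)*a*b^3 + (55)*a^2 + (148)*a^2*b + (-126)*a^2*b^2 + (-96)*a^3 + (-108)*a^3*b + (27)*a^4, (8) + (-36)*b + (56)*b^2 + (-35)*b^3 + (6)*b^4 + (-84)*a + (273)*a*b + (-243)*a*b^2 + (55)*a*b^3 + (231)*a^2 + (-479)*a^2*b + (171)*a^2*b^2 + (-195)*a^3 + (189)*a^3*b + (27)*a^4, (1) + (-36)*a + (56)*a*b + (-35)*a*b^2 + (6)*a*b^3 + (203)*a^2 + (-222)*a^2*b + (54)*a^2*b^2 + (-351)*a^3 + (162)*a^3*b + (162)*a^4] := by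
  rw [pow_succ, pG7, hexpG, mul4]
  apply m4ext <;> ring

set_option maxHeartbeats 1600000 in
lemma pN2 (a b : ℤ) : (Gamma a b - 1) ^ 2 = !![(1) + (-3)*a, (2) + (-3)*b + -a, (2)*b + -a, (2)*a;
      (-2)*a, (1) + (-2)*b + -a, b + -a, a;
      -a, -b + -a, -a, 0;
      0, -a, -b + -a, -a] := by
  rw [pow_two, hexpN, mul4]
  apply m4ext <;> ring

set_option maxHeartbeats 1600000 in
lemma pN3 (a b : ℤ) : (Gamma a b - 1) ^ 3 = !![(-1) + (6)*a + -a*b + (-3)*a^2, (-3) + (6)*b + -b^2 + (4)*a + (-3)*a*b, (-3)*b + b^2 + (2)*a + (3)*a*b, (-3)*a + a*b + (3)*a^2;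
      (3)*a + -a*b + (-3)*a^2, (-1) + (3)*b + -b^2 + (3)*a + (-3)*a*b, -b + b^2 + a + (3)*a*b, -a + a*b + (3)*a^2;
      a + -a*b + (-3)*a^2, b + -b^2 + (2)*a + (-3)*a*b, b^2 + (3)*a*b, a*b + (3)*a^2;
      -a*b + (-3)*a^2, -b^2 + a + (-3)*a*b, b^2 + -a + (3)*a*b, a*b + (3)*a^2] := by
  rw [pow_succ, pN2, hexpN, mul4]
  apply m4ext <;> ring

set_option maxHeartbeats 1600000 in
lemma pN4 (a b : ℤ) : (Gamma a b - 1) ^ 4 = !![(1) + (-10)*a + (4)*a*b + (12)*a^2, (4) + (-10)*b + (4)*b^2 + (-10)*a + (13)*a*b + (3)*a^2, (4)*b + (-3)*b^2 + (-3)*a + (-8)*a*b + (3)*a^2, (4)*a + (-3)*a*b + (-9)*a^2;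
      (-4)*a + (3)*a*b + (9)*a^2, (1) + (-4)*b + (3)*b^2 + (-6)*a + (10)*a*b + (3)*a^2, b + (-2)*b^2 + -a + (-5)*a*b + (3)*a^2, a + (-2)*a*b + (-6)*a^2;
      -a + (2)*a*b + (6)*a^2, -b + (2)*b^2 + (-3)*a + (7)*a*b + (3)*a^2, -b^2 + (-2)*a*b + (3)*a^2, -a*b + (-3)*a^2;
      a*b + (3)*a^2, b^2 + -a + (4)*a*b + (3)*a^2, a*b + (3)*a^2, 0] := by
  rw [pow_succ, pN3, hexpN, mul4]
  apply m4ext <;> ring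

set_option maxHeartbeats 1600000 in
lemma pN5 (a b : ℤ) : (Gamma a b - 1) ^ 5 = !![(-1) + (15)*a + (-10)*a*b + a*b^2 + (-31)*a^2 + (6)*a^2*b + (9)*a^3, (-5) + (15)*b + (-10)*b^2 + b^3 + (20)*a + (-36)*a*b + (6)*a*b^2 + (-15)*a^2 + (9)*a^2*b, (-5)*b + (6)*b^2 + -b^3 + (4)*a + (16)*a*b + (-6)*a*b^2 + (-9)*a^2 + (-9)*a^2*b, (-5)*a + (6)*a*b + -a*b^2 + (19)*a^2 + (-6)*a^2*b + (-9)*a^3;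
      (5)*a + (-6)*a*b + a*b^2 + (-19)*a^2 + (6)*a^2*b + (9)*a^3, (-1) + (5)*b + (-6)*b^2 + b^3 + (10)*a + (-23)*a*b + (6)*a*b^2 + (-12)*a^2 + (9)*a^2*b, -b + (3)*b^2 + -b^3 + a + (8)*a*b + (-6)*a*b^2 + (-6)*a^2 + (-9)*a^2*b, -a + (3)*a*b + -a*b^2 + (10)*a^2 + (-6)*a^2*b + (-9)*a^3;
      a + (-3)*a*b + a*b^2 + (-10)*a^2 + (6)*a^2*b + (9)*a^3, b + (-3)*b^2 + b^3 + (4)*a + (-13)*a*b + (6)*a*b^2 + (-9)*a^2 + (9)*a^2*b, b^2 + -b^3 + (3)*a*b + (-6)*a*b^2 + (-3)*a^2 + (-9)*a^2*b, a*b + -a*b^2 + (4)*a^2 + (-6)*a^2*b + (-9)*a^3;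
      -a*b + a*b^2 + (-4)*a^2 + (6)*a^2*b + (9)*a^3, -b^2 + b^3 + a + (-6)*a*b + (6)*a*b^2 + (-6)*a^2 + (9)*a^2*b, -b^3 + a*b + (-6)*a*b^2 + (-9)*a^2*b, -a*b^2 + a^2 + (-6)*a^2*b + (-9)*a^3] := by
  rw [pow_succ, pN4, hexpN, mul4]
  apply m4ext <;> ring

set_option maxHeartbeats 1600000 in
lemma pN6 (a b : ℤ) : (Gamma a b - 1) ^ 6 = !![(1) + (-21)*a + (20)*a*b + (-5)*a*b^2 + (65)*a^2 + (-30)*a^2*b + (-45)*a^3, (6) + (-21)*b + (20)*b^2 + (-5)*b^3 + (-35)*a + (80)*a*b + (-31)*a*b^2 + (46)*a^2 + (-51)*a^2*b + (-9)*a^3, (6)*b + (-10)*b^2 + (4)*b^3 + (-5)*a + (-28)*a*b + (23)*a*b^2 + (19)*a^2 + (30)*a^2*b + (-9)*a^3, (6)*a + (-10)*a*b + (4)*a*b^2 + (-34)*a^2 + (24)*a^2*b + (36)*a^3;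
      (-6)*a + (10)*a*b + (-4)*a*b^2 + (34)*a^2 + (-24)*a^2*b + (-36)*a^3, (1) + (-6)*b + (10)*b^2 + (-4)*b^3 + (-15)*a + (44)*a*b + (-25)*a*b^2 + (31)*a^2 + (-42)*a^2*b + (-9)*a^3, b + (-4)*b^2 + (3)*b^3 + -a + (-12)*a*b + (17)*a*b^2 + (10)*a^2 + (21)*a^2*b + (-9)*a^3, a + (-4)*a*b + (3)*a*b^2 + (-15)*a^2 + (18)*a^2*b + (27)*a^3;
      -a + (4)*a*b + (-3)*a*b^2 + (15)*a^2 + (-18)*a^2*b + (-27)*a^3, -b + (4)*b^2 + (-3)*b^3 + (-5)*a + (21)*a*b + (-19)*a*b^2 + (19)*a^2 + (-33)*a^2*b + (-9)*a^3, -b^2 + (2)*b^3 + (-4)*a*b + (11)*a*b^2 + (4)*a^2 + (12)*a^2*b + (-9)*a^3, -a*b + (2)*a*b^2 + (-5)*a^2 + (12)*a^2*b + (18)*a^3;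
      a*b + (-2)*a*b^2 + (5)*a^2 + (-12)*a^2*b + (-18)*a^3, b^2 + (-2)*b^3 + -a + (8)*a*b + (-13)*a*b^2 + (10)*a^2 + (-24)*a^2*b + (-9)*a^3, b^3 + -a*b + (5)*a*b^2 + a^2 + (3)*a^2*b + (-9)*a^3, a*b^2 + -a^2 + (6)*a^2*b + (9)*a^3] := by
  rw [pow_succ, pN5, hexpN, mul4]
  apply m4ext <;> ring

set_option maxHeartbeats 1600000 in
lemma pN7 (a b : ℤ) : (Gamma a b - 1) ^ 7 = !![(-1) + (28)*a + (-35)*a*b + (15)*a*b^2 + -a*b^3 + (-120)*a^2 + (92)*a^2*b + (-9)*a^2*b^2 + (141)*a^3 + (-27)*a^3*b + (-27)*a^4, (-7) + (28)*b + (-35)*b^2 + (15)*b^3 + -b^4 + (56)*a + (-155)*a*b + (98)*a*b^2 + (-9)*a*b^3 + (-111)*a^2 + (177)*a^2*b + (-27)*a^2*b^2 + (54)*a^3 + (-27)*a^3*b, (-7)*b + (15)*b^2 + (-10)*b^3 + b^4 + (6)*a + (45)*a*b + (-58)*a*b^2 + (9)*a*b^3 + (-34)*a^2 + (-72)*a^2*b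 + (27)*a^2*b^2 + (36)*a^3 + (27)*a^3*b, (-7)*a + (15)*a*b + (-10)*a*b^2 + a*b^3 + (55)*a^2 + (-62)*a^2*b + (9)*a^2*b^2 + (-96)*a^3 + (27)*a^3*b + (27)*a^4;
      (7)*a + (-15)*a*b + (10)*a*b^2 + -a*b^3 + (-55)*a^2 + (62)*a^2*b + (-9)*a^2*b^2 + (96)*a^3 + (-27)*a^3*b + (-27)*a^4, (-1) + (7)*b + (-15)*b^2 + (10)*b^3 + -b^4 + (21)*a + (-75)*a*b + (67)*a*b^2 + (-9)*a*b^3 + (-65)*a^2 + (126)*a^2*b + (-27)*a^2*b^2 + (45)*a^3 + (-27)*a^3*b, -b + (5)*b^2 + (-6)*b^3 + b^4 + a + (17)*a*b + (-35)*a*b^2 + (9)*a*b^3 + (-15)*a^2 + (-42)*a^2*b + (27)*a^2*b^2 + (27)*a^3 + (27)*a^3*b, -a + (5)*a*b + (-6)*a*b^2 + a*b^3 + (21)*a^2 + (-38)*a^2*b + (9)*a^2*b^2 + (-60)*a^3 + (27)*a^3*b + (27)*a^4;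
      a + (-5)*a*b + (6)*a*b^2 + -a*b^3 + (-21)*a^2 + (38)*a^2*b + (-9)*a^2*b^2 + (60)*a^3 + (-27)*a^3*b + (-27)*a^4, b + (-5)*b^2 + (6)*b^3 + -b^4 + (6)*a + (-31)*a*b + (42)*a*b^2 + (-9)*a*b^3 + (-34)*a^2 + (84)*a^2*b + (-27)*a^2*b^2 + (36)*a^3 + (-27)*a^3*b, b^2 + (-3)*b^3 + b^4 + (5)*a*b + (-18)*a*b^2 + (9)*a*b^3 + (-5)*a^2 + (-21)*a^2*b + (27)*a^2*b^2 + (18)*a^3 + (27)*a^3*b, a*b + (-3)*a*b^2 + a*b^3 + (6)*a^2 + (-20)*a^2*b + (9)*a^2*b^2 + (-33)*a^3 + (27)*a^3*b + (27)*a^4;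
      -a*b + (3)*a*b^2 + -a*b^3 + (-6)*a^2 + (20)*a^2*b + (-9)*a^2*b^2 + (33)*a^3 + (-27)*a^3*b + (-27)*a^4, -b^2 + (3)*b^3 + -b^4 + a + (-10)*a*b + (23)*a*b^2 + (-9)*a*b^3 + (-15)*a^2 + (51)*a^2*b + (-27)*a^2*b^2 + (27)*a^3 + (-27)*a^3*b, -b^3 + b^4 + a*b + (-7)*a*b^2 + (9)*a*b^3 + -a^2 + (-9)*a^2*b + (27)*a^2*b^2 + (9)*a^3 + (27)*a^3*b, -a*b^2 + a*b^3 + a^2 + (-8)*a^2*b + (9)*a^2*b^2 + (-15)*a^3 + (27)*a^3*b + (27)*a^4] := by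
  rw [pow_succ, pN6, hexpN, mul4]
  apply m4ext <;> ring

set_option maxHeartbeats 1600000 in
lemma pN8 (a b : ℤ) : (Gamma a b - 1) ^ 8 = !![(1) + (-36)*a + (56)*a*b + (-35)*a*b^2 + (6)*a*b^3 + (203)*a^2 + (-222)*a^2*b + (54)*a^2*b^2 + (-351)*a^3 + (162)*a^3*b + (162)*a^4, (8) + (-36)*b + (56)*b^2 + (-35)*b^3 + (6)*b^4 + (-84)*a + (273)*a*b + (-243)*a*b^2 + (55)*a*b^3 + (231)*a^2 + (-479)*a^2*b + (171)*a^2*b^2 + (-195)*a^3 + (189)*a^3*b + (27)*a^4, (8)*b + (-21)*b^2 + (20)*b^3 + (-5)*b^4 + (-7)*a + (-68)*a*b + (120)*a*b^2 + (-44)*a*b^3 + (55)*a^2 + (148)*a^2*b + (-126)*a^2*b^2 + (-96)*a^3 + (-108)*a^3*b + (27)*a^4, (8)*a + (-21)*a*b + (20)*a*b^2 + (-5)*a*b^3 + (-83)*a^2 + (130)*a^2*b + (-45)*a^2*b^2 + (210)*a^3 + (-135)*a^3*b + (-135)*a^4;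
      (-8)*a + (21)*a*b + (-20)*a*b^2 + (5)*a*b^3 + (83)*a^2 + (-130)*a^2*b + (45)*a^2*b^2 + (-210)*a^3 + (135)*a^3*b + (135)*a^4, (1) + (-8)*b + (21)*b^2 + (-20)*b^3 + (5)*b^4 + (-28)*a + (118)*a*b + (-145)*a*b^2 + (46)*a*b^3 + (120)*a^2 + (-302)*a^2*b + (144)*a^2*b^2 + (-141)*a^3 + (162)*a^3*b + (27)*a^4, b + (-6)*b^2 + (10)*b^3 + (-4)*b^4 + -a + (-23)*a*b + (62)*a*b^2 + (-35)*a*b^3 + (21)*a^2 + (76)*a^2*b + (-99)*a^2*b^2 + (-60)*a^3 + (-81)*a^3*b + (27)*a^4, a + (-6)*a*b + (10)*a*b^2 + (-4)*a*b^3 + (-28)*a^2 + (68)*a^2*b + (-36)*a^2*b^2 + (114)*a^3 + (-108)*a^3*b + (-108)*a^4;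
      -a + (6)*a*b + (-10)*a*b^2 + (4)*a*b^3 + (28)*a^2 + (-68)*a^2*b + (36)*a^2*b^2 + (-114)*a^3 + (108)*a^3*b + (108)*a^4, -b + (6)*b^2 + (-10)*b^3 + (4)*b^4 + (-7)*a + (43)*a*b + (-78)*a*b^2 + (37)*a*b^3 + (55)*a^2 + (-176)*a^2*b + (117)*a^2*b^2 + (-96)*a^3 + (135)*a^3*b + (27)*a^4, -b^2 + (4)*b^3 + (-3)*b^4 + (-6)*a*b + (27)*a*b^2 + (-26)*a*b^3 + (6)*a^2 + (34)*a^2*b + (-72)*a^2*b^2 + (-33)*a^3 + (-54)*a^3*b + (27)*a^4, -a*b + (4)*a*b^2 + (-3)*a*b^3 + (-7)*a^2 + (30)*a^2*b + (-27)*a^2*b^2 + (54)*a^3 + (-81)*a^3*b + (-81)*a^4;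
      a*b + (-4)*a*b^2 + (3)*a*b^3 + (7)*a^2 + (-30)*a^2*b + (27)*a^2*b^2 + (-54)*a^3 + (81)*a^3*b + (81)*a^4, b^2 + (-4)*b^3 + (3)*b^4 + -a + (12)*a*b + (-36)*a*b^2 + (28)*a*b^3 + (21)*a^2 + (-92)*a^2*b + (90)*a^2*b^2 + (-60)*a^3 + (108)*a^3*b + (27)*a^4, b^3 + (-2)*b^4 + -a*b + (9)*a*b^2 + (-17)*a*b^3 + a^2 + (13)*a^2*b + (-45)*a^2*b^2 + (-15)*a^3 + (-27)*a^3*b + (27)*a^4, a*b^2 + (-2)*a*b^3 + -a^2 + (10)*a^2*b + (-18)*a^2*b^2 + (21)*a^3 + (-54)*a^3*b + (-54)*a^4] := by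
  rw [pow_succ, pN7, hexpN, mul4]
  apply m4ext <;> ring

set_option maxHeartbeats 1600000 in
lemma qG (a b : ℤ) : (a^2) • (1 : Matrix (Fin 4) (Fin 4) ℤ)
    + (2*a - 3*a^2 - 4*a*b - b^2) • Gamma a b ^ 2
    + (1 - 4*a + 9*a^2 - 2*b + 6*a*b + b^2) • Gamma a b ^ 4
    + (-2 + 6*a + 2*b) • Gamma a b ^ 6 + Gamma a b ^ 8 = 0 := by
  rw [pG2, pG4, pG6, pG8]
  simp only [one4, zero4, smul4, add4]
  apply m4ext <;> ring

set_option maxHeartbeats 1600000 in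
lemma qN (a b : ℤ) : (a^2) • (1 : Matrix (Fin 4) (Fin 4) ℤ)
    + (2*a - 3*a^2 - 4*a*b - b^2) • (Gamma a b - 1) ^ 2
    + (1 - 4*a + 9*a^2 - 2*b + 6*a*b + b^2) • (Gamma a b - 1) ^ 4
    + (-2 + 6*a + 2*b) • (Gamma a b - 1) ^ 6 + (Gamma a b - 1) ^ 8 = 0 := by
  rw [pN2, pN4, pN6, pN8]
  simp only [one4, zero4, smul4, add4]
  apply m4ext <;> ring

end TwoBridgeAux

set_option maxHeartbeats 1600000 in
/-- For every odd `n`, `2·B(n) = s(n)·I + t(n)·R` with `R` the displayed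
centrosymmetric matrix, where `s`, `t` are the sequences associated with the
Alexander polynomial, i.e. the unique solutions of the recurrence with the given
initial values. -/
theorem two_smul_B_odd (a b : ℤ)
    (s t : ℕ → ℤ)
    (hs_rec : ∀ n : ℕ, a ^ 2 * s n + (2 * a - 3 * a ^ 2 - 4 * a * b - b ^ 2) * s (n + 2)
      + (1 - 4 * a + 9 * a ^ 2 - 2 * b + 6 * a * b + b ^ 2) * s (n + 4)
      + (-2 + 6 * a + 2 * b) * s (n + 6) + s (n + 8) = 0)
    (ht_rec : ∀ n : ℕ, a ^ 2 * t n + (2 * a - 3 * a ^ 2 - 4 * a * b - b ^ 2) * t (n + 2)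
      + (1 - 4 * a + 9 * a ^ 2 - 2 * b + 6 * a * b + b ^ 2) * t (n + 4)
      + (-2 + 6 * a + 2 * b) * t (n + 6) + t (n + 8) = 0)
    (hs0 : s 0 = 0) (hs1 : s 1 = 2) (hs2 : s 2 = 2) (hs3 : s 3 = 2 - 9 * a - 3 * b)
    (hs4 : s 4 = 2 * (1 - 3 * a - b))
    (hs5 : s 5 = 2 - 25 * a + 45 * a ^ 2 - 5 * b + 30 * a * b + 5 * b ^ 2)
    (hs6 : s 6 = 2 - 18 * a + 27 * a ^ 2 - 4 * b + 18 * a * b + 3 * b ^ 2)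
    (hs7 : s 7 = 2 - 49 * a + 189 * a ^ 2 - 189 * a ^ 3 - 7 * b + 105 * a * b
      - 189 * a ^ 2 * b + 14 * b ^ 2 - 63 * a * b ^ 2 - 7 * b ^ 3)
    (ht0 : t 0 = 0) (ht1 : t 1 = 0) (ht2 : t 2 = 0) (ht3 : t 3 = -3) (ht4 : t 4 = -2)
    (ht5 : t 5 = 5 * (-1 + 3 * a + b)) (ht6 : t 6 = -4 + 9 * a + 3 * b)
    (ht7 : t 7 = -7 * (1 - 7 * a + 9 * a ^ 2 - 2 * b + 6 * a * b + b ^ 2))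
    (n : ℕ) (hn : Odd n) :
    2 • B a b n = s n • (1 : Matrix (Fin 4) (Fin 4) ℤ) + t n •
      !![a - b, 2 * (-1 + a + 2 * b), 2 * (a - b), -2 * a;
         2 * a, b - a, 2 * a, 0;
         0, 2 * a, b - a, 2 * a;
         -2 * a, 2 * (a - b), 2 * (-1 + a + 2 * b), a - b] := by
  obtain ⟨m, rfl⟩ := hn
  have h2Z : ∀ X : Matrix (Fin 4) (Fin 4) ℤ, (2:ℕ) • X = (2:ℤ) • X := fun X => by
    ext i j; simp
  have hGrec : ∀ k : ℕ, Gamma a b ^ (k + 8) =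
      -((a^2) • Gamma a b ^ k + (2*a - 3*a^2 - 4*a*b - b^2) • Gamma a b ^ (k+2)
        + (1 - 4*a + 9*a^2 - 2*b + 6*a*b + b^2) • Gamma a b ^ (k+4)
        + (-2 + 6*a + 2*b) • Gamma a b ^ (k+6)) := by
    intro k
    have h := congrArg (fun X => Gamma a b ^ k * X) (TwoBridgeAux.qG a b)
    simp only [mul_add, Matrix.mul_smul, mul_one, mul_zero, ← pow_add] at h
    first
    | exact eq_neg_of_add_eq_zero_left h
    | exact eq_neg_of_add_eq_zero_right h
  have hNrec : ∀ k : ℕ, (Gamma a b - 1) ^ (k + 8) =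
      -((a^2) • (Gamma a b - 1) ^ k + (2*a - 3*a^2 - 4*a*b - b^2) • (Gamma a b - 1) ^ (k+2)
        + (1 - 4*a + 9*a^2 - 2*b + 6*a*b + b^2) • (Gamma a b - 1) ^ (k+4)
        + (-2 + 6*a + 2*b) • (Gamma a b - 1) ^ (k+6)) := by
    intro k
    have h := congrArg (fun X => (Gamma a b - 1) ^ k * X) (TwoBridgeAux.qN a b)
    simp only [mul_add, Matrix.mul_smul, mul_one, mul_zero, ← pow_add] at h
    first
    | exact eq_neg_of_add_eq_zero_left h
    | exact eq_neg_of_add_eq_zero_right h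
  set R : Matrix (Fin 4) (Fin 4) ℤ :=
      !![a - b, 2 * (-1 + a + 2 * b), 2 * (a - b), -2 * a;
         2 * a, b - a, 2 * a, 0;
         0, 2 * a, b - a, 2 * a;
         -2 * a, 2 * (a - b), 2 * (-1 + a + 2 * b), a - b] with hR
  have step : ∀ k : ℕ,
      2 • B a b k = s k • (1 : Matrix (Fin 4) (Fin 4) ℤ) + t k • R →
      2 • B a b (k+2) = s (k+2) • (1 : Matrix (Fin 4) (Fin 4) ℤ) + t (k+2) • R →
      2 • B a b (k+4) = s (k+4) • (1 : Matrix (Fin 4) (Fin 4) ℤ) + t (k+4) • R →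
      2 • B a b (k+6) = s (k+6) • (1 : Matrix (Fin 4) (Fin 4) ℤ) + t (k+6) • R →
      2 • B a b (k+8) = s (k+8) • (1 : Matrix (Fin 4) (Fin 4) ℤ) + t (k+8) • R := by
    intro k h0 h2 h4 h6
    have hs8 : s (k+8) = -((a^2) * s k + (2*a - 3*a^2 - 4*a*b - b^2) * s (k+2)
        + (1 - 4*a + 9*a^2 - 2*b + 6*a*b + b^2) * s (k+4)
        + (-2 + 6*a + 2*b) * s (k+6)) := by linear_combination hs_rec k
    have ht8 : t (k+8) = -((a^2) * t k + (2*a - 3*a^2 - 4*a*b - b^2) * t (k+2)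
        + (1 - 4*a + 9*a^2 - 2*b + 6*a*b + b^2) * t (k+4)
        + (-2 + 6*a + 2*b) * t (k+6)) := by linear_combination ht_rec k
    simp only [h2Z, B] at h0 h2 h4 h6 ⊢
    rw [hGrec k, hNrec k, hs8, ht8]
    linear_combination (norm := module) (-(a^2) : ℤ) • h0
      + (-(2*a - 3*a^2 - 4*a*b - b^2)) • h2
      + (-(1 - 4*a + 9*a^2 - 2*b + 6*a*b + b^2)) • h4
      + (-(-2 + 6*a + 2*b)) • h6
  have base1 : 2 • B a b 1 = s 1 • (1 : Matrix (Fin 4) (Fin 4) ℤ) + t 1 • R := by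
    simp only [h2Z, B, pow_one]
    rw [TwoBridgeAux.hexpN, TwoBridgeAux.hexpG, hs1, ht1, hR]
    simp only [TwoBridgeAux.one4, TwoBridgeAux.sub4, TwoBridgeAux.smul4, TwoBridgeAux.add4]
    apply TwoBridgeAux.m4ext <;> ring
  have base3 : 2 • B a b 3 = s 3 • (1 : Matrix (Fin 4) (Fin 4) ℤ) + t 3 • R := by
    simp only [h2Z, B]
    rw [TwoBridgeAux.pG3, TwoBridgeAux.pN3, hs3, ht3, hR]
    simp only [TwoBridgeAux.one4, TwoBridgeAux.sub4, TwoBridgeAux.smul4, TwoBridgeAux.add4]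
    apply TwoBridgeAux.m4ext <;> ring
  have base5 : 2 • B a b 5 = s 5 • (1 : Matrix (Fin 4) (Fin 4) ℤ) + t 5 • R := by
    simp only [h2Z, B]
    rw [TwoBridgeAux.pG5, TwoBridgeAux.pN5, hs5, ht5, hR]
    simp only [TwoBridgeAux.one4, TwoBridgeAux.sub4, TwoBridgeAux.smul4, TwoBridgeAux.add4]
    apply TwoBridgeAux.m4ext <;> ring
  have base7 : 2 • B a b 7 = s 7 • (1 : Matrix (Fin 4) (Fin 4) ℤ) + t 7 • R := by
    simp only [h2Z, B]
    rw [TwoBridgeAux.pG7, TwoBridgeAux.pN7, hs7, ht7, hR]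
    simp only [TwoBridgeAux.one4, TwoBridgeAux.sub4, TwoBridgeAux.smul4, TwoBridgeAux.add4]
    apply TwoBridgeAux.m4ext <;> ring
  have key : ∀ m : ℕ, 2 • B a b (2*m+1)
      = s (2*m+1) • (1 : Matrix (Fin 4) (Fin 4) ℤ) + t (2*m+1) • R := by
    intro m
    induction m using Nat.strong_induction_on with
    | _ m ih =>
      match m with
      | 0 => exact base1
      | 1 => exact base3
      | 2 => exact base5
      | 3 => exact base7
      | (j+4) =>
        have e : 2*(j+4)+1 = (2*j+1)+8 := by ring
        rw [e]
        have h0 := ih j (by omega)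
        have h2 := ih (j+1) (by omega)
        have h4 := ih (j+2) (by omega)
        have h6 := ih (j+3) (by omega)
        rw [show 2*(j+1)+1 = (2*j+1)+2 from by ring] at h2
        rw [show 2*(j+2)+1 = (2*j+1)+4 from by ring] at h4
        rw [show 2*(j+3)+1 = (2*j+1)+6 from by ring] at h6
        exact step (2*j+1) h0 h2 h4 h6
  exact key m
end

section
/- For every even natural number n, 2·B(n) = s(n)·L + t(n)·R, where L = [[−1+2a, 2(−1+b), −2b, −2a], [2a, −1+2b, −2b, −2a], [2a, 2b, 1−2b, −2a], [2a, 2b, 2(1−b), 1−2a]] and R = [[−5a+6a²+b+2ab, 2(1−2a−3b+3ab+b²), 2(−a+b−3ab−b²), −2a(−1+3a+b)], [2a(−1+3a+b), (3a+b)(−1+2b), 2(a−3ab−b²), −2a(3a+b)], [2a(3a+b), −2(a−3ab−b²), −(3a+b)(−1+2b), −2a(−1+3a+b)], [2a(−1+3a+b), 2(a−b+3ab+b²), −2(1−2a−3b+3ab+b²), 5a−6a²−b−2ab]]. -/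
set_option maxHeartbeats 2000000

open Matrix

def Lm (a b : ℤ) : Matrix (Fin 4) (Fin 4) ℤ :=
  !![-1 + 2 * a, 2 * (-1 + b), -2 * b, -2 * a;
     2 * a, -1 + 2 * b, -2 * b, -2 * a;
     2 * a, 2 * b, 1 - 2 * b, -2 * a;
     2 * a, 2 * b, 2 * (1 - b), 1 - 2 * a]

def Rm (a b : ℤ) : Matrix (Fin 4) (Fin 4) ℤ :=
  !![-5 * a + 6 * a ^ 2 + b + 2 * a * b,
       2 * (1 - 2 * a - 3 * b + 3 * a * b + b ^ 2),
       2 * (-a + b - 3 * a * b - b ^ 2),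
       -2 * a * (-1 + 3 * a + b);
     2 * a * (-1 + 3 * a + b),
       (3 * a + b) * (-1 + 2 * b),
       2 * (a - 3 * a * b - b ^ 2),
       -2 * a * (3 * a + b);
     2 * a * (3 * a + b),
       -2 * (a - 3 * a * b - b ^ 2),
       -(3 * a + b) * (-1 + 2 * b),
       -2 * a * (-1 + 3 * a + b);
     2 * a * (-1 + 3 * a + b),
       2 * (a - b + 3 * a * b + b ^ 2),
       -2 * (1 - 2 * a - 3 * b + 3 * a * b + b ^ 2),
       5 * a - 6 * a ^ 2 - b - 2 * a * b]

def G2p (a b : ℤ) : Matrix (Fin 4) (Fin 4) ℤ :=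
  !![ -a,
     -b-a,
     -a,
     0;
     0,
     -a,
     -b-a,
     -a;
     a,
     b-a,
     1-2*b-a,
     -2*a;
     2*a,
     2*b-a,
     2-3*b-a,
     1-3*a]

def G4p (a b : ℤ) : Matrix (Fin 4) (Fin 4) ℤ :=
  !![ 0,
     a*b+3*a^2,
     b^2-a+4*a*b+3*a^2,
     a*b+3*a^2;
     -a*b-3*a^2,
     -b^2-2*a*b+3*a^2,
     -b+2*b^2-3*a+7*a*b+3*a^2,
     -a+2*a*b+6*a^2;
     a-2*a*b-6*a^2,
     b-2*b^2-a-5*a*b+3*a^2,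
     1-4*b+3*b^2-6*a+10*a*b+3*a^2,
     -4*a+3*a*b+9*a^2;
     4*a-3*a*b-9*a^2,
     4*b-3*b^2-3*a-8*a*b+3*a^2,
     4-10*b+4*b^2-10*a+13*a*b+3*a^2,
     1-10*a+4*a*b+12*a^2]

def G6p (a b : ℤ) : Matrix (Fin 4) (Fin 4) ℤ :=
  !![ a*b^2-a^2+6*a^2*b+9*a^3,
     b^3-a*b+5*a*b^2+a^2+3*a^2*b-9*a^3,
     b^2-2*b^3-a+8*a*b-13*a*b^2+10*a^2-24*a^2*b-9*a^3,
     a*b-2*a*b^2+5*a^2-12*a^2*b-18*a^3;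
     -a*b+2*a*b^2-5*a^2+12*a^2*b+18*a^3,
     -b^2+2*b^3-4*a*b+11*a*b^2+4*a^2+12*a^2*b-9*a^3,
     -b+4*b^2-3*b^3-5*a+21*a*b-19*a*b^2+19*a^2-33*a^2*b-9*a^3,
     -a+4*a*b-3*a*b^2+15*a^2-18*a^2*b-27*a^3;
     a-4*a*b+3*a*b^2-15*a^2+18*a^2*b+27*a^3,
     b-4*b^2+3*b^3-a-12*a*b+17*a*b^2+10*a^2+21*a^2*b-9*a^3,
     1-6*b+10*b^2-4*b^3-15*a+44*a*b-25*a*b^2+31*a^2-42*a^2*b-9*a^3,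
     -6*a+10*a*b-4*a*b^2+34*a^2-24*a^2*b-36*a^3;
     6*a-10*a*b+4*a*b^2-34*a^2+24*a^2*b+36*a^3,
     6*b-10*b^2+4*b^3-5*a-28*a*b+23*a*b^2+19*a^2+30*a^2*b-9*a^3,
     6-21*b+20*b^2-5*b^3-35*a+80*a*b-31*a*b^2+46*a^2-51*a^2*b-9*a^3,
     1-21*a+20*a*b-5*a*b^2+65*a^2-30*a^2*b-45*a^3]

def N1p (a b : ℤ) : Matrix (Fin 4) (Fin 4) ℤ :=
  !![ -1+a,
     -1+b,
     -b,
     -a;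
     a,
     -1+b,
     -b,
     -a;
     a,
     b,
     -b,
     -a;
     a,
     b,
     1-b,
     -a]

def N2p (a b : ℤ) : Matrix (Fin 4) (Fin 4) ℤ :=
  !![ 1-3*a,
     2-3*b-a,
     2*b-a,
     2*a;
     -2*a,
     1-2*b-a,
     b-a,
     a;
     -a,
     -b-a,
     -a,
     0;
     0,
     -a,
     -b-a,
     -a]

def N4p (a b : ℤ) : Matrix (Fin 4) (Fin 4) ℤ :=
  !![ 1-10*a+4*a*b+12*a^2,
     4-10*b+4*b^2-10*a+13*a*b+3*a^2,
     4*b-3*b^2-3*a-8*a*b+3*a^2,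
     4*a-3*a*b-9*a^2;
     -4*a+3*a*b+9*a^2,
     1-4*b+3*b^2-6*a+10*a*b+3*a^2,
     b-2*b^2-a-5*a*b+3*a^2,
     a-2*a*b-6*a^2;
     -a+2*a*b+6*a^2,
     -b+2*b^2-3*a+7*a*b+3*a^2,
     -b^2-2*a*b+3*a^2,
     -a*b-3*a^2;
     a*b+3*a^2,
     b^2-a+4*a*b+3*a^2,
     a*b+3*a^2,
     0]

def N6p (a b : ℤ) : Matrix (Fin 4) (Fin 4) ℤ :=
  !![ 1-21*a+20*a*b-5*a*b^2+65*a^2-30*a^2*b-45*a^3,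
     6-21*b+20*b^2-5*b^3-35*a+80*a*b-31*a*b^2+46*a^2-51*a^2*b-9*a^3,
     6*b-10*b^2+4*b^3-5*a-28*a*b+23*a*b^2+19*a^2+30*a^2*b-9*a^3,
     6*a-10*a*b+4*a*b^2-34*a^2+24*a^2*b+36*a^3;
     -6*a+10*a*b-4*a*b^2+34*a^2-24*a^2*b-36*a^3,
     1-6*b+10*b^2-4*b^3-15*a+44*a*b-25*a*b^2+31*a^2-42*a^2*b-9*a^3,
     b-4*b^2+3*b^3-a-12*a*b+17*a*b^2+10*a^2+21*a^2*b-9*a^3,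
     a-4*a*b+3*a*b^2-15*a^2+18*a^2*b+27*a^3;
     -a+4*a*b-3*a*b^2+15*a^2-18*a^2*b-27*a^3,
     -b+4*b^2-3*b^3-5*a+21*a*b-19*a*b^2+19*a^2-33*a^2*b-9*a^3,
     -b^2+2*b^3-4*a*b+11*a*b^2+4*a^2+12*a^2*b-9*a^3,
     -a*b+2*a*b^2-5*a^2+12*a^2*b+18*a^3;
     a*b-2*a*b^2+5*a^2-12*a^2*b-18*a^3,
     b^2-2*b^3-a+8*a*b-13*a*b^2+10*a^2-24*a^2*b-9*a^3,
     b^3-a*b+5*a*b^2+a^2+3*a^2*b-9*a^3,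
     a*b^2-a^2+6*a^2*b+9*a^3]

lemma hG2 (a b : ℤ) : Gamma a b ^ 2 = G2p a b := by
  rw [pow_two]
  ext i j
  fin_cases i <;> fin_cases j <;>
    simp [Gamma, G2p, G4p, G6p, N1p, N2p, N4p, N6p, Lm, Rm, B, Matrix.mul_apply, Fin.sum_univ_four, Matrix.vecHead, Matrix.vecTail, Matrix.one_apply, smul_eq_mul] <;> ring

lemma hG4 (a b : ℤ) : Gamma a b ^ 4 = G4p a b := by
  have e : Gamma a b ^ 4 = Gamma a b ^ 2 * Gamma a b ^ 2 := by rw [← pow_add]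
  rw [e, hG2]
  ext i j
  fin_cases i <;> fin_cases j <;>
    simp [Gamma, G2p, G4p, G6p, N1p, N2p, N4p, N6p, Lm, Rm, B, Matrix.mul_apply, Fin.sum_univ_four, Matrix.vecHead, Matrix.vecTail, Matrix.one_apply, smul_eq_mul] <;> ring

lemma hG6 (a b : ℤ) : Gamma a b ^ 6 = G6p a b := by
  have e : Gamma a b ^ 6 = Gamma a b ^ 4 * Gamma a b ^ 2 := by rw [← pow_add]
  rw [e, hG4, hG2]
  ext i j
  fin_cases i <;> fin_cases j <;>
    simp [Gamma, G2p, G4p, G6p, N1p, N2p, N4p, N6p, Lm, Rm, B, Matrix.mul_apply, Fin.sum_univ_four, Matrix.vecHead, Matrix.vecTail, Matrix.one_apply, smul_eq_mul] <;> ring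

lemma hN1 (a b : ℤ) : Gamma a b - 1 = N1p a b := by
  ext i j
  fin_cases i <;> fin_cases j <;>
    simp [Gamma, G2p, G4p, G6p, N1p, N2p, N4p, N6p, Lm, Rm, B, Matrix.mul_apply, Fin.sum_univ_four, Matrix.vecHead, Matrix.vecTail, Matrix.one_apply, smul_eq_mul] <;> ring

lemma hN2 (a b : ℤ) : (Gamma a b - 1) ^ 2 = N2p a b := by
  rw [hN1, pow_two]
  ext i j
  fin_cases i <;> fin_cases j <;>
    simp [Gamma, G2p, G4p, G6p, N1p, N2p, N4p, N6p, Lm, Rm, B, Matrix.mul_apply, Fin.sum_univ_four, Matrix.vecHead, Matrix.vecTail, Matrix.one_apply, smul_eq_mul] <;> ring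

lemma hN4 (a b : ℤ) : (Gamma a b - 1) ^ 4 = N4p a b := by
  have e : (Gamma a b - 1) ^ 4 = (Gamma a b - 1) ^ 2 * (Gamma a b - 1) ^ 2 := by rw [← pow_add]
  rw [e, hN2]
  ext i j
  fin_cases i <;> fin_cases j <;>
    simp [Gamma, G2p, G4p, G6p, N1p, N2p, N4p, N6p, Lm, Rm, B, Matrix.mul_apply, Fin.sum_univ_four, Matrix.vecHead, Matrix.vecTail, Matrix.one_apply, smul_eq_mul] <;> ring

lemma hN6 (a b : ℤ) : (Gamma a b - 1) ^ 6 = N6p a b := by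
  have e : (Gamma a b - 1) ^ 6 = (Gamma a b - 1) ^ 4 * (Gamma a b - 1) ^ 2 := by rw [← pow_add]
  rw [e, hN4, hN2]
  ext i j
  fin_cases i <;> fin_cases j <;>
    simp [Gamma, G2p, G4p, G6p, N1p, N2p, N4p, N6p, Lm, Rm, B, Matrix.mul_apply, Fin.sum_univ_four, Matrix.vecHead, Matrix.vecTail, Matrix.one_apply, smul_eq_mul] <;> ring

lemma hGkey (a b : ℤ) : a ^ 2 • (1 : Matrix (Fin 4) (Fin 4) ℤ)
    + (2 * a - 3 * a ^ 2 - 4 * a * b - b ^ 2) • Gamma a b ^ 2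
    + (1 - 4 * a + 9 * a ^ 2 - 2 * b + 6 * a * b + b ^ 2) • Gamma a b ^ 4
    + (-2 + 6 * a + 2 * b) • Gamma a b ^ 6 + Gamma a b ^ 8 = 0 := by
  have e : Gamma a b ^ 8 = Gamma a b ^ 4 * Gamma a b ^ 4 := by rw [← pow_add]
  have d : a ^ 2 • (1 : Matrix (Fin 4) (Fin 4) ℤ) =
      !![a^2, 0, 0, 0; 0, a^2, 0, 0; 0, 0, a^2, 0; 0, 0, 0, a^2] := by
    ext i j
    fin_cases i <;> fin_cases j <;> simp [Matrix.one_apply, Matrix.vecHead, Matrix.vecTail]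
  rw [e, d, hG2, hG4, hG6]
  ext i j
  fin_cases i <;> fin_cases j <;>
    simp [Gamma, G2p, G4p, G6p, N1p, N2p, N4p, N6p, Lm, Rm, B, Matrix.mul_apply, Fin.sum_univ_four, Matrix.vecHead, Matrix.vecTail, Matrix.one_apply, smul_eq_mul] <;> ring

lemma hNkey (a b : ℤ) : a ^ 2 • (1 : Matrix (Fin 4) (Fin 4) ℤ)
    + (2 * a - 3 * a ^ 2 - 4 * a * b - b ^ 2) • (Gamma a b - 1) ^ 2
    + (1 - 4 * a + 9 * a ^ 2 - 2 * b + 6 * a * b + b ^ 2) • (Gamma a b - 1) ^ 4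
    + (-2 + 6 * a + 2 * b) • (Gamma a b - 1) ^ 6 + (Gamma a b - 1) ^ 8 = 0 := by
  have e : (Gamma a b - 1) ^ 8 = (Gamma a b - 1) ^ 4 * (Gamma a b - 1) ^ 4 := by rw [← pow_add]
  have d : a ^ 2 • (1 : Matrix (Fin 4) (Fin 4) ℤ) =
      !![a^2, 0, 0, 0; 0, a^2, 0, 0; 0, 0, a^2, 0; 0, 0, 0, a^2] := by
    ext i j
    fin_cases i <;> fin_cases j <;> simp [Matrix.one_apply, Matrix.vecHead, Matrix.vecTail]
  rw [e, d, hN2, hN4, hN6]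
  ext i j
  fin_cases i <;> fin_cases j <;>
    simp [Gamma, G2p, G4p, G6p, N1p, N2p, N4p, N6p, Lm, Rm, B, Matrix.mul_apply, Fin.sum_univ_four, Matrix.vecHead, Matrix.vecTail, Matrix.one_apply, smul_eq_mul] <;> ring

lemma rec_aux (a b : ℤ) (M : Matrix (Fin 4) (Fin 4) ℤ)
    (hM : a ^ 2 • (1 : Matrix (Fin 4) (Fin 4) ℤ)
      + (2 * a - 3 * a ^ 2 - 4 * a * b - b ^ 2) • M ^ 2
      + (1 - 4 * a + 9 * a ^ 2 - 2 * b + 6 * a * b + b ^ 2) • M ^ 4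
      + (-2 + 6 * a + 2 * b) • M ^ 6 + M ^ 8 = 0) (n : ℕ) :
    a ^ 2 • M ^ n + (2 * a - 3 * a ^ 2 - 4 * a * b - b ^ 2) • M ^ (n + 2)
      + (1 - 4 * a + 9 * a ^ 2 - 2 * b + 6 * a * b + b ^ 2) • M ^ (n + 4)
      + (-2 + 6 * a + 2 * b) • M ^ (n + 6) + M ^ (n + 8) = 0 := by
  calc a ^ 2 • M ^ n + (2 * a - 3 * a ^ 2 - 4 * a * b - b ^ 2) • M ^ (n + 2)
      + (1 - 4 * a + 9 * a ^ 2 - 2 * b + 6 * a * b + b ^ 2) • M ^ (n + 4)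
      + (-2 + 6 * a + 2 * b) • M ^ (n + 6) + M ^ (n + 8)
      = M ^ n * (a ^ 2 • (1 : Matrix (Fin 4) (Fin 4) ℤ)
        + (2 * a - 3 * a ^ 2 - 4 * a * b - b ^ 2) • M ^ 2
        + (1 - 4 * a + 9 * a ^ 2 - 2 * b + 6 * a * b + b ^ 2) • M ^ 4
        + (-2 + 6 * a + 2 * b) • M ^ 6 + M ^ 8) := by
        simp only [mul_add, mul_smul_comm, mul_one, ← pow_add]
    _ = 0 := by rw [hM, mul_zero]

lemma recB (a b : ℤ) (n : ℕ) :
    a ^ 2 • B a b n + (2 * a - 3 * a ^ 2 - 4 * a * b - b ^ 2) • B a b (n + 2)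
      + (1 - 4 * a + 9 * a ^ 2 - 2 * b + 6 * a * b + b ^ 2) • B a b (n + 4)
      + (-2 + 6 * a + 2 * b) • B a b (n + 6) + B a b (n + 8) = 0 := by
  have h1 := rec_aux a b (Gamma a b) (hGkey a b) n
  have h2 := rec_aux a b (Gamma a b - 1) (hNkey a b) n
  simp only [B]
  linear_combination (norm := module) h1 - h2

theorem two_smul_B_even_aux (a b : ℤ)
    (s t : ℕ → ℤ)
    (hs_rec : ∀ n : ℕ, a ^ 2 * s n + (2 * a - 3 * a ^ 2 - 4 * a * b - b ^ 2) * s (n + 2)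
      + (1 - 4 * a + 9 * a ^ 2 - 2 * b + 6 * a * b + b ^ 2) * s (n + 4)
      + (-2 + 6 * a + 2 * b) * s (n + 6) + s (n + 8) = 0)
    (ht_rec : ∀ n : ℕ, a ^ 2 * t n + (2 * a - 3 * a ^ 2 - 4 * a * b - b ^ 2) * t (n + 2)
      + (1 - 4 * a + 9 * a ^ 2 - 2 * b + 6 * a * b + b ^ 2) * t (n + 4)
      + (-2 + 6 * a + 2 * b) * t (n + 6) + t (n + 8) = 0)
    (hs0 : s 0 = 0) (hs2 : s 2 = 2)
    (hs4 : s 4 = 2 * (1 - 3 * a - b))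
    (hs6 : s 6 = 2 - 18 * a + 27 * a ^ 2 - 4 * b + 18 * a * b + 3 * b ^ 2)
    (ht0 : t 0 = 0) (ht2 : t 2 = 0) (ht4 : t 4 = -2)
    (ht6 : t 6 = -4 + 9 * a + 3 * b)
    (n : ℕ) (hn : Even n) :
    2 • B a b n = s n • Lm a b + t n • Rm a b := by
  suffices h : ∀ k : ℕ,
      (2 • B a b (2 * k) = s (2 * k) • Lm a b + t (2 * k) • Rm a b) ∧
      (2 • B a b (2 * k + 2) = s (2 * k + 2) • Lm a b + t (2 * k + 2) • Rm a b) ∧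
      (2 • B a b (2 * k + 4) = s (2 * k + 4) • Lm a b + t (2 * k + 4) • Rm a b) ∧
      (2 • B a b (2 * k + 6) = s (2 * k + 6) • Lm a b + t (2 * k + 6) • Rm a b) by
    obtain ⟨r, rfl⟩ := hn
    rw [← two_mul]
    exact (h r).1
  intro k
  induction k with
  | zero =>
    refine ⟨?_, ?_, ?_, ?_⟩
    · simp [B, hs0, ht0]
    · show 2 • B a b 2 = _
      simp only [B]
      rw [hG2, hN2, hs2, ht2]
      ext i j
      fin_cases i <;> fin_cases j <;>
        simp [Gamma, G2p, G4p, G6p, N1p, N2p, N4p, N6p, Lm, Rm, B, Matrix.mul_apply, Fin.sum_univ_four, Matrix.vecHead, Matrix.vecTail, Matrix.one_apply, smul_eq_mul] <;> ring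
    · show 2 • B a b 4 = _
      simp only [B]
      rw [hG4, hN4, hs4, ht4]
      ext i j
      fin_cases i <;> fin_cases j <;>
        simp [Gamma, G2p, G4p, G6p, N1p, N2p, N4p, N6p, Lm, Rm, B, Matrix.mul_apply, Fin.sum_univ_four, Matrix.vecHead, Matrix.vecTail, Matrix.one_apply, smul_eq_mul] <;> ring
    · show 2 • B a b 6 = _
      simp only [B]
      rw [hG6, hN6, hs6, ht6]
      ext i j
      fin_cases i <;> fin_cases j <;>
        simp [Gamma, G2p, G4p, G6p, N1p, N2p, N4p, N6p, Lm, Rm, B, Matrix.mul_apply, Fin.sum_univ_four, Matrix.vecHead, Matrix.vecTail, Matrix.one_apply, smul_eq_mul] <;> ring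
  | succ k ih =>
    obtain ⟨h0, h2, h4, h6⟩ := ih
    refine ⟨?_, ?_, ?_, ?_⟩
    · rw [show 2 * (k + 1) = 2 * k + 2 by ring]; exact h2
    · rw [show 2 * (k + 1) + 2 = 2 * k + 4 by ring]; exact h4
    · rw [show 2 * (k + 1) + 4 = 2 * k + 6 by ring]; exact h6
    rw [show 2 * (k + 1) + 6 = 2 * k + 8 by ring]
    have hBr := recB a b (2 * k)
    have hs8 : s (2 * k + 8) = -(a ^ 2 * s (2 * k)
        + (2 * a - 3 * a ^ 2 - 4 * a * b - b ^ 2) * s (2 * k + 2)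
        + (1 - 4 * a + 9 * a ^ 2 - 2 * b + 6 * a * b + b ^ 2) * s (2 * k + 4)
        + (-2 + 6 * a + 2 * b) * s (2 * k + 6)) := by linarith [hs_rec (2 * k)]
    have ht8 : t (2 * k + 8) = -(a ^ 2 * t (2 * k)
        + (2 * a - 3 * a ^ 2 - 4 * a * b - b ^ 2) * t (2 * k + 2)
        + (1 - 4 * a + 9 * a ^ 2 - 2 * b + 6 * a * b + b ^ 2) * t (2 * k + 4)
        + (-2 + 6 * a + 2 * b) * t (2 * k + 6)) := by linarith [ht_rec (2 * k)]
    rw [hs8, ht8]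
    linear_combination (norm := module) (2 : ℤ) • hBr - a ^ 2 • h0
      - (2 * a - 3 * a ^ 2 - 4 * a * b - b ^ 2) • h2
      - (1 - 4 * a + 9 * a ^ 2 - 2 * b + 6 * a * b + b ^ 2) • h4
      - (-2 + 6 * a + 2 * b) • h6

theorem two_smul_B_even (a b : ℤ)
    (s t : ℕ → ℤ)
    (hs_rec : ∀ n : ℕ, a ^ 2 * s n + (2 * a - 3 * a ^ 2 - 4 * a * b - b ^ 2) * s (n + 2)
      + (1 - 4 * a + 9 * a ^ 2 - 2 * b + 6 * a * b + b ^ 2) * s (n + 4)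
      + (-2 + 6 * a + 2 * b) * s (n + 6) + s (n + 8) = 0)
    (ht_rec : ∀ n : ℕ, a ^ 2 * t n + (2 * a - 3 * a ^ 2 - 4 * a * b - b ^ 2) * t (n + 2)
      + (1 - 4 * a + 9 * a ^ 2 - 2 * b + 6 * a * b + b ^ 2) * t (n + 4)
      + (-2 + 6 * a + 2 * b) * t (n + 6) + t (n + 8) = 0)
    (hs0 : s 0 = 0) (hs1 : s 1 = 2) (hs2 : s 2 = 2) (hs3 : s 3 = 2 - 9 * a - 3 * b)
    (hs4 : s 4 = 2 * (1 - 3 * a - b))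
    (hs5 : s 5 = 2 - 25 * a + 45 * a ^ 2 - 5 * b + 30 * a * b + 5 * b ^ 2)
    (hs6 : s 6 = 2 - 18 * a + 27 * a ^ 2 - 4 * b + 18 * a * b + 3 * b ^ 2)
    (hs7 : s 7 = 2 - 49 * a + 189 * a ^ 2 - 189 * a ^ 3 - 7 * b + 105 * a * b
      - 189 * a ^ 2 * b + 14 * b ^ 2 - 63 * a * b ^ 2 - 7 * b ^ 3)
    (ht0 : t 0 = 0) (ht1 : t 1 = 0) (ht2 : t 2 = 0) (ht3 : t 3 = -3) (ht4 : t 4 = -2)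
    (ht5 : t 5 = 5 * (-1 + 3 * a + b)) (ht6 : t 6 = -4 + 9 * a + 3 * b)
    (ht7 : t 7 = -7 * (1 - 7 * a + 9 * a ^ 2 - 2 * b + 6 * a * b + b ^ 2))
    (n : ℕ) (hn : Even n) :
    2 • B a b n = s n •
      !![-1 + 2 * a, 2 * (-1 + b), -2 * b, -2 * a;
         2 * a, -1 + 2 * b, -2 * b, -2 * a;
         2 * a, 2 * b, 1 - 2 * b, -2 * a;
         2 * a, 2 * b, 2 * (1 - b), 1 - 2 * a] + t n •
      !![-5 * a + 6 * a ^ 2 + b + 2 * a * b,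
           2 * (1 - 2 * a - 3 * b + 3 * a * b + b ^ 2),
           2 * (-a + b - 3 * a * b - b ^ 2),
           -2 * a * (-1 + 3 * a + b);
         2 * a * (-1 + 3 * a + b),
           (3 * a + b) * (-1 + 2 * b),
           2 * (a - 3 * a * b - b ^ 2),
           -2 * a * (3 * a + b);
         2 * a * (3 * a + b),
           -2 * (a - 3 * a * b - b ^ 2),
           -(3 * a + b) * (-1 + 2 * b),
           -2 * a * (-1 + 3 * a + b);
         2 * a * (-1 + 3 * a + b),
           2 * (a - b + 3 * a * b + b ^ 2),
           -2 * (1 - 2 * a - 3 * b + 3 * a * b + b ^ 2),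
           5 * a - 6 * a ^ 2 - b - 2 * a * b] :=
  two_smul_B_even_aux a b s t hs_rec ht_rec hs0 hs2 hs4 hs6 ht0 ht2 ht4 ht6 n hn
end

section
/- For every odd natural number n, Γⁿ − (Γ − I)ⁿ = α(n)·I, where I is the 2×2 identity matrix. -/
open Matrix

lemma genus_one_key (l1 l2 : ℤ) (α : ℕ → ℤ)
    (hα0 : α 0 = 2) (hα1 : α 1 = 1)
    (hαrec : ∀ n : ℕ, α (n + 2) = α (n + 1) - l1 * l2 * α n) :
    ∀ n : ℕ,
      (!![0, -l2; l1, 1] : Matrix (Fin 2) (Fin 2) ℤ) ^ n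
        + ((-1 : ℤ) ^ n) • ((!![0, -l2; l1, 1] : Matrix (Fin 2) (Fin 2) ℤ) - 1) ^ n
      = α n • (1 : Matrix (Fin 2) (Fin 2) ℤ) := by
  set G : Matrix (Fin 2) (Fin 2) ℤ := !![0, -l2; l1, 1] with hG
  have hsm : (l1 * l2) • (1 : Matrix (Fin 2) (Fin 2) ℤ) = !![l1*l2,0;0,l1*l2] := by
    rw [Matrix.one_fin_two]; simp [Matrix.smul_of]
  have hG2 : G ^ 2 = G - (l1 * l2) • 1 := by
    rw [pow_two, hG, hsm, Matrix.mul_fin_two]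
    ext i j
    fin_cases i <;> fin_cases j <;> simp <;> ring
  have hH2 : (G - 1) ^ 2 = -(G - 1) - (l1 * l2) • 1 := by
    have : (G - 1) ^ 2 = G ^ 2 - 2 • G + 1 := by noncomm_ring
    rw [this, hG2]
    abel
  intro n
  induction n using Nat.twoStepInduction with
  | zero => simp [hα0, two_smul]
  | one => simp [hα1]
  | more n ih1 ih2 =>
    have e1 : G ^ (n + 2) = G ^ (n + 1) - (l1 * l2) • G ^ n := by
      calc G ^ (n + 2) = G ^ n * G ^ 2 := by rw [pow_add]
        _ = G ^ n * (G - (l1 * l2) • 1) := by rw [hG2]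
        _ = G ^ (n + 1) - (l1 * l2) • G ^ n := by
            rw [Matrix.mul_sub, Matrix.mul_smul, Matrix.mul_one, pow_succ]
    have e2 : (G - 1) ^ (n + 2) = -(G - 1) ^ (n + 1) - (l1 * l2) • (G - 1) ^ n := by
      calc (G - 1) ^ (n + 2) = (G - 1) ^ n * (G - 1) ^ 2 := by rw [pow_add]
        _ = (G - 1) ^ n * (-(G - 1) - (l1 * l2) • 1) := by rw [hH2]
        _ = -(G - 1) ^ (n + 1) - (l1 * l2) • (G - 1) ^ n := by
            rw [Matrix.mul_sub, Matrix.mul_smul, Matrix.mul_one, Matrix.mul_neg, pow_succ]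
    have hp : ((-1 : ℤ) ^ (n + 2)) = (-1 : ℤ) ^ n := by ring
    have hp1 : ((-1 : ℤ) ^ n) = -((-1 : ℤ) ^ (n + 1)) := by ring
    rw [e1, e2, hαrec n, hp]
    have := ih1  -- α n
    have := ih2  -- α (n+1)
    calc G ^ (n + 1) - (l1 * l2) • G ^ n +
          ((-1 : ℤ) ^ n) • (-(G - 1) ^ (n + 1) - (l1 * l2) • (G - 1) ^ n)
        = (G ^ (n + 1) + ((-1 : ℤ) ^ (n + 1)) • (G - 1) ^ (n + 1))
            - (l1 * l2) • (G ^ n + ((-1 : ℤ) ^ n) • (G - 1) ^ n) := by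
          rw [hp1]; module
      _ = α (n + 1) • (1 : Matrix (Fin 2) (Fin 2) ℤ)
            - (l1 * l2) • (α n • (1 : Matrix (Fin 2) (Fin 2) ℤ)) := by rw [ih2, ih1]
      _ = (α (n + 1) - l1 * l2 * α n) • (1 : Matrix (Fin 2) (Fin 2) ℤ) := by
          rw [smul_smul, sub_smul]

/-- For `Γ = [[0, −λ₂], [λ₁, 1]]` (the Seifert matrix data of a genus-one
2-bridge knot) and `α` defined by `α(0) = 2`, `α(1) = 1`,
`α(n+2) = α(n+1) − λ₁λ₂·α(n)`, for every odd `n` one has `Γⁿ − (Γ − I)ⁿ = α(n)·I`. -/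
theorem genus_one_odd (l1 l2 : ℤ) (α : ℕ → ℤ)
    (hα0 : α 0 = 2) (hα1 : α 1 = 1)
    (hαrec : ∀ n : ℕ, α (n + 2) = α (n + 1) - l1 * l2 * α n)
    (n : ℕ) (hn : Odd n) :
    (!![0, -l2; l1, 1] : Matrix (Fin 2) (Fin 2) ℤ) ^ n
        - ((!![0, -l2; l1, 1] : Matrix (Fin 2) (Fin 2) ℤ) - 1) ^ n
      = α n • (1 : Matrix (Fin 2) (Fin 2) ℤ) := by
  have h := genus_one_key l1 l2 α hα0 hα1 hαrec n
  rw [hn.neg_one_pow] at h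
  rw [← h]
  simp [sub_eq_add_neg]
end

section
/- For every even natural number n, Γⁿ − (Γ − I)ⁿ = β(n)·[[−1, −2λ₂], [2λ₁, 1]]. -/
open Matrix

/-- If a `2 × 2` matrix satisfies `A ^ 2 = A - c • 1`, its powers are given by the
linear recurrence `β(n+2) = β(n+1) - c·β(n)`:
`A ^ (n+1) = β(n+1) • A - (c·β(n)) • 1`. -/
lemma pow_formula {R : Type*} [CommRing R] (c : R) (β : ℕ → R)
    (hβ0 : β 0 = 0) (hβ1 : β 1 = 1)
    (hβrec : ∀ n : ℕ, β (n + 2) = β (n + 1) - c * β n)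
    (A : Matrix (Fin 2) (Fin 2) R) (hA : A ^ 2 = A - c • 1) :
    ∀ n : ℕ, A ^ (n + 1) = β (n + 1) • A - (c * β n) • (1 : Matrix (Fin 2) (Fin 2) R) := by
  intro n
  induction n with
  | zero => simp [hβ0, hβ1]
  | succ m ih =>
    have h1 : A ^ (m + 2) = A ^ (m + 1) * A := by rw [pow_succ]
    have hA2 : A * A = A - c • 1 := by rw [← pow_two]; exact hA
    rw [h1, ih, sub_mul, smul_mul_assoc, smul_mul_assoc, one_mul, hA2, hβrec, smul_sub]
    module

/-- For `Γ = [[0, −λ₂], [λ₁, 1]]` (the Seifert matrix data of a genus-one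
2-bridge knot) and `β` defined by `β(0) = 0`, `β(1) = 1`,
`β(n+2) = β(n+1) − λ₁λ₂·β(n)`, for every even `n` one has
`Γⁿ − (Γ − I)ⁿ = β(n)·[[−1, −2λ₂], [2λ₁, 1]]`. -/
theorem genus_one_even (l1 l2 : ℤ) (β : ℕ → ℤ)
    (hβ0 : β 0 = 0) (hβ1 : β 1 = 1)
    (hβrec : ∀ n : ℕ, β (n + 2) = β (n + 1) - l1 * l2 * β n)
    (n : ℕ) (hn : Even n) :
    (!![0, -l2; l1, 1] : Matrix (Fin 2) (Fin 2) ℤ) ^ n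
        - ((!![0, -l2; l1, 1] : Matrix (Fin 2) (Fin 2) ℤ) - 1) ^ n
      = β n • (!![-1, -2 * l2; 2 * l1, 1] : Matrix (Fin 2) (Fin 2) ℤ) := by
  set A : Matrix (Fin 2) (Fin 2) ℤ := !![0, -l2; l1, 1] with hAdef
  -- `A` satisfies `A² = A - (l1·l2)•1` (Cayley–Hamilton for trace 1, det l1·l2)
  have hA : A ^ 2 = A - (l1 * l2) • 1 := by
    rw [hAdef, pow_two, Matrix.mul_fin_two, Matrix.one_fin_two]
    ext i j
    fin_cases i <;> fin_cases j <;> simp [Matrix.smul_apply] <;> ring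
  -- hence so does `1 - A`
  have hB : (1 - A) ^ 2 = (1 - A) - (l1 * l2) • 1 := by
    have h1 : (1 - A) ^ 2 = 1 - 2 • A + A ^ 2 := by noncomm_ring
    rw [h1, hA]; module
  rcases n with _ | m
  · simp [hβ0]
  · -- since `m + 1` is even, `(A - 1)^(m+1) = (1 - A)^(m+1)`
    have hm : (A - 1) ^ (m + 1) = (1 - A) ^ (m + 1) := by
      have h : A - 1 = -(1 - A) := by rw [neg_sub]
      rw [h, Even.neg_pow hn]
    rw [hm, pow_formula (l1 * l2) β hβ0 hβ1 hβrec A hA m,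
      pow_formula (l1 * l2) β hβ0 hβ1 hβrec (1 - A) hB m]
    have hM : (2 : ℤ) • A - 1 = !![-1, -2 * l2; 2 * l1, 1] := by
      rw [hAdef, Matrix.one_fin_two]
      ext i j
      fin_cases i <;> fin_cases j <;> simp [Matrix.smul_apply] <;> ring
    rw [← hM]
    module
end

section
/- Let α, β, γ, δ be integers, not all zero, and let M be the 4×4 integer matrix M = [[α, β, γ, δ], [−δ, α−γ, −δ, 0], [0, −δ, α−γ, −δ], [δ, γ, β, α]]. Set d₁ = gcd(α, β, γ, δ) and d₂ = (α² − αγ + βδ − δ²)/d₁ (d₁ divides α² − αγ + βδ − δ²). Then coker M is isomorphic as an abelian group to ℤ_{d₁} ⊕ ℤ_{d₁} ⊕ ℤ_{d₂} ⊕ ℤ_{d₂}. -/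
namespace Coker22

/-- span of two vectors in ℤ² -/
def sp (v w : ℤ × ℤ) : Submodule ℤ (ℤ × ℤ) := Submodule.span ℤ {v, w}

/-- unimodular 2×2 as a linear equiv -/
def uni (p q r s : ℤ) (h : p * s - q * r = 1) : (ℤ × ℤ) ≃ₗ[ℤ] (ℤ × ℤ) where
  toFun x := (p * x.1 + q * x.2, r * x.1 + s * x.2)
  invFun x := (s * x.1 - q * x.2, -r * x.1 + p * x.2)
  map_add' x y := by ext <;> dsimp <;> ring
  map_smul' m x := by ext <;> dsimp <;> ring
  left_inv x := by
    ext <;> dsimp <;>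
      first
        | linear_combination x.1 * h
        | linear_combination x.2 * h
  right_inv x := by
    ext <;> dsimp <;>
      first
        | linear_combination x.1 * h
        | linear_combination x.2 * h

lemma uni_apply (p q r s : ℤ) (h : p * s - q * r = 1) (x : ℤ × ℤ) :
    uni p q r s h x = (p * x.1 + q * x.2, r * x.1 + s * x.2) := by rfl

/-- quotient equivalence under a linear automorphism -/
def quotMap (e : (ℤ × ℤ) ≃ₗ[ℤ] (ℤ × ℤ)) (v w : ℤ × ℤ) :
    ((ℤ × ℤ) ⧸ sp v w) ≃ₗ[ℤ] (ℤ × ℤ) ⧸ sp (e v) (e w) :=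
  Submodule.Quotient.equiv _ _ e (by
    rw [sp, Submodule.map_span]
    congr 1
    simp [Set.image_insert_eq])


lemma mem_sp_left (v w : ℤ × ℤ) : v ∈ sp v w :=
  Submodule.subset_span (Set.mem_insert _ _)

lemma mem_sp_right (v w : ℤ × ℤ) : w ∈ sp v w :=
  Submodule.subset_span (Set.mem_insert_of_mem _ rfl)

/-- generator replacement by a unimodular combination -/
lemma sp_replace (p q r s : ℤ) (h : p * s - q * r = 1) (v w : ℤ × ℤ) :
    sp v w = sp (p • v + q • w) (r • v + s • w) := by
  apply le_antisymm
  · rw [sp, Submodule.span_le]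
    intro x hx
    rcases hx with rfl | hx
    · refine Submodule.mem_span_pair.2 ⟨s, -q, ?_⟩
      refine Prod.ext ?_ ?_ <;>
        simp only [Prod.fst_add, Prod.snd_add, Prod.smul_fst, Prod.smul_snd, smul_eq_mul] <;>
        first
          | linear_combination x.1 * h
          | linear_combination x.2 * h
    · rcases hx with rfl
      refine Submodule.mem_span_pair.2 ⟨-r, p, ?_⟩
      refine Prod.ext ?_ ?_ <;>
        simp only [Prod.fst_add, Prod.snd_add, Prod.smul_fst, Prod.smul_snd, smul_eq_mul] <;>
        first
          | linear_combination x.1 * h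
          | linear_combination x.2 * h
  · rw [sp, Submodule.span_le]
    intro x hx
    rcases hx with rfl | hx
    · exact Submodule.add_mem _ (Submodule.smul_mem _ _ (mem_sp_left v w))
        (Submodule.smul_mem _ _ (mem_sp_right v w))
    · rcases hx with rfl
      exact Submodule.add_mem _ (Submodule.smul_mem _ _ (mem_sp_left v w))
        (Submodule.smul_mem _ _ (mem_sp_right v w))


lemma sp_diag_eq (p e : ℤ) :
    sp (p, 0) (0, e) = Submodule.prod (Ideal.span {p} : Submodule ℤ ℤ) (Ideal.span {e} : Submodule ℤ ℤ) := by
  apply le_antisymm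
  · rw [sp, Submodule.span_le]
    intro x hx
    rcases hx with rfl | hx
    · exact ⟨Ideal.mem_span_singleton_self p, Submodule.zero_mem _⟩
    · rcases hx with rfl
      exact ⟨Submodule.zero_mem _, Ideal.mem_span_singleton_self e⟩
  · rintro ⟨x, y⟩ ⟨hx, hy⟩
    rcases Ideal.mem_span_singleton'.1 hx with ⟨m, rfl⟩
    rcases Ideal.mem_span_singleton'.1 hy with ⟨n, rfl⟩
    refine Submodule.mem_span_pair.2 ⟨m, n, ?_⟩
    refine Prod.ext ?_ ?_ <;>
      simp [mul_comm]

/-- quotient of a product by a product -/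
noncomputable def quotProd (P Q : Ideal ℤ) :
    ((ℤ × ℤ) ⧸ Submodule.prod (P : Submodule ℤ ℤ) (Q : Submodule ℤ ℤ)) ≃ₗ[ℤ] (ℤ ⧸ P) × ℤ ⧸ Q := by
  refine (Submodule.quotEquivOfEq _ _ ?_).trans
    (LinearMap.quotKerEquivOfSurjective (LinearMap.prodMap P.mkQ Q.mkQ) ?_)
  · rw [LinearMap.ker_prodMap, Submodule.ker_mkQ, Submodule.ker_mkQ]
  · intro y
    obtain ⟨a, ha⟩ := Submodule.mkQ_surjective P y.1
    obtain ⟨b, hb⟩ := Submodule.mkQ_surjective Q y.2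
    exact ⟨(a, b), by simp [ha, hb]⟩

/-- cokernel of a diagonal pair -/
noncomputable def diagEquiv (p e : ℤ) :
    ((ℤ × ℤ) ⧸ sp (p, 0) (0, e)) ≃+ ZMod p.natAbs × ZMod e.natAbs :=
  (((Submodule.quotEquivOfEq _ _ (sp_diag_eq p e)).trans
      (quotProd _ _)).toAddEquiv).trans
    (AddEquiv.prodCongr (Int.quotientSpanEquivZMod p).toAddEquiv
      (Int.quotientSpanEquivZMod e).toAddEquiv)


/-- gcd of the four entries of a generator pair ((a,c),(b,d)) -/
def G4 (a c b d : ℤ) : ℕ := Int.gcd (Int.gcd (Int.gcd a c) b) d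

lemma G4_dvd_a (a c b d : ℤ) : ((G4 a c b d : ℤ)) ∣ a :=
  dvd_trans (Int.natCast_dvd_natCast.2 (dvd_trans (Nat.gcd_dvd_left _ _) (Nat.gcd_dvd_left _ _)))
    (Int.gcd_dvd_left a c)

lemma G4_dvd_c (a c b d : ℤ) : ((G4 a c b d : ℤ)) ∣ c :=
  dvd_trans (Int.natCast_dvd_natCast.2 (dvd_trans (Nat.gcd_dvd_left _ _) (Nat.gcd_dvd_left _ _)))
    (Int.gcd_dvd_right a c)

lemma G4_dvd_b (a c b d : ℤ) : ((G4 a c b d : ℤ)) ∣ b :=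
  dvd_trans (Int.natCast_dvd_natCast.2 (Nat.gcd_dvd_left _ _)) (Int.gcd_dvd_right (Int.gcd a c : ℤ) b)

lemma G4_dvd_d (a c b d : ℤ) : ((G4 a c b d : ℤ)) ∣ d := Int.gcd_dvd_right (Int.gcd (Int.gcd a c) b : ℤ) d

lemma dvd_G4 {k : ℤ} {a c b d : ℤ} (ha : k ∣ a) (hc : k ∣ c) (hb : k ∣ b) (hd : k ∣ d) :
    k ∣ (G4 a c b d : ℤ) :=
  Int.dvd_coe_gcd (Int.dvd_coe_gcd (Int.dvd_coe_gcd ha hc) hb) hd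

lemma G4_eq_of_dvd {a c b d a' c' b' d' : ℤ}
    (h1 : (G4 a c b d : ℤ) ∣ a' ∧ (G4 a c b d : ℤ) ∣ c' ∧ (G4 a c b d : ℤ) ∣ b' ∧ (G4 a c b d : ℤ) ∣ d')
    (h2 : (G4 a' c' b' d' : ℤ) ∣ a ∧ (G4 a' c' b' d' : ℤ) ∣ c ∧ (G4 a' c' b' d' : ℤ) ∣ b ∧ (G4 a' c' b' d' : ℤ) ∣ d) :
    G4 a c b d = G4 a' c' b' d' := by
  refine Nat.dvd_antisymm ?_ ?_
  · exact_mod_cast dvd_G4 h1.1 h1.2.1 h1.2.2.1 h1.2.2.2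
  · exact_mod_cast dvd_G4 h2.1 h2.2.1 h2.2.2.1 h2.2.2.2

/-- G4 is invariant under a unimodular row operation -/
lemma G4_row (p q r s : ℤ) (h : p * s - q * r = 1) (a c b d : ℤ) :
    G4 (p*a + q*c) (r*a + s*c) (p*b + q*d) (r*b + s*d) = G4 a c b d := by
  refine (G4_eq_of_dvd ?_ ?_).symm
  · exact ⟨dvd_add ((G4_dvd_a a c b d).mul_left p) ((G4_dvd_c a c b d).mul_left q),
      dvd_add ((G4_dvd_a a c b d).mul_left r) ((G4_dvd_c a c b d).mul_left s),
      dvd_add ((G4_dvd_b a c b d).mul_left p) ((G4_dvd_d a c b d).mul_left q),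
      dvd_add ((G4_dvd_b a c b d).mul_left r) ((G4_dvd_d a c b d).mul_left s)⟩
  · set g : ℤ := (G4 (p*a + q*c) (r*a + s*c) (p*b + q*d) (r*b + s*d) : ℤ) with hg
    have h1 := G4_dvd_a (p*a + q*c) (r*a + s*c) (p*b + q*d) (r*b + s*d)
    have h2 := G4_dvd_c (p*a + q*c) (r*a + s*c) (p*b + q*d) (r*b + s*d)
    have h3 := G4_dvd_b (p*a + q*c) (r*a + s*c) (p*b + q*d) (r*b + s*d)
    have h4 := G4_dvd_d (p*a + q*c) (r*a + s*c) (p*b + q*d) (r*b + s*d)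
    rw [← hg] at h1 h2 h3 h4
    refine ⟨?_, ?_, ?_, ?_⟩
    · have : a = s * (p*a + q*c) - q * (r*a + s*c) := by linear_combination -a * h
      rw [this]; exact dvd_sub (h1.mul_left s) (h2.mul_left q)
    · have : c = -r * (p*a + q*c) + p * (r*a + s*c) := by linear_combination -c * h
      rw [this]; exact dvd_add (h1.mul_left (-r)) (h2.mul_left p)
    · have : b = s * (p*b + q*d) - q * (r*b + s*d) := by linear_combination -b * h
      rw [this]; exact dvd_sub (h3.mul_left s) (h4.mul_left q)
    · have : d = -r * (p*b + q*d) + p * (r*b + s*d) := by linear_combination -d * h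
      rw [this]; exact dvd_add (h3.mul_left (-r)) (h4.mul_left p)

/-- G4 is invariant under a unimodular column operation (generator replacement) -/
lemma G4_col (p q r s : ℤ) (h : p * s - q * r = 1) (a c b d : ℤ) :
    G4 (p*a + q*b) (p*c + q*d) (r*a + s*b) (r*c + s*d) = G4 a c b d := by
  refine (G4_eq_of_dvd ?_ ?_).symm
  · exact ⟨dvd_add ((G4_dvd_a a c b d).mul_left p) ((G4_dvd_b a c b d).mul_left q),
      dvd_add ((G4_dvd_c a c b d).mul_left p) ((G4_dvd_d a c b d).mul_left q),
      dvd_add ((G4_dvd_a a c b d).mul_left r) ((G4_dvd_b a c b d).mul_left s),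
      dvd_add ((G4_dvd_c a c b d).mul_left r) ((G4_dvd_d a c b d).mul_left s)⟩
  · set g : ℤ := (G4 (p*a + q*b) (p*c + q*d) (r*a + s*b) (r*c + s*d) : ℤ) with hg
    have h1 := G4_dvd_a (p*a + q*b) (p*c + q*d) (r*a + s*b) (r*c + s*d)
    have h2 := G4_dvd_c (p*a + q*b) (p*c + q*d) (r*a + s*b) (r*c + s*d)
    have h3 := G4_dvd_b (p*a + q*b) (p*c + q*d) (r*a + s*b) (r*c + s*d)
    have h4 := G4_dvd_d (p*a + q*b) (p*c + q*d) (r*a + s*b) (r*c + s*d)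
    rw [← hg] at h1 h2 h3 h4
    refine ⟨?_, ?_, ?_, ?_⟩
    · have : a = s * (p*a + q*b) - q * (r*a + s*b) := by linear_combination -a * h
      rw [this]; exact dvd_sub (h1.mul_left s) (h3.mul_left q)
    · have : c = s * (p*c + q*d) - q * (r*c + s*d) := by linear_combination -c * h
      rw [this]; exact dvd_sub (h2.mul_left s) (h4.mul_left q)
    · have : b = -r * (p*a + q*b) + p * (r*a + s*b) := by linear_combination -b * h
      rw [this]; exact dvd_add (h1.mul_left (-r)) (h3.mul_left p)
    · have : d = -r * (p*c + q*d) + p * (r*c + s*d) := by linear_combination -d * h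
      rw [this]; exact dvd_add (h2.mul_left (-r)) (h4.mul_left p)


lemma bez_one {x y : ℤ} (hg : (Int.gcd x y : ℤ) ≠ 0) :
    Int.gcdA x y * (x / (Int.gcd x y : ℤ)) + Int.gcdB x y * (y / (Int.gcd x y : ℤ)) = 1 := by
  have hx : (Int.gcd x y : ℤ) * (x / (Int.gcd x y : ℤ)) = x :=
    Int.mul_ediv_cancel' (Int.gcd_dvd_left x y)
  have hy : (Int.gcd x y : ℤ) * (y / (Int.gcd x y : ℤ)) = y :=
    Int.mul_ediv_cancel' (Int.gcd_dvd_right x y)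
  have h2 := Int.gcd_eq_gcd_ab x y
  apply mul_left_cancel₀ hg
  linear_combination Int.gcdA x y * hx + Int.gcdB x y * hy - h2

lemma G4_zero (s e : ℤ) : G4 0 s 0 e = Int.gcd s e := by
  simp [G4, Int.gcd, Int.natAbs_abs]

lemma case0 (s e : ℤ) :
    Nonempty (((ℤ × ℤ) ⧸ sp (0, s) (0, e)) ≃+
      (ZMod (G4 0 s 0 e) × ZMod ((0 * e).natAbs / G4 0 s 0 e))) := by
  have hdet0 : ((0 : ℤ) * e).natAbs / G4 0 s 0 e = 0 := by simp
  rw [hdet0, G4_zero]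
  by_cases hg : (Int.gcd s e : ℤ) = 0
  · have hs : s = 0 := by
      have := Int.gcd_eq_zero_iff.1 (by exact_mod_cast hg); exact this.1
    have he : e = 0 := by
      have := Int.gcd_eq_zero_iff.1 (by exact_mod_cast hg); exact this.2
    subst hs he
    refine ⟨((diagEquiv 0 0).trans ?_)⟩
    simp only [Int.natAbs_zero, Int.gcd_self, Int.natAbs_zero]
    exact AddEquiv.refl _
  · set g : ℤ := (Int.gcd s e : ℤ) with hgdef
    have hrepl := sp_replace (Int.gcdA s e) (Int.gcdB s e) (-(e / g)) (s / g)
      (by have := bez_one hg; linear_combination this) ((0 : ℤ), s) ((0 : ℤ), e)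
    have hv : Int.gcdA s e • ((0:ℤ), s) + Int.gcdB s e • ((0:ℤ), e) = ((0:ℤ), g) := by
      refine Prod.ext ?_ ?_ <;>
        simp only [Prod.fst_add, Prod.snd_add, Prod.smul_fst, Prod.smul_snd, smul_eq_mul] <;>
        [ring; skip]
      have h2 := Int.gcd_eq_gcd_ab s e
      linear_combination -h2
    have hw : (-(e / g)) • ((0:ℤ), s) + (s / g) • ((0:ℤ), e) = ((0:ℤ), 0) := by
      have hx : g * (s / g) = s := Int.mul_ediv_cancel' (Int.gcd_dvd_left s e)
      have hy : g * (e / g) = e := Int.mul_ediv_cancel' (Int.gcd_dvd_right s e)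
      refine Prod.ext ?_ ?_ <;>
        simp only [Prod.fst_add, Prod.snd_add, Prod.smul_fst, Prod.smul_snd, smul_eq_mul] <;>
        [ring; skip]
      apply mul_left_cancel₀ hg
      linear_combination e * hx - s * hy
    rw [hv, hw] at hrepl
    have hpair : sp ((0:ℤ), g) ((0:ℤ), 0) = sp ((0:ℤ), 0) ((0:ℤ), g) := by
      rw [sp, sp, Set.pair_comm]
    refine ⟨(Submodule.quotEquivOfEq _ _ (hrepl.trans hpair)).toAddEquiv.trans ?_⟩
    refine (diagEquiv 0 g).trans ?_
    have : (g : ℤ).natAbs = Int.gcd s e := by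
      simp [hgdef]
    rw [Int.natAbs_zero, this]
    exact AddEquiv.prodComm


lemma gcd_ne_zero_left {p s : ℤ} (hp : p ≠ 0) : ((Int.gcd p s : ℤ)) ≠ 0 := by
  intro hc
  exact hp (Int.gcd_eq_zero_iff.1 (by exact_mod_cast hc)).1

lemma reduce (p s e : ℤ) (hp : p ≠ 0) (hps : ¬ p ∣ s)
    (IH : ∀ p' s' e' : ℤ, p'.natAbs < p.natAbs →
      Nonempty (((ℤ × ℤ) ⧸ sp (p', s') (0, e')) ≃+
        (ZMod (G4 p' s' 0 e') × ZMod ((p' * e').natAbs / G4 p' s' 0 e')))) :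
    Nonempty (((ℤ × ℤ) ⧸ sp (p, s) (0, e)) ≃+
      (ZMod (G4 p s 0 e) × ZMod ((p * e).natAbs / G4 p s 0 e))) := by
  set h : ℤ := (Int.gcd p s : ℤ) with hh
  have hh0 : h ≠ 0 := gcd_ne_zero_left hp
  have hdp : h ∣ p := Int.gcd_dvd_left p s
  have hds : h ∣ s := Int.gcd_dvd_right p s
  have hcp : h * (p / h) = p := Int.mul_ediv_cancel' hdp
  have hcs : h * (s / h) = s := Int.mul_ediv_cancel' hds
  set A : ℤ := Int.gcdA p s with hA
  set B : ℤ := Int.gcdB p s with hB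
  have hbez : A * (p / h) + B * (s / h) = 1 := bez_one hh0
  have hab : h = p * A + s * B := Int.gcd_eq_gcd_ab p s
  -- the row operation
  have hdet1 : A * (p / h) - B * (-(s / h)) = 1 := by linear_combination hbez
  set W := uni A B (-(s / h)) (p / h) hdet1 with hW
  have hW1 : W (p, s) = (h, 0) := by
    refine Prod.ext ?_ ?_ <;> simp only [hW, uni_apply]
    · linear_combination -hab
    · apply mul_left_cancel₀ hh0
      linear_combination s * hcp - p * hcs
  have hW2 : W (0, e) = (B * e, (p / h) * e) := by
    refine Prod.ext ?_ ?_ <;> simp only [hW, uni_apply] <;> ring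
  -- the column operation
  set h₂ : ℤ := (Int.gcd h (B * e) : ℤ) with hh₂
  have hh₂0 : h₂ ≠ 0 := gcd_ne_zero_left hh0
  have hdh : h₂ ∣ h := Int.gcd_dvd_left h (B * e)
  have hdBe : h₂ ∣ B * e := Int.gcd_dvd_right h (B * e)
  have hch : h₂ * (h / h₂) = h := Int.mul_ediv_cancel' hdh
  have hcBe : h₂ * (B * e / h₂) = B * e := Int.mul_ediv_cancel' hdBe
  set A₃ : ℤ := Int.gcdA h (B * e) with hA₃
  set B₃ : ℤ := Int.gcdB h (B * e) with hB₃
  have hbez3 : A₃ * (h / h₂) + B₃ * (B * e / h₂) = 1 := bez_one hh₂0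
  have hab3 : h₂ = h * A₃ + (B * e) * B₃ := Int.gcd_eq_gcd_ab h (B * e)
  have hdet3 : A₃ * (h / h₂) - B₃ * (-(B * e / h₂)) = 1 := by linear_combination hbez3
  set s₂ : ℤ := B₃ * ((p / h) * e) with hs₂
  set e₂ : ℤ := (h / h₂) * ((p / h) * e) with he₂
  have hrepl := sp_replace A₃ B₃ (-(B * e / h₂)) (h / h₂) hdet3 (h, 0) (B * e, (p / h) * e)
  have hv : A₃ • ((h : ℤ), (0:ℤ)) + B₃ • (B * e, (p / h) * e) = (h₂, s₂) := by
    refine Prod.ext ?_ ?_ <;>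
      simp only [Prod.fst_add, Prod.snd_add, Prod.smul_fst, Prod.smul_snd, smul_eq_mul] <;>
      [linear_combination -hab3; (rw [hs₂]; ring)]
  have hw : (-(B * e / h₂)) • ((h : ℤ), (0:ℤ)) + (h / h₂) • (B * e, (p / h) * e) = (0, e₂) := by
    refine Prod.ext ?_ ?_ <;>
      simp only [Prod.fst_add, Prod.snd_add, Prod.smul_fst, Prod.smul_snd, smul_eq_mul]
    · apply mul_left_cancel₀ hh₂0
      linear_combination (B * e) * hch - h * hcBe
    · rw [he₂]; ring
  rw [hv, hw] at hrepl
  -- measure decreases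
  have hlt : h₂.natAbs < p.natAbs := by
    have h1 : h₂.natAbs ∣ h.natAbs := Int.natAbs_dvd_natAbs.2 hdh
    have h2 : h.natAbs ∣ p.natAbs := Int.natAbs_dvd_natAbs.2 hdp
    have h3 : h.natAbs ≠ p.natAbs := by
      intro hc
      apply hps
      have : (h.natAbs : ℤ) ∣ s := (Int.natAbs_dvd).2 hds
      rw [hc] at this
      exact (Int.natAbs_dvd).1 this
    have hppos : 0 < p.natAbs := Int.natAbs_pos.2 hp
    have h4 : h.natAbs < p.natAbs :=
      lt_of_le_of_ne (Nat.le_of_dvd hppos h2) h3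
    exact lt_of_le_of_lt (Nat.le_of_dvd (Int.natAbs_pos.2 hh0) h1) h4
  obtain ⟨E⟩ := IH h₂ s₂ e₂ hlt
  -- bookkeeping: G4 and determinant
  have hdet2 : h₂ * e₂ = p * e := by
    calc h₂ * e₂ = (h₂ * (h / h₂)) * ((p / h) * e) := by rw [he₂]; ring
    _ = (h * (p / h)) * e := by rw [hch]; ring
    _ = p * e := by rw [hcp]
  have hGrow := G4_row A B (-(s / h)) (p / h) hdet1 p s 0 e
  rw [show A * p + B * s = h by linear_combination -hab,
      show -(s / h) * p + (p / h) * s = 0 by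
        apply mul_left_cancel₀ hh0; linear_combination s * hcp - p * hcs,
      show A * 0 + B * e = B * e by ring,
      show -(s / h) * 0 + (p / h) * e = (p / h) * e by ring] at hGrow
  have hGcol := G4_col A₃ B₃ (-(B * e / h₂)) (h / h₂) hdet3 h 0 (B * e) ((p / h) * e)
  rw [show A₃ * h + B₃ * (B * e) = h₂ by linear_combination -hab3,
      show A₃ * 0 + B₃ * ((p / h) * e) = s₂ by rw [hs₂]; ring,
      show -(B * e / h₂) * h + (h / h₂) * (B * e) = 0 by
        apply mul_left_cancel₀ hh₂0; linear_combination (B * e) * hch - h * hcBe,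
      show -(B * e / h₂) * 0 + (h / h₂) * ((p / h) * e) = e₂ by rw [he₂]; ring] at hGcol
  have hG : G4 h₂ s₂ 0 e₂ = G4 p s 0 e := hGcol.trans hGrow
  rw [← hG, show p * e = h₂ * e₂ from hdet2.symm]
  exact ⟨((quotMap W (p, s) (0, e)).toAddEquiv.trans
    (((Submodule.quotEquivOfEq _ _ (by rw [hW1, hW2]; exact hrepl)).toAddEquiv).trans E))⟩


lemma Q : ∀ n : ℕ, ∀ p s e : ℤ, p.natAbs ≤ n →
    Nonempty (((ℤ × ℤ) ⧸ sp (p, s) (0, e)) ≃+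
      (ZMod (G4 p s 0 e) × ZMod ((p * e).natAbs / G4 p s 0 e))) := by
  intro n
  induction n with
  | zero =>
    intro p s e hp
    have : p = 0 := by
      have := Nat.le_zero.1 hp
      omega
    subst this
    exact case0 s e
  | succ n IH =>
    intro p s e hp
    by_cases hp0 : p = 0
    · subst hp0; exact case0 s e
    · -- row operation clearing s when p ∣ s
      by_cases hps : p ∣ s
      · have hcs : p * (s / p) = s := Int.mul_ediv_cancel' hps
        have hdet : (1 : ℤ) * 1 - 0 * (-(s / p)) = 1 := by ring
        set W := uni 1 0 (-(s / p)) 1 hdet with hW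
        have hW1 : W (p, s) = (p, 0) := by
          refine Prod.ext ?_ ?_ <;> simp only [hW, uni_apply]
          · ring
          · linear_combination -hcs
        have hW2 : W (0, e) = (0, e) := by
          refine Prod.ext ?_ ?_ <;> simp only [hW, uni_apply] <;> ring
        have hGrow := G4_row 1 0 (-(s / p)) 1 hdet p s 0 e
        rw [show (1:ℤ) * p + 0 * s = p by ring,
            show -(s / p) * p + 1 * s = 0 by linear_combination -hcs,
            show (1:ℤ) * 0 + 0 * e = 0 by ring,
            show -(s / p) * 0 + 1 * e = e by ring] at hGrow
        by_cases hpe : p ∣ e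
        · -- finished: diagonal
          have hG : G4 p 0 0 e = p.natAbs := by
            have h1 : Int.gcd p 0 = p.natAbs := Int.gcd_zero_right p
            have h2 : Int.gcd (p.natAbs : ℤ) 0 = p.natAbs := by
              rw [Int.gcd_zero_right, Int.natAbs_natCast]
            have h3 : Int.gcd (p.natAbs : ℤ) e = p.natAbs := by
              rw [Int.gcd]
              simp only [Int.natAbs_natCast]
              exact Nat.gcd_eq_left (Int.natAbs_dvd_natAbs.2 hpe)
            rw [G4, h1, h2, h3]
          have hk : (p * e).natAbs / G4 p 0 0 e = e.natAbs := by
            rw [hG, Int.natAbs_mul]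
            exact Nat.mul_div_cancel_left _ (Int.natAbs_pos.2 hp0)
          rw [← hGrow, hk, hG]
          exact ⟨(quotMap W (p, s) (0, e)).toAddEquiv.trans
            ((Submodule.quotEquivOfEq _ _ (by rw [hW1, hW2])).toAddEquiv.trans
              (diagEquiv p e))⟩
        · -- column operation to (p, e), (0, e), then reduce
          have hrepl := sp_replace 1 1 0 1 (by ring) ((p : ℤ), (0:ℤ)) ((0:ℤ), e)
          have hv : (1:ℤ) • ((p : ℤ), (0:ℤ)) + (1:ℤ) • ((0:ℤ), e) = (p, e) := by
            refine Prod.ext ?_ ?_ <;>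
              simp only [Prod.fst_add, Prod.snd_add, Prod.smul_fst, Prod.smul_snd,
                smul_eq_mul] <;> ring
          have hw : (0:ℤ) • ((p : ℤ), (0:ℤ)) + (1:ℤ) • ((0:ℤ), e) = (0, e) := by
            refine Prod.ext ?_ ?_ <;>
              simp only [Prod.fst_add, Prod.snd_add, Prod.smul_fst, Prod.smul_snd,
                smul_eq_mul] <;> ring
          rw [hv, hw] at hrepl
          have hGcol := G4_col 1 1 0 1 (by ring) p 0 0 e
          rw [show (1:ℤ) * p + 1 * 0 = p by ring,
              show (1:ℤ) * 0 + 1 * e = e by ring,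
              show (0:ℤ) * p + 1 * 0 = 0 by ring,
              show (0:ℤ) * 0 + 1 * e = e by ring] at hGcol
          obtain ⟨E⟩ := reduce p e e hp0 hpe (fun p' s' e' hlt => IH p' s' e' (by omega))
          rw [← hGrow, ← hGcol]
          exact ⟨(quotMap W (p, s) (0, e)).toAddEquiv.trans
            ((Submodule.quotEquivOfEq _ _ (by rw [hW1, hW2]; exact hrepl)).toAddEquiv.trans E)⟩
      · exact reduce p s e hp0 hps (fun p' s' e' hlt => IH p' s' e' (by omega))


theorem main22 (a c b d : ℤ) :
    Nonempty (((ℤ × ℤ) ⧸ sp (a, c) (b, d)) ≃+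
      (ZMod (G4 a c b d) × ZMod ((a * d - b * c).natAbs / G4 a c b d))) := by
  by_cases hg : (Int.gcd a b : ℤ) = 0
  · have ha : a = 0 := (Int.gcd_eq_zero_iff.1 (by exact_mod_cast hg)).1
    have hb : b = 0 := (Int.gcd_eq_zero_iff.1 (by exact_mod_cast hg)).2
    subst ha hb
    have h1 : ((0:ℤ) * d - 0 * c) = 0 * d := by ring
    rw [h1]
    exact Q (0:ℤ).natAbs 0 c d le_rfl
  · set g : ℤ := (Int.gcd a b : ℤ) with hgdef
    have hda : g ∣ a := Int.gcd_dvd_left a b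
    have hdb : g ∣ b := Int.gcd_dvd_right a b
    have hca : g * (a / g) = a := Int.mul_ediv_cancel' hda
    have hcb : g * (b / g) = b := Int.mul_ediv_cancel' hdb
    set A : ℤ := Int.gcdA a b with hA
    set B : ℤ := Int.gcdB a b with hB
    have hab : g = a * A + b * B := Int.gcd_eq_gcd_ab a b
    have hdet : A * (a / g) - B * (-(b / g)) = 1 := by
      have := bez_one (x := a) (y := b) hg
      linear_combination this
    set s' : ℤ := A * c + B * d with hs'
    set e' : ℤ := -(b / g) * c + (a / g) * d with he'
    have hrepl := sp_replace A B (-(b / g)) (a / g) hdet (a, c) (b, d)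
    have hv : A • ((a : ℤ), c) + B • ((b : ℤ), d) = (g, s') := by
      refine Prod.ext ?_ ?_ <;>
        simp only [Prod.fst_add, Prod.snd_add, Prod.smul_fst, Prod.smul_snd, smul_eq_mul]
      · linear_combination -hab
      · rw [hs']
    have hw : (-(b / g)) • ((a : ℤ), c) + (a / g) • ((b : ℤ), d) = (0, e') := by
      refine Prod.ext ?_ ?_ <;>
        simp only [Prod.fst_add, Prod.snd_add, Prod.smul_fst, Prod.smul_snd, smul_eq_mul]
      · apply mul_left_cancel₀ hg
        linear_combination b * hca - a * hcb
      · rw [he']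
    rw [hv, hw] at hrepl
    have hGcol := G4_col A B (-(b / g)) (a / g) hdet a c b d
    rw [show A * a + B * b = g by linear_combination -hab,
        show A * c + B * d = s' by rw [hs'],
        show -(b / g) * a + (a / g) * b = 0 by
          apply mul_left_cancel₀ hg; linear_combination b * hca - a * hcb,
        show -(b / g) * c + (a / g) * d = e' by rw [he']] at hGcol
    have hdet2 : g * e' = a * d - b * c := by
      calc g * e' = -(g * (b / g)) * c + (g * (a / g)) * d := by rw [he']; ring
      _ = a * d - b * c := by rw [hca, hcb]; ring
    obtain ⟨E⟩ := Q g.natAbs g s' e' le_rfl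
    rw [← hGcol, ← hdet2]
    exact ⟨(Submodule.quotEquivOfEq _ _ hrepl).toAddEquiv.trans E⟩


/-- general quotient of product by product of submodules -/
noncomputable def quotProdG {M₁ M₂ : Type*} [AddCommGroup M₁] [AddCommGroup M₂]
    (P : Submodule ℤ M₁) (Q : Submodule ℤ M₂) :
    ((M₁ × M₂) ⧸ Submodule.prod P Q) ≃ₗ[ℤ] (M₁ ⧸ P) × M₂ ⧸ Q := by
  refine (Submodule.quotEquivOfEq _ _ ?_).trans
    (LinearMap.quotKerEquivOfSurjective (LinearMap.prodMap P.mkQ Q.mkQ) ?_)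
  · rw [LinearMap.ker_prodMap, Submodule.ker_mkQ, Submodule.ker_mkQ]
  · intro y
    obtain ⟨a, ha⟩ := Submodule.mkQ_surjective P y.1
    obtain ⟨b, hb⟩ := Submodule.mkQ_surjective Q y.2
    exact ⟨(a, b), by simp [ha, hb]⟩

/-- the linear map ℤ² → ℤ² given by a 2×2 matrix -/
def Tmap (a b c d : ℤ) : (ℤ × ℤ) →ₗ[ℤ] (ℤ × ℤ) where
  toFun x := (a * x.1 + b * x.2, c * x.1 + d * x.2)
  map_add' x y := by refine Prod.ext ?_ ?_ <;> dsimp <;> ring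
  map_smul' m x := by refine Prod.ext ?_ ?_ <;> dsimp <;> ring

lemma range_Tmap (a b c d : ℤ) :
    LinearMap.range (Tmap a b c d) = sp (a, c) (b, d) := by
  apply le_antisymm
  · rintro z ⟨u, rfl⟩
    refine Submodule.mem_span_pair.2 ⟨u.1, u.2, ?_⟩
    refine Prod.ext ?_ ?_ <;>
      simp only [Prod.fst_add, Prod.snd_add, Prod.smul_fst, Prod.smul_snd, smul_eq_mul] <;>
      dsimp [Tmap] <;> ring
  · rw [sp, Submodule.span_le]
    intro z hz
    rcases hz with rfl | hz
    · exact ⟨(1, 0), by refine Prod.ext ?_ ?_ <;> dsimp [Tmap] <;> ring⟩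
    · rcases hz with rfl
      exact ⟨(0, 1), by refine Prod.ext ?_ ?_ <;> dsimp [Tmap] <;> ring⟩

lemma range_prodMap' {M₁ M₂ M₃ M₄ : Type*} [AddCommGroup M₁] [AddCommGroup M₂]
    [AddCommGroup M₃] [AddCommGroup M₄]
    (f : M₁ →ₗ[ℤ] M₂) (g : M₃ →ₗ[ℤ] M₄) :
    LinearMap.range (LinearMap.prodMap f g) =
      Submodule.prod (LinearMap.range f) (LinearMap.range g) := by
  apply le_antisymm
  · rintro z ⟨u, rfl⟩
    exact ⟨⟨u.1, rfl⟩, ⟨u.2, rfl⟩⟩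
  · rintro ⟨z1, z2⟩ ⟨⟨u1, hu1⟩, ⟨u2, hu2⟩⟩
    exact ⟨(u1, u2), by simp [hu1, hu2]⟩

/-- splitting ℤ⁴ as (ℤ×ℤ)×(ℤ×ℤ) -/
def split4 : (Fin 4 → ℤ) ≃ₗ[ℤ] (ℤ × ℤ) × (ℤ × ℤ) where
  toFun x := ((x 0, x 1), (x 2, x 3))
  invFun p := ![p.1.1, p.1.2, p.2.1, p.2.2]
  map_add' x y := rfl
  map_smul' m x := rfl
  left_inv x := by funext i; fin_cases i <;> rfl
  right_inv p := rfl

/-- final reshuffle of factors -/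
def reshuffle (A B : Type*) [AddCommGroup A] [AddCommGroup B] :
    ((A × B) × (A × B)) ≃+ (A × A × B × B) where
  toFun x := (x.1.1, x.2.1, x.1.2, x.2.2)
  invFun y := ((y.1, y.2.2.1), (y.2.1, y.2.2.2))
  map_add' x y := rfl
  left_inv x := rfl
  right_inv y := rfl


open Matrix

def Emat : Matrix (Fin 4) (Fin 4) ℤ := !![1,0,1,0; 0,1,0,0; 0,0,1,0; 0,1,0,1]
def Emat' : Matrix (Fin 4) (Fin 4) ℤ := !![1,0,-1,0; 0,1,0,0; 0,0,1,0; 0,-1,0,1]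
def Fmat : Matrix (Fin 4) (Fin 4) ℤ := !![1,0,-1,0; 0,1,0,0; 0,0,1,0; 0,-1,0,1]
def Fmat' : Matrix (Fin 4) (Fin 4) ℤ := !![1,0,1,0; 0,1,0,0; 0,0,1,0; 0,1,0,1]

lemma EmatMul : Emat * Emat' = 1 := by
  ext i j
  fin_cases i <;> fin_cases j <;>
    simp [Emat, Emat', Matrix.mul_apply, Fin.sum_univ_four, Matrix.one_apply, Matrix.vecHead, Matrix.vecTail]

lemma FmatMul : Fmat * Fmat' = 1 := by
  ext i j
  fin_cases i <;> fin_cases j <;>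
    simp [Fmat, Fmat', Matrix.mul_apply, Fin.sum_univ_four, Matrix.one_apply, Matrix.vecHead, Matrix.vecTail]

noncomputable instance : Invertible Emat := invertibleOfRightInverse _ _ EmatMul
noncomputable instance : Invertible Fmat := invertibleOfRightInverse _ _ FmatMul

def Mmat (α β γ δ : ℤ) : Matrix (Fin 4) (Fin 4) ℤ :=
  !![α, β, γ, δ; -δ, α - γ, -δ, 0; 0, -δ, α - γ, -δ; δ, γ, β, α]

def Bmat (α β γ δ : ℤ) : Matrix (Fin 4) (Fin 4) ℤ :=
  !![α, β - δ, 0, 0; -δ, α - γ, 0, 0; 0, 0, α - γ, -δ; 0, 0, β - δ, α]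

lemma EMF (α β γ δ : ℤ) : Emat * Mmat α β γ δ * Fmat = Bmat α β γ δ := by
  ext i j
  fin_cases i <;> fin_cases j <;>
    (simp [Emat, Fmat, Mmat, Bmat, Matrix.mul_apply, Fin.sum_univ_four, Matrix.vecHead, Matrix.vecTail]; try ring)

/-- cokernel is invariant under the unimodular transformation -/
noncomputable def cokerEquiv1 (α β γ δ : ℤ) :
    ((Fin 4 → ℤ) ⧸ LinearMap.range (Matrix.toLin' (Mmat α β γ δ))) ≃ₗ[ℤ]
      (Fin 4 → ℤ) ⧸ LinearMap.range (Matrix.toLin' (Bmat α β γ δ)) := by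
  refine Submodule.Quotient.equiv _ _ (Emat.toLinearEquiv' inferInstance) ?_
  have h1 : Matrix.toLin' (Bmat α β γ δ) =
      (Matrix.toLin' Emat ∘ₗ Matrix.toLin' (Mmat α β γ δ)) ∘ₗ Matrix.toLin' Fmat := by
    rw [← Matrix.toLin'_mul, ← Matrix.toLin'_mul, EMF]
  have h2 : LinearMap.range (Matrix.toLin' Fmat) = ⊤ := by
    rw [LinearMap.range_eq_top]
    exact (Fmat.toLinearEquiv' inferInstance).surjective
  rw [h1, LinearMap.range_comp, h2, Submodule.map_top, LinearMap.range_comp]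
  rfl

/-- the block matrix corresponds to a product of 2×2 maps under split4 -/
lemma split4_conj (α β γ δ : ℤ) :
    (split4.toLinearMap ∘ₗ Matrix.toLin' (Bmat α β γ δ)) =
      (LinearMap.prodMap (Tmap α (β - δ) (-δ) (α - γ)) (Tmap (α - γ) (-δ) (β - δ) α)) ∘ₗ
        split4.toLinearMap := by
  apply LinearMap.ext
  intro x
  refine Prod.ext (Prod.ext ?_ ?_) (Prod.ext ?_ ?_) <;>
    simp [split4, Bmat, Tmap, Matrix.toLin'_apply, Matrix.mulVec, dotProduct,
      Fin.sum_univ_four, LinearMap.prodMap_apply, Matrix.vecHead, Matrix.vecTail] <;> ring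

noncomputable def cokerEquiv2 (α β γ δ : ℤ) :
    ((Fin 4 → ℤ) ⧸ LinearMap.range (Matrix.toLin' (Bmat α β γ δ))) ≃ₗ[ℤ]
      (((ℤ × ℤ) ⧸ sp (α, -δ) (β - δ, α - γ)) ×
        ((ℤ × ℤ) ⧸ sp (α - γ, β - δ) (-δ, α))) := by
  refine (Submodule.Quotient.equiv _
    (Submodule.prod (sp (α, -δ) (β - δ, α - γ)) (sp (α - γ, β - δ) (-δ, α)))
    split4 ?_).trans (quotProdG _ _)
  show Submodule.map split4.toLinearMap (LinearMap.range (Matrix.toLin' (Bmat α β γ δ))) = _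
  rw [← LinearMap.range_comp, split4_conj, LinearMap.range_comp,
    LinearEquiv.range split4, Submodule.map_top, range_prodMap',
    range_Tmap, range_Tmap]

end Coker22

open Matrix
open Coker22

/-- Let `α, β, γ, δ` be integers, not all zero, and
`M = [[α, β, γ, δ], [−δ, α−γ, −δ, 0], [0, −δ, α−γ, −δ], [δ, γ, β, α]]`.
With `d₁ = gcd(α, β, γ, δ)` one has `d₁ ∣ α² − αγ + βδ − δ²`, and with
`d₂ = (α² − αγ + βδ − δ²)/d₁` the cokernel `ℤ⁴ / M·ℤ⁴` is isomorphic as an abelian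
group to `ℤ_{d₁} ⊕ ℤ_{d₁} ⊕ ℤ_{d₂} ⊕ ℤ_{d₂}` (with `ℤ_d` realized as `ZMod d.natAbs`). -/
theorem coker_centrosymmetric (α β γ δ : ℤ)
    (h : ¬(α = 0 ∧ β = 0 ∧ γ = 0 ∧ δ = 0))
    (d₁ : ℕ) (hd₁ : d₁ = Int.gcd (Int.gcd (Int.gcd α β) γ) δ)
    (d₂ : ℤ) (hd₂ : d₂ = (α ^ 2 - α * γ + β * δ - δ ^ 2) / (d₁ : ℤ)) :
    (d₁ : ℤ) ∣ (α ^ 2 - α * γ + β * δ - δ ^ 2) ∧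
    Nonempty
      (((Fin 4 → ℤ) ⧸
          LinearMap.range (Matrix.toLin'
            (!![α, β, γ, δ;
                -δ, α - γ, -δ, 0;
                0, -δ, α - γ, -δ;
                δ, γ, β, α] : Matrix (Fin 4) (Fin 4) ℤ)))
        ≃+ (ZMod d₁ × ZMod d₁ × ZMod d₂.natAbs × ZMod d₂.natAbs)) := by
  have hd₁' : d₁ = G4 α β γ δ := hd₁
  set D : ℤ := α ^ 2 - α * γ + β * δ - δ ^ 2 with hD
  have hα : ((d₁ : ℤ)) ∣ α := hd₁' ▸ G4_dvd_a α β γ δ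
  have hβ : ((d₁ : ℤ)) ∣ β := hd₁' ▸ G4_dvd_c α β γ δ
  have hγ : ((d₁ : ℤ)) ∣ γ := hd₁' ▸ G4_dvd_b α β γ δ
  have hδ : ((d₁ : ℤ)) ∣ δ := hd₁' ▸ G4_dvd_d α β γ δ
  have hdvd : ((d₁ : ℤ)) ∣ D := by
    have hD2 : D = ((α * α - α * γ) + β * δ) - δ * δ := by rw [hD]; ring
    rw [hD2]
    exact dvd_sub (dvd_add (dvd_sub (hα.mul_left α) (hγ.mul_left α)) (hδ.mul_left β))
      (hδ.mul_left δ)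
  refine ⟨hdvd, ?_⟩
  -- gcd bookkeeping for the two 2×2 blocks
  have hG1 : G4 α (-δ) (β - δ) (α - γ) = d₁ := by
    rw [hd₁']
    refine (G4_eq_of_dvd ?_ ?_).symm
    · exact ⟨G4_dvd_a α β γ δ, (dvd_neg).2 (G4_dvd_d α β γ δ),
        dvd_sub (G4_dvd_c α β γ δ) (G4_dvd_d α β γ δ),
        dvd_sub (G4_dvd_a α β γ δ) (G4_dvd_b α β γ δ)⟩
    · refine ⟨G4_dvd_a _ _ _ _, ?_, ?_, ?_⟩
      · have h1 := G4_dvd_b α (-δ) (β - δ) (α - γ)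
        have h2 := G4_dvd_c α (-δ) (β - δ) (α - γ)
        have h3 := dvd_sub h1 h2
        simpa using h3
      · have h1 := G4_dvd_a α (-δ) (β - δ) (α - γ)
        have h2 := G4_dvd_d α (-δ) (β - δ) (α - γ)
        have h3 := dvd_sub h1 h2
        simpa using h3
      · exact (dvd_neg).1 (G4_dvd_c α (-δ) (β - δ) (α - γ))
  have hG2 : G4 (α - γ) (β - δ) (-δ) α = d₁ := by
    rw [hd₁']
    refine (G4_eq_of_dvd ?_ ?_).symm
    · exact ⟨dvd_sub (G4_dvd_a α β γ δ) (G4_dvd_b α β γ δ),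
        dvd_sub (G4_dvd_c α β γ δ) (G4_dvd_d α β γ δ),
        (dvd_neg).2 (G4_dvd_d α β γ δ), G4_dvd_a α β γ δ⟩
    · refine ⟨G4_dvd_d _ _ _ _, ?_, ?_, ?_⟩
      · have h3 := dvd_sub (G4_dvd_c (α - γ) (β - δ) (-δ) α) (G4_dvd_b (α - γ) (β - δ) (-δ) α)
        simpa using h3
      · have h1 := G4_dvd_a (α - γ) (β - δ) (-δ) α
        have h2 := G4_dvd_d (α - γ) (β - δ) (-δ) α
        have h3 := dvd_sub h2 h1
        simpa using h3
      · exact (dvd_neg).1 (G4_dvd_b (α - γ) (β - δ) (-δ) α)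
  -- natAbs of d₂
  have hnat : d₂.natAbs = D.natAbs / d₁ := by
    rw [hd₂, Int.natAbs_ediv_of_dvd hdvd, Int.natAbs_natCast]
  obtain ⟨E₁⟩ := main22 α (-δ) (β - δ) (α - γ)
  obtain ⟨E₂⟩ := main22 (α - γ) (β - δ) (-δ) α
  rw [hG1, show α * (α - γ) - (β - δ) * -δ = D by rw [hD]; ring] at E₁
  rw [hG2, show (α - γ) * α - -δ * (β - δ) = D by rw [hD]; ring] at E₂
  rw [hnat]
  have hM : (!![α, β, γ, δ; -δ, α - γ, -δ, 0; 0, -δ, α - γ, -δ; δ, γ, β, α]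
      : Matrix (Fin 4) (Fin 4) ℤ) = Mmat α β γ δ := rfl
  rw [hM]
  exact ⟨((cokerEquiv1 α β γ δ).trans (cokerEquiv2 α β γ δ)).toAddEquiv.trans
    ((AddEquiv.prodCongr E₁ E₂).trans (reshuffle _ _))⟩
end

section
/- Let n be an odd natural number, and suppose t(n) and s(n) + (5a−b)t(n) are not both zero. Set α̂(n) = gcd(t(n), (s(n) + (5a−b)·t(n))/2) and β̂(n) = (s(n)² + (4a − (3a+b)²)·t(n)²)/(4·α̂(n)) (these quotients are integers). Then coker B(n) is isomorphic as an abelian group to ℤ_{α̂(n)} ⊕ ℤ_{α̂(n)} ⊕ ℤ_{β̂(n)} ⊕ ℤ_{β̂(n)}. -/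
set_option maxHeartbeats 1000000


open Matrix

private def M4 (e11 e12 e13 e14 e21 e22 e23 e24 e31 e32 e33 e34 e41 e42 e43 e44 : ℤ) :
    Matrix (Fin 4) (Fin 4) ℤ :=
  !![e11, e12, e13, e14; e21, e22, e23, e24; e31, e32, e33, e34; e41, e42, e43, e44]

private lemma eq_M4 {a₁₁ a₁₂ a₁₃ a₁₄ a₂₁ a₂₂ a₂₃ a₂₄ a₃₁ a₃₂ a₃₃ a₃₄ a₄₁ a₄₂ a₄₃ a₄₄
    b₁₁ b₁₂ b₁₃ b₁₄ b₂₁ b₂₂ b₂₃ b₂₄ b₃₁ b₃₂ b₃₃ b₃₄ b₄₁ b₄₂ b₄₃ b₄₄ : ℤ}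
    (h₁₁ : a₁₁ = b₁₁) (h₁₂ : a₁₂ = b₁₂) (h₁₃ : a₁₃ = b₁₃) (h₁₄ : a₁₄ = b₁₄)
    (h₂₁ : a₂₁ = b₂₁) (h₂₂ : a₂₂ = b₂₂) (h₂₃ : a₂₃ = b₂₃) (h₂₄ : a₂₄ = b₂₄)
    (h₃₁ : a₃₁ = b₃₁) (h₃₂ : a₃₂ = b₃₂) (h₃₃ : a₃₃ = b₃₃) (h₃₄ : a₃₄ = b₃₄)
    (h₄₁ : a₄₁ = b₄₁) (h₄₂ : a₄₂ = b₄₂) (h₄₃ : a₄₃ = b₄₃) (h₄₄ : a₄₄ = b₄₄) :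
    M4 a₁₁ a₁₂ a₁₃ a₁₄ a₂₁ a₂₂ a₂₃ a₂₄ a₃₁ a₃₂ a₃₃ a₃₄ a₄₁ a₄₂ a₄₃ a₄₄ =
    M4 b₁₁ b₁₂ b₁₃ b₁₄ b₂₁ b₂₂ b₂₃ b₂₄ b₃₁ b₃₂ b₃₃ b₃₄ b₄₁ b₄₂ b₄₃ b₄₄ := by
  subst_vars; rfl

private lemma eta_M4 (A : Matrix (Fin 4) (Fin 4) ℤ) :
    A = M4 (A 0 0) (A 0 1) (A 0 2) (A 0 3) (A 1 0) (A 1 1) (A 1 2) (A 1 3)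
           (A 2 0) (A 2 1) (A 2 2) (A 2 3) (A 3 0) (A 3 1) (A 3 2) (A 3 3) := by
  ext i j
  fin_cases i <;> fin_cases j <;> rfl

private lemma mul_M4 (a₁₁ a₁₂ a₁₃ a₁₄ a₂₁ a₂₂ a₂₃ a₂₄ a₃₁ a₃₂ a₃₃ a₃₄ a₄₁ a₄₂ a₄₃ a₄₄
     b₁₁ b₁₂ b₁₃ b₁₄ b₂₁ b₂₂ b₂₃ b₂₄ b₃₁ b₃₂ b₃₃ b₃₄ b₄₁ b₄₂ b₄₃ b₄₄ : ℤ) :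
    M4 a₁₁ a₁₂ a₁₃ a₁₄ a₂₁ a₂₂ a₂₃ a₂₄ a₃₁ a₃₂ a₃₃ a₃₄ a₄₁ a₄₂ a₄₃ a₄₄ *
    M4 b₁₁ b₁₂ b₁₃ b₁₄ b₂₁ b₂₂ b₂₃ b₂₄ b₃₁ b₃₂ b₃₃ b₃₄ b₄₁ b₄₂ b₄₃ b₄₄ =
    M4 (a₁₁*b₁₁ + a₁₂*b₂₁ + a₁₃*b₃₁ + a₁₄*b₄₁) (a₁₁*b₁₂ + a₁₂*b₂₂ + a₁₃*b₃₂ + a₁₄*b₄₂)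
       (a₁₁*b₁₃ + a₁₂*b₂₃ + a₁₃*b₃₃ + a₁₄*b₄₃) (a₁₁*b₁₄ + a₁₂*b₂₄ + a₁₃*b₃₄ + a₁₄*b₄₄)
       (a₂₁*b₁₁ + a₂₂*b₂₁ + a₂₃*b₃₁ + a₂₄*b₄₁) (a₂₁*b₁₂ + a₂₂*b₂₂ + a₂₃*b₃₂ + a₂₄*b₄₂)
       (a₂₁*b₁₃ + a₂₂*b₂₃ + a₂₃*b₃₃ + a₂₄*b₄₃) (a₂₁*b₁₄ + a₂₂*b₂₄ + a₂₃*b₃₄ + a₂₄*b₄₄)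
       (a₃₁*b₁₁ + a₃₂*b₂₁ + a₃₃*b₃₁ + a₃₄*b₄₁) (a₃₁*b₁₂ + a₃₂*b₂₂ + a₃₃*b₃₂ + a₃₄*b₄₂)
       (a₃₁*b₁₃ + a₃₂*b₂₃ + a₃₃*b₃₃ + a₃₄*b₄₃) (a₃₁*b₁₄ + a₃₂*b₂₄ + a₃₃*b₃₄ + a₃₄*b₄₄)
       (a₄₁*b₁₁ + a₄₂*b₂₁ + a₄₃*b₃₁ + a₄₄*b₄₁) (a₄₁*b₁₂ + a₄₂*b₂₂ + a₄₃*b₃₂ + a₄₄*b₄₂)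
       (a₄₁*b₁₃ + a₄₂*b₂₃ + a₄₃*b₃₃ + a₄₄*b₄₃) (a₄₁*b₁₄ + a₄₂*b₂₄ + a₄₃*b₃₄ + a₄₄*b₄₄) := by
  unfold M4
  ext i j
  fin_cases i <;> fin_cases j <;> simp [Matrix.mul_apply, Fin.sum_univ_four]

private lemma smul_M4 (c : ℤ) (a₁₁ a₁₂ a₁₃ a₁₄ a₂₁ a₂₂ a₂₃ a₂₄ a₃₁ a₃₂ a₃₃ a₃₄ a₄₁ a₄₂ a₄₃ a₄₄ : ℤ) :
    c • M4 a₁₁ a₁₂ a₁₃ a₁₄ a₂₁ a₂₂ a₂₃ a₂₄ a₃₁ a₃₂ a₃₃ a₃₄ a₄₁ a₄₂ a₄₃ a₄₄ =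
    M4 (c•a₁₁) (c•a₁₂) (c•a₁₃) (c•a₁₄) (c•a₂₁) (c•a₂₂) (c•a₂₃) (c•a₂₄)
       (c•a₃₁) (c•a₃₂) (c•a₃₃) (c•a₃₄) (c•a₄₁) (c•a₄₂) (c•a₄₃) (c•a₄₄) := by
  unfold M4
  ext i j
  fin_cases i <;> fin_cases j <;> rfl

private lemma add_M4 (a₁₁ a₁₂ a₁₃ a₁₄ a₂₁ a₂₂ a₂₃ a₂₄ a₃₁ a₃₂ a₃₃ a₃₄ a₄₁ a₄₂ a₄₃ a₄₄
     b₁₁ b₁₂ b₁₃ b₁₄ b₂₁ b₂₂ b₂₃ b₂₄ b₃₁ b₃₂ b₃₃ b₃₄ b₄₁ b₄₂ b₄₃ b₄₄ : ℤ) :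
    M4 a₁₁ a₁₂ a₁₃ a₁₄ a₂₁ a₂₂ a₂₃ a₂₄ a₃₁ a₃₂ a₃₃ a₃₄ a₄₁ a₄₂ a₄₃ a₄₄ +
    M4 b₁₁ b₁₂ b₁₃ b₁₄ b₂₁ b₂₂ b₂₃ b₂₄ b₃₁ b₃₂ b₃₃ b₃₄ b₄₁ b₄₂ b₄₃ b₄₄ =
    M4 (a₁₁+b₁₁) (a₁₂+b₁₂) (a₁₃+b₁₃) (a₁₄+b₁₄) (a₂₁+b₂₁) (a₂₂+b₂₂) (a₂₃+b₂₃) (a₂₄+b₂₄)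
       (a₃₁+b₃₁) (a₃₂+b₃₂) (a₃₃+b₃₃) (a₃₄+b₃₄) (a₄₁+b₄₁) (a₄₂+b₄₂) (a₄₃+b₄₃) (a₄₄+b₄₄) := by
  unfold M4
  ext i j
  fin_cases i <;> fin_cases j <;> rfl

private lemma sub_M4 (a₁₁ a₁₂ a₁₃ a₁₄ a₂₁ a₂₂ a₂₃ a₂₄ a₃₁ a₃₂ a₃₃ a₃₄ a₄₁ a₄₂ a₄₃ a₄₄
     b₁₁ b₁₂ b₁₃ b₁₄ b₂₁ b₂₂ b₂₃ b₂₄ b₃₁ b₃₂ b₃₃ b₃₄ b₄₁ b₄₂ b₄₃ b₄₄ : ℤ) :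
    M4 a₁₁ a₁₂ a₁₃ a₁₄ a₂₁ a₂₂ a₂₃ a₂₄ a₃₁ a₃₂ a₃₃ a₃₄ a₄₁ a₄₂ a₄₃ a₄₄ -
    M4 b₁₁ b₁₂ b₁₃ b₁₄ b₂₁ b₂₂ b₂₃ b₂₄ b₃₁ b₃₂ b₃₃ b₃₄ b₄₁ b₄₂ b₄₃ b₄₄ =
    M4 (a₁₁-b₁₁) (a₁₂-b₁₂) (a₁₃-b₁₃) (a₁₄-b₁₄) (a₂₁-b₂₁) (a₂₂-b₂₂) (a₂₃-b₂₃) (a₂₄-b₂₄)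
       (a₃₁-b₃₁) (a₃₂-b₃₂) (a₃₃-b₃₃) (a₃₄-b₃₄) (a₄₁-b₄₁) (a₄₂-b₄₂) (a₄₃-b₄₃) (a₄₄-b₄₄) := by
  unfold M4
  ext i j
  fin_cases i <;> fin_cases j <;> rfl

private lemma one_M4 : (1 : Matrix (Fin 4) (Fin 4) ℤ) = M4 1 0 0 0 0 1 0 0 0 0 1 0 0 0 0 1 := by
  unfold M4
  ext i j
  fin_cases i <;> fin_cases j <;> rfl

private lemma zero_M4 : (0 : Matrix (Fin 4) (Fin 4) ℤ) = M4 0 0 0 0 0 0 0 0 0 0 0 0 0 0 0 0 := by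
  unfold M4
  ext i j
  fin_cases i <;> fin_cases j <;> rfl

private lemma diag_M4 (d₁ d₂ d₃ d₄ : ℤ) :
    Matrix.diagonal ![d₁, d₂, d₃, d₄] = M4 d₁ 0 0 0 0 d₂ 0 0 0 0 d₃ 0 0 0 0 d₄ := by
  unfold M4
  ext i j
  fin_cases i <;> fin_cases j <;> rfl


private def GammaM (a b : ℤ) : Matrix (Fin 4) (Fin 4) ℤ :=
  M4 (a) (-1 + b) (-b) (-a) (a) (b) (-b) (-a) (a) (b) (1 - b) (-a) (a) (b) (1 - b) (1 - a)

private def DeltaM (a b : ℤ) : Matrix (Fin 4) (Fin 4) ℤ :=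
  M4 (-1 + a) (-1 + b) (-b) (-a) (a) (-1 + b) (-b) (-a) (a) (b) (-b) (-a) (a) (b) (1 - b) (-a)

private def Ym (a b : ℤ) : Matrix (Fin 4) (Fin 4) ℤ :=
  M4 (-b + a) (-2 + 4*b + 2*a) (-2*b + 2*a) (-2*a) (2*a) (b - a) (2*a) (0) (0) (2*a) (b - a) (2*a) (-2*a) (-2*b + 2*a) (-2 + 4*b + 2*a) (-b + a)

private def G2m (a b : ℤ) : Matrix (Fin 4) (Fin 4) ℤ :=
  M4 (-a) (-b - a) (-a) (0) (0) (-a) (-b - a) (-a) (a) (b - a) (1 - 2*b - a) (-2*a) (2*a) (2*b - a) (2 - 3*b - a) (1 - 3*a)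

private def G3m (a b : ℤ) : Matrix (Fin 4) (Fin 4) ℤ :=
  M4 (-a*b - 3*a^2) (-b^2 + a - 3*a*b) (b^2 - a + 3*a*b) (a*b + 3*a^2) (-a*b - 3*a^2) (-b^2 - 3*a*b) (-b + b^2 - 2*a + 3*a*b) (-a + a*b + 3*a^2) (a - a*b - 3*a^2) (b - b^2 - a - 3*a*b) (1 - 3*b + b^2 - 3*a + 3*a*b) (-3*a + a*b + 3*a^2) (3*a - a*b - 3*a^2) (3*b - b^2 - 2*a - 3*a*b) (3 - 6*b + b^2 - 4*a + 3*a*b) (1 - 6*a + a*b + 3*a^2)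

private def G4m (a b : ℤ) : Matrix (Fin 4) (Fin 4) ℤ :=
  M4 (0) (a*b + 3*a^2) (b^2 - a + 4*a*b + 3*a^2) (a*b + 3*a^2) (-a*b - 3*a^2) (-b^2 - 2*a*b + 3*a^2) (-b + 2*b^2 - 3*a + 7*a*b + 3*a^2) (-a + 2*a*b + 6*a^2) (a - 2*a*b - 6*a^2) (b - 2*b^2 - a - 5*a*b + 3*a^2) (1 - 4*b + 3*b^2 - 6*a + 10*a*b + 3*a^2) (-4*a + 3*a*b + 9*a^2) (4*a - 3*a*b - 9*a^2) (4*b - 3*b^2 - 3*a - 8*a*b + 3*a^2) (4 - 10*b + 4*b^2 - 10*a + 13*a*b + 3*a^2) (1 - 10*a + 4*a*b + 12*a^2)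

private def G5m (a b : ℤ) : Matrix (Fin 4) (Fin 4) ℤ :=
  M4 (a*b^2 - a^2 + 6*a^2*b + 9*a^3) (b^3 - a*b + 6*a*b^2 + 9*a^2*b) (b^2 - b^3 - a + 6*a*b - 6*a*b^2 + 6*a^2 - 9*a^2*b) (a*b - a*b^2 + 4*a^2 - 6*a^2*b - 9*a^3) (-a*b + a*b^2 - 4*a^2 + 6*a^2*b + 9*a^3) (-b^2 + b^3 - 3*a*b + 6*a*b^2 + 3*a^2 + 9*a^2*b) (-b + 3*b^2 - b^3 - 4*a + 13*a*b - 6*a*b^2 + 9*a^2 - 9*a^2*b) (-a + 3*a*b - a*b^2 + 10*a^2 - 6*a^2*b - 9*a^3) (a - 3*a*b + a*b^2 - 10*a^2 + 6*a^2*b + 9*a^3) (b - 3*b^2 + b^3 - a - 8*a*b + 6*a*b^2 + 6*a^2 + 9*a^2*b) (1 - 5*b + 6*b^2 - b^3 - 10*a + 23*a*b - 6*a*b^2 + 12*a^2 - 9*a^2*b) (-5*a + 6*a*b - a*b^2 + 19*a^2 - 6*a^2*b - 9*a^3) (5*a - 6*a*b + a*b^2 - 19*a^2 + 6*a^2*b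 + 9*a^3) (5*b - 6*b^2 + b^3 - 4*a - 16*a*b + 6*a*b^2 + 9*a^2 + 9*a^2*b) (5 - 15*b + 10*b^2 - b^3 - 20*a + 36*a*b - 6*a*b^2 + 15*a^2 - 9*a^2*b) (1 - 15*a + 10*a*b - a*b^2 + 31*a^2 - 6*a^2*b - 9*a^3)

private def G6m (a b : ℤ) : Matrix (Fin 4) (Fin 4) ℤ :=
  M4 (a*b^2 - a^2 + 6*a^2*b + 9*a^3) (b^3 - a*b + 5*a*b^2 + a^2 + 3*a^2*b - 9*a^3) (b^2 - 2*b^3 - a + 8*a*b - 13*a*b^2 + 10*a^2 - 24*a^2*b - 9*a^3) (a*b - 2*a*b^2 + 5*a^2 - 12*a^2*b - 18*a^3) (-a*b + 2*a*b^2 - 5*a^2 + 12*a^2*b + 18*a^3) (-b^2 + 2*b^3 - 4*a*b + 11*a*b^2 + 4*a^2 + 12*a^2*b - 9*a^3) (-b + 4*b^2 - 3*b^3 - 5*a + 21*a*b - 19*a*b^2 + 19*a^2 - 33*a^2*b - 9*a^3) (-a + 4*a*b - 3*a*b^2 + 15*a^2 - 18*a^2*b - 27*a^3) (a - 4*a*b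 + 3*a*b^2 - 15*a^2 + 18*a^2*b + 27*a^3) (b - 4*b^2 + 3*b^3 - a - 12*a*b + 17*a*b^2 + 10*a^2 + 21*a^2*b - 9*a^3) (1 - 6*b + 10*b^2 - 4*b^3 - 15*a + 44*a*b - 25*a*b^2 + 31*a^2 - 42*a^2*b - 9*a^3) (-6*a + 10*a*b - 4*a*b^2 + 34*a^2 - 24*a^2*b - 36*a^3) (6*a - 10*a*b + 4*a*b^2 - 34*a^2 + 24*a^2*b + 36*a^3) (6*b - 10*b^2 + 4*b^3 - 5*a - 28*a*b + 23*a*b^2 + 19*a^2 + 30*a^2*b - 9*a^3) (6 - 21*b + 20*b^2 - 5*b^3 - 35*a + 80*a*b - 31*a*b^2 + 46*a^2 - 51*a^2*b - 9*a^3) (1 - 21*a + 20*a*b - 5*a*b^2 + 65*a^2 - 30*a^2*b - 45*a^3)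

private def G7m (a b : ℤ) : Matrix (Fin 4) (Fin 4) ℤ :=
  M4 (a*b^2 - a*b^3 - a^2 + 8*a^2*b - 9*a^2*b^2 + 15*a^3 - 27*a^3*b - 27*a^4) (b^3 - b^4 - a*b + 7*a*b^2 - 9*a*b^3 + a^2 + 9*a^2*b - 27*a^2*b^2 - 9*a^3 - 27*a^3*b) (b^2 - 3*b^3 + b^4 - a + 10*a*b - 23*a*b^2 + 9*a*b^3 + 15*a^2 - 51*a^2*b + 27*a^2*b^2 - 27*a^3 + 27*a^3*b) (a*b - 3*a*b^2 + a*b^3 + 6*a^2 - 20*a^2*b + 9*a^2*b^2 - 33*a^3 + 27*a^3*b + 27*a^4) (-a*b + 3*a*b^2 - a*b^3 - 6*a^2 + 20*a^2*b - 9*a^2*b^2 + 33*a^3 - 27*a^3*b - 27*a^4) (-b^2 + 3*b^3 - b^4 - 5*a*b + 18*a*b^2 - 9*a*b^3 + 5*a^2 + 21*a^2*b - 27*a^2*b^2 - 18*a^3 - 27*a^3*b) (-b + 5*b^2 - 6*b^3 + b^4 - 6*a + 31*a*b - 42*a*b^2 + 9*a*b^3 + 34*a^2 - 84*a^2*b +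 27*a^2*b^2 - 36*a^3 + 27*a^3*b) (-a + 5*a*b - 6*a*b^2 + a*b^3 + 21*a^2 - 38*a^2*b + 9*a^2*b^2 - 60*a^3 + 27*a^3*b + 27*a^4) (a - 5*a*b + 6*a*b^2 - a*b^3 - 21*a^2 + 38*a^2*b - 9*a^2*b^2 + 60*a^3 - 27*a^3*b - 27*a^4) (b - 5*b^2 + 6*b^3 - b^4 - a - 17*a*b + 35*a*b^2 - 9*a*b^3 + 15*a^2 + 42*a^2*b - 27*a^2*b^2 - 27*a^3 - 27*a^3*b) (1 - 7*b + 15*b^2 - 10*b^3 + b^4 - 21*a + 75*a*b - 67*a*b^2 + 9*a*b^3 + 65*a^2 - 126*a^2*b + 27*a^2*b^2 - 45*a^3 + 27*a^3*b) (-7*a + 15*a*b - 10*a*b^2 + a*b^3 + 55*a^2 - 62*a^2*b + 9*a^2*b^2 - 96*a^3 + 27*a^3*b + 27*a^4) (7*a - 15*a*b + 10*a*b^2 - a*b^3 - 55*a^2 + 62*a^2*b - 9*a^2*b^2 + 96*a^3 - 27*a^3*b - 27*a^4) (7*b - 15*b^2 + 10*b^3 - b^4 - 6*a - 45*a*b +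 58*a*b^2 - 9*a*b^3 + 34*a^2 + 72*a^2*b - 27*a^2*b^2 - 36*a^3 - 27*a^3*b) (7 - 28*b + 35*b^2 - 15*b^3 + b^4 - 56*a + 155*a*b - 98*a*b^2 + 9*a*b^3 + 111*a^2 - 177*a^2*b + 27*a^2*b^2 - 54*a^3 + 27*a^3*b) (1 - 28*a + 35*a*b - 15*a*b^2 + a*b^3 + 120*a^2 - 92*a^2*b + 9*a^2*b^2 - 141*a^3 + 27*a^3*b + 27*a^4)

private def G8m (a b : ℤ) : Matrix (Fin 4) (Fin 4) ℤ :=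
  M4 (a*b^2 - 2*a*b^3 - a^2 + 10*a^2*b - 18*a^2*b^2 + 21*a^3 - 54*a^3*b - 54*a^4) (b^3 - 2*b^4 - a*b + 9*a*b^2 - 17*a*b^3 + a^2 + 13*a^2*b - 45*a^2*b^2 - 15*a^3 - 27*a^3*b + 27*a^4) (b^2 - 4*b^3 + 3*b^4 - a + 12*a*b - 36*a*b^2 + 28*a*b^3 + 21*a^2 - 92*a^2*b + 90*a^2*b^2 - 60*a^3 + 108*a^3*b + 27*a^4) (a*b - 4*a*b^2 + 3*a*b^3 + 7*a^2 - 30*a^2*b + 27*a^2*b^2 - 54*a^3 + 81*a^3*b + 81*a^4) (-a*b + 4*a*b^2 - 3*a*b^3 - 7*a^2 + 30*a^2*b - 27*a^2*b^2 + 54*a^3 - 81*a^3*b - 81*a^4) (-b^2 + 4*b^3 - 3*b^4 - 6*a*b + 27*a*b^2 - 26*a*b^3 + 6*a^2 + 34*a^2*b - 72*a^2*b^2 - 33*a^3 - 54*a^3*b + 27*a^4) (-b + 6*b^2 - 10*b^3 + 4*b^4 - 7*a + 43*a*b - 78*a*b^2 + 37*a*b^3 + 55*a^2 - 176*a^2*b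 + 117*a^2*b^2 - 96*a^3 + 135*a^3*b + 27*a^4) (-a + 6*a*b - 10*a*b^2 + 4*a*b^3 + 28*a^2 - 68*a^2*b + 36*a^2*b^2 - 114*a^3 + 108*a^3*b + 108*a^4) (a - 6*a*b + 10*a*b^2 - 4*a*b^3 - 28*a^2 + 68*a^2*b - 36*a^2*b^2 + 114*a^3 - 108*a^3*b - 108*a^4) (b - 6*b^2 + 10*b^3 - 4*b^4 - a - 23*a*b + 62*a*b^2 - 35*a*b^3 + 21*a^2 + 76*a^2*b - 99*a^2*b^2 - 60*a^3 - 81*a^3*b + 27*a^4) (1 - 8*b + 21*b^2 - 20*b^3 + 5*b^4 - 28*a + 118*a*b - 145*a*b^2 + 46*a*b^3 + 120*a^2 - 302*a^2*b + 144*a^2*b^2 - 141*a^3 + 162*a^3*b + 27*a^4) (-8*a + 21*a*b - 20*a*b^2 + 5*a*b^3 + 83*a^2 - 130*a^2*b + 45*a^2*b^2 - 210*a^3 + 135*a^3*b + 135*a^4) (8*a - 21*a*b + 20*a*b^2 - 5*a*b^3 - 83*a^2 + 130*a^2*b - 45*a^2*b^2 + 210*a^3 - 135*a^3*b - 135*a^4)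 (8*b - 21*b^2 + 20*b^3 - 5*b^4 - 7*a - 68*a*b + 120*a*b^2 - 44*a*b^3 + 55*a^2 + 148*a^2*b - 126*a^2*b^2 - 96*a^3 - 108*a^3*b + 27*a^4) (8 - 36*b + 56*b^2 - 35*b^3 + 6*b^4 - 84*a + 273*a*b - 243*a*b^2 + 55*a*b^3 + 231*a^2 - 479*a^2*b + 171*a^2*b^2 - 195*a^3 + 189*a^3*b + 27*a^4) (1 - 36*a + 56*a*b - 35*a*b^2 + 6*a*b^3 + 203*a^2 - 222*a^2*b + 54*a^2*b^2 - 351*a^3 + 162*a^3*b + 162*a^4)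

private def D2m (a b : ℤ) : Matrix (Fin 4) (Fin 4) ℤ :=
  M4 (1 - 3*a) (2 - 3*b - a) (2*b - a) (2*a) (-2*a) (1 - 2*b - a) (b - a) (a) (-a) (-b - a) (-a) (0) (0) (-a) (-b - a) (-a)

private def D3m (a b : ℤ) : Matrix (Fin 4) (Fin 4) ℤ :=
  M4 (-1 + 6*a - a*b - 3*a^2) (-3 + 6*b - b^2 + 4*a - 3*a*b) (-3*b + b^2 + 2*a + 3*a*b) (-3*a + a*b + 3*a^2) (3*a - a*b - 3*a^2) (-1 + 3*b - b^2 + 3*a - 3*a*b) (-b + b^2 + a + 3*a*b) (-a + a*b + 3*a^2) (a - a*b - 3*a^2) (b - b^2 + 2*a - 3*a*b) (b^2 + 3*a*b) (a*b + 3*a^2) (-a*b - 3*a^2) (-b^2 + a - 3*a*b) (b^2 - a + 3*a*b) (a*b + 3*a^2)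

private def D4m (a b : ℤ) : Matrix (Fin 4) (Fin 4) ℤ :=
  M4 (1 - 10*a + 4*a*b + 12*a^2) (4 - 10*b + 4*b^2 - 10*a + 13*a*b + 3*a^2) (4*b - 3*b^2 - 3*a - 8*a*b + 3*a^2) (4*a - 3*a*b - 9*a^2) (-4*a + 3*a*b + 9*a^2) (1 - 4*b + 3*b^2 - 6*a + 10*a*b + 3*a^2) (b - 2*b^2 - a - 5*a*b + 3*a^2) (a - 2*a*b - 6*a^2) (-a + 2*a*b + 6*a^2) (-b + 2*b^2 - 3*a + 7*a*b + 3*a^2) (-b^2 - 2*a*b + 3*a^2) (-a*b - 3*a^2) (a*b + 3*a^2) (b^2 - a + 4*a*b + 3*a^2) (a*b + 3*a^2) (0)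

private def D5m (a b : ℤ) : Matrix (Fin 4) (Fin 4) ℤ :=
  M4 (-1 + 15*a - 10*a*b + a*b^2 - 31*a^2 + 6*a^2*b + 9*a^3) (-5 + 15*b - 10*b^2 + b^3 + 20*a - 36*a*b + 6*a*b^2 - 15*a^2 + 9*a^2*b) (-5*b + 6*b^2 - b^3 + 4*a + 16*a*b - 6*a*b^2 - 9*a^2 - 9*a^2*b) (-5*a + 6*a*b - a*b^2 + 19*a^2 - 6*a^2*b - 9*a^3) (5*a - 6*a*b + a*b^2 - 19*a^2 + 6*a^2*b + 9*a^3) (-1 + 5*b - 6*b^2 + b^3 + 10*a - 23*a*b + 6*a*b^2 - 12*a^2 + 9*a^2*b) (-b + 3*b^2 - b^3 + a + 8*a*b - 6*a*b^2 - 6*a^2 - 9*a^2*b) (-a + 3*a*b - a*b^2 + 10*a^2 - 6*a^2*b - 9*a^3) (a - 3*a*b + a*b^2 - 10*a^2 + 6*a^2*b + 9*a^3) (b - 3*b^2 + b^3 + 4*a - 13*a*b + 6*a*b^2 - 9*a^2 + 9*a^2*b) (b^2 - b^3 + 3*a*b - 6*a*b^2 - 3*a^2 - 9*a^2*b) (a*b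 - a*b^2 + 4*a^2 - 6*a^2*b - 9*a^3) (-a*b + a*b^2 - 4*a^2 + 6*a^2*b + 9*a^3) (-b^2 + b^3 + a - 6*a*b + 6*a*b^2 - 6*a^2 + 9*a^2*b) (-b^3 + a*b - 6*a*b^2 - 9*a^2*b) (-a*b^2 + a^2 - 6*a^2*b - 9*a^3)

private def D6m (a b : ℤ) : Matrix (Fin 4) (Fin 4) ℤ :=
  M4 (1 - 21*a + 20*a*b - 5*a*b^2 + 65*a^2 - 30*a^2*b - 45*a^3) (6 - 21*b + 20*b^2 - 5*b^3 - 35*a + 80*a*b - 31*a*b^2 + 46*a^2 - 51*a^2*b - 9*a^3) (6*b - 10*b^2 + 4*b^3 - 5*a - 28*a*b + 23*a*b^2 + 19*a^2 + 30*a^2*b - 9*a^3) (6*a - 10*a*b + 4*a*b^2 - 34*a^2 + 24*a^2*b + 36*a^3) (-6*a + 10*a*b - 4*a*b^2 + 34*a^2 - 24*a^2*b - 36*a^3) (1 - 6*b + 10*b^2 - 4*b^3 - 15*a + 44*a*b - 25*a*b^2 + 31*a^2 - 42*a^2*b - 9*a^3) (b - 4*b^2 + 3*b^3 - a - 12*a*b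 + 17*a*b^2 + 10*a^2 + 21*a^2*b - 9*a^3) (a - 4*a*b + 3*a*b^2 - 15*a^2 + 18*a^2*b + 27*a^3) (-a + 4*a*b - 3*a*b^2 + 15*a^2 - 18*a^2*b - 27*a^3) (-b + 4*b^2 - 3*b^3 - 5*a + 21*a*b - 19*a*b^2 + 19*a^2 - 33*a^2*b - 9*a^3) (-b^2 + 2*b^3 - 4*a*b + 11*a*b^2 + 4*a^2 + 12*a^2*b - 9*a^3) (-a*b + 2*a*b^2 - 5*a^2 + 12*a^2*b + 18*a^3) (a*b - 2*a*b^2 + 5*a^2 - 12*a^2*b - 18*a^3) (b^2 - 2*b^3 - a + 8*a*b - 13*a*b^2 + 10*a^2 - 24*a^2*b - 9*a^3) (b^3 - a*b + 5*a*b^2 + a^2 + 3*a^2*b - 9*a^3) (a*b^2 - a^2 + 6*a^2*b + 9*a^3)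

private def D7m (a b : ℤ) : Matrix (Fin 4) (Fin 4) ℤ :=
  M4 (-1 + 28*a - 35*a*b + 15*a*b^2 - a*b^3 - 120*a^2 + 92*a^2*b - 9*a^2*b^2 + 141*a^3 - 27*a^3*b - 27*a^4) (-7 + 28*b - 35*b^2 + 15*b^3 - b^4 + 56*a - 155*a*b + 98*a*b^2 - 9*a*b^3 - 111*a^2 + 177*a^2*b - 27*a^2*b^2 + 54*a^3 - 27*a^3*b) (-7*b + 15*b^2 - 10*b^3 + b^4 + 6*a + 45*a*b - 58*a*b^2 + 9*a*b^3 - 34*a^2 - 72*a^2*b + 27*a^2*b^2 + 36*a^3 + 27*a^3*b) (-7*a + 15*a*b - 10*a*b^2 + a*b^3 + 55*a^2 - 62*a^2*b + 9*a^2*b^2 - 96*a^3 + 27*a^3*b + 27*a^4) (7*a - 15*a*b + 10*a*b^2 - a*b^3 - 55*a^2 + 62*a^2*b - 9*a^2*b^2 + 96*a^3 - 27*a^3*b - 27*a^4) (-1 + 7*b - 15*b^2 + 10*b^3 - b^4 + 21*a - 75*a*b + 67*a*b^2 - 9*a*b^3 - 65*a^2 + 126*a^2*b - 27*a^2*b^2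 + 45*a^3 - 27*a^3*b) (-b + 5*b^2 - 6*b^3 + b^4 + a + 17*a*b - 35*a*b^2 + 9*a*b^3 - 15*a^2 - 42*a^2*b + 27*a^2*b^2 + 27*a^3 + 27*a^3*b) (-a + 5*a*b - 6*a*b^2 + a*b^3 + 21*a^2 - 38*a^2*b + 9*a^2*b^2 - 60*a^3 + 27*a^3*b + 27*a^4) (a - 5*a*b + 6*a*b^2 - a*b^3 - 21*a^2 + 38*a^2*b - 9*a^2*b^2 + 60*a^3 - 27*a^3*b - 27*a^4) (b - 5*b^2 + 6*b^3 - b^4 + 6*a - 31*a*b + 42*a*b^2 - 9*a*b^3 - 34*a^2 + 84*a^2*b - 27*a^2*b^2 + 36*a^3 - 27*a^3*b) (b^2 - 3*b^3 + b^4 + 5*a*b - 18*a*b^2 + 9*a*b^3 - 5*a^2 - 21*a^2*b + 27*a^2*b^2 + 18*a^3 + 27*a^3*b) (a*b - 3*a*b^2 + a*b^3 + 6*a^2 - 20*a^2*b + 9*a^2*b^2 - 33*a^3 + 27*a^3*b + 27*a^4) (-a*b + 3*a*b^2 - a*b^3 - 6*a^2 + 20*a^2*b - 9*a^2*b^2 +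 33*a^3 - 27*a^3*b - 27*a^4) (-b^2 + 3*b^3 - b^4 + a - 10*a*b + 23*a*b^2 - 9*a*b^3 - 15*a^2 + 51*a^2*b - 27*a^2*b^2 + 27*a^3 - 27*a^3*b) (-b^3 + b^4 + a*b - 7*a*b^2 + 9*a*b^3 - a^2 - 9*a^2*b + 27*a^2*b^2 + 9*a^3 + 27*a^3*b) (-a*b^2 + a*b^3 + a^2 - 8*a^2*b + 9*a^2*b^2 - 15*a^3 + 27*a^3*b + 27*a^4)

private def D8m (a b : ℤ) : Matrix (Fin 4) (Fin 4) ℤ :=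
  M4 (1 - 36*a + 56*a*b - 35*a*b^2 + 6*a*b^3 + 203*a^2 - 222*a^2*b + 54*a^2*b^2 - 351*a^3 + 162*a^3*b + 162*a^4) (8 - 36*b + 56*b^2 - 35*b^3 + 6*b^4 - 84*a + 273*a*b - 243*a*b^2 + 55*a*b^3 + 231*a^2 - 479*a^2*b + 171*a^2*b^2 - 195*a^3 + 189*a^3*b + 27*a^4) (8*b - 21*b^2 + 20*b^3 - 5*b^4 - 7*a - 68*a*b + 120*a*b^2 - 44*a*b^3 + 55*a^2 + 148*a^2*b - 126*a^2*b^2 - 96*a^3 - 108*a^3*b + 27*a^4) (8*a - 21*a*b + 20*a*b^2 - 5*a*b^3 - 83*a^2 + 130*a^2*b - 45*a^2*b^2 + 210*a^3 - 135*a^3*b - 135*a^4) (-8*a + 21*a*b - 20*a*b^2 + 5*a*b^3 + 83*a^2 - 130*a^2*b + 45*a^2*b^2 - 210*a^3 + 135*a^3*b + 135*a^4) (1 - 8*b + 21*b^2 - 20*b^3 + 5*b^4 - 28*a + 118*a*b - 145*a*b^2 + 46*a*b^3 + 120*a^2 - 302*a^2*b + 144*a^2*b^2 - 141*a^3 + 162*a^3*b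 + 27*a^4) (b - 6*b^2 + 10*b^3 - 4*b^4 - a - 23*a*b + 62*a*b^2 - 35*a*b^3 + 21*a^2 + 76*a^2*b - 99*a^2*b^2 - 60*a^3 - 81*a^3*b + 27*a^4) (a - 6*a*b + 10*a*b^2 - 4*a*b^3 - 28*a^2 + 68*a^2*b - 36*a^2*b^2 + 114*a^3 - 108*a^3*b - 108*a^4) (-a + 6*a*b - 10*a*b^2 + 4*a*b^3 + 28*a^2 - 68*a^2*b + 36*a^2*b^2 - 114*a^3 + 108*a^3*b + 108*a^4) (-b + 6*b^2 - 10*b^3 + 4*b^4 - 7*a + 43*a*b - 78*a*b^2 + 37*a*b^3 + 55*a^2 - 176*a^2*b + 117*a^2*b^2 - 96*a^3 + 135*a^3*b + 27*a^4) (-b^2 + 4*b^3 - 3*b^4 - 6*a*b + 27*a*b^2 - 26*a*b^3 + 6*a^2 + 34*a^2*b - 72*a^2*b^2 - 33*a^3 - 54*a^3*b + 27*a^4) (-a*b + 4*a*b^2 - 3*a*b^3 - 7*a^2 + 30*a^2*b - 27*a^2*b^2 + 54*a^3 - 81*a^3*b - 81*a^4) (a*b - 4*a*b^2 + 3*a*b^3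 + 7*a^2 - 30*a^2*b + 27*a^2*b^2 - 54*a^3 + 81*a^3*b + 81*a^4) (b^2 - 4*b^3 + 3*b^4 - a + 12*a*b - 36*a*b^2 + 28*a*b^3 + 21*a^2 - 92*a^2*b + 90*a^2*b^2 - 60*a^3 + 108*a^3*b + 27*a^4) (b^3 - 2*b^4 - a*b + 9*a*b^2 - 17*a*b^3 + a^2 + 13*a^2*b - 45*a^2*b^2 - 15*a^3 - 27*a^3*b + 27*a^4) (a*b^2 - 2*a*b^3 - a^2 + 10*a^2*b - 18*a^2*b^2 + 21*a^3 - 54*a^3*b - 54*a^4)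

private lemma Gamma_eq (a b : ℤ) : Gamma a b = GammaM a b := rfl

private lemma Delta_eq (a b : ℤ) : Gamma a b - 1 = DeltaM a b := by
  rw [Gamma_eq, GammaM, DeltaM, one_M4, sub_M4]
  apply eq_M4 <;> ring

private lemma hG2mul (a b : ℤ) : GammaM a b * GammaM a b = G2m a b := by
  rw [GammaM, G2m, mul_M4]
  apply eq_M4 <;> ring

private lemma hG3mul (a b : ℤ) : G2m a b * GammaM a b = G3m a b := by
  rw [G2m, GammaM, G3m, mul_M4]
  apply eq_M4 <;> ring

private lemma hG4mul (a b : ℤ) : G2m a b * G2m a b = G4m a b := by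
  rw [G2m, G4m, mul_M4]
  apply eq_M4 <;> ring

private lemma hG5mul (a b : ℤ) : G4m a b * GammaM a b = G5m a b := by
  rw [G4m, GammaM, G5m, mul_M4]
  apply eq_M4 <;> ring

private lemma hG6mul (a b : ℤ) : G4m a b * G2m a b = G6m a b := by
  rw [G4m, G2m, G6m, mul_M4]
  apply eq_M4 <;> ring

private lemma hG7mul (a b : ℤ) : G6m a b * GammaM a b = G7m a b := by
  rw [G6m, GammaM, G7m, mul_M4]
  apply eq_M4 <;> ring

private lemma hG8mul (a b : ℤ) : G4m a b * G4m a b = G8m a b := by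
  rw [G4m, G8m, mul_M4]
  apply eq_M4 <;> ring

private lemma hD2mul (a b : ℤ) : DeltaM a b * DeltaM a b = D2m a b := by
  rw [DeltaM, D2m, mul_M4]
  apply eq_M4 <;> ring

private lemma hD3mul (a b : ℤ) : D2m a b * DeltaM a b = D3m a b := by
  rw [D2m, DeltaM, D3m, mul_M4]
  apply eq_M4 <;> ring

private lemma hD4mul (a b : ℤ) : D2m a b * D2m a b = D4m a b := by
  rw [D2m, D4m, mul_M4]
  apply eq_M4 <;> ring

private lemma hD5mul (a b : ℤ) : D4m a b * DeltaM a b = D5m a b := by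
  rw [D4m, DeltaM, D5m, mul_M4]
  apply eq_M4 <;> ring

private lemma hD6mul (a b : ℤ) : D4m a b * D2m a b = D6m a b := by
  rw [D4m, D2m, D6m, mul_M4]
  apply eq_M4 <;> ring

private lemma hD7mul (a b : ℤ) : D6m a b * DeltaM a b = D7m a b := by
  rw [D6m, DeltaM, D7m, mul_M4]
  apply eq_M4 <;> ring

private lemma hD8mul (a b : ℤ) : D4m a b * D4m a b = D8m a b := by
  rw [D4m, D8m, mul_M4]
  apply eq_M4 <;> ring


private lemma hGp2 (a b : ℤ) : Gamma a b ^ 2 = G2m a b := by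
  rw [sq, Gamma_eq]; exact hG2mul a b
private lemma hGp3 (a b : ℤ) : Gamma a b ^ 3 = G3m a b := by
  show Gamma a b ^ (2+1) = G3m a b
  rw [pow_add, pow_one, hGp2, Gamma_eq]; exact hG3mul a b
private lemma hGp4 (a b : ℤ) : Gamma a b ^ 4 = G4m a b := by
  show Gamma a b ^ (2+2) = G4m a b
  rw [pow_add, hGp2]; exact hG4mul a b
private lemma hGp5 (a b : ℤ) : Gamma a b ^ 5 = G5m a b := by
  show Gamma a b ^ (4+1) = G5m a b
  rw [pow_add, pow_one, hGp4, Gamma_eq]; exact hG5mul a b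
private lemma hGp6 (a b : ℤ) : Gamma a b ^ 6 = G6m a b := by
  show Gamma a b ^ (4+2) = G6m a b
  rw [pow_add, hGp4, hGp2]; exact hG6mul a b
private lemma hGp7 (a b : ℤ) : Gamma a b ^ 7 = G7m a b := by
  show Gamma a b ^ (6+1) = G7m a b
  rw [pow_add, pow_one, hGp6, Gamma_eq]; exact hG7mul a b
private lemma hGp8 (a b : ℤ) : Gamma a b ^ 8 = G8m a b := by
  show Gamma a b ^ (4+4) = G8m a b
  rw [pow_add, hGp4]; exact hG8mul a b

private lemma hDp2 (a b : ℤ) : (Gamma a b - 1) ^ 2 = D2m a b := by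
  rw [sq, Delta_eq]; exact hD2mul a b
private lemma hDp3 (a b : ℤ) : (Gamma a b - 1) ^ 3 = D3m a b := by
  show (Gamma a b - 1) ^ (2+1) = D3m a b
  rw [pow_add, pow_one, hDp2, Delta_eq]; exact hD3mul a b
private lemma hDp4 (a b : ℤ) : (Gamma a b - 1) ^ 4 = D4m a b := by
  show (Gamma a b - 1) ^ (2+2) = D4m a b
  rw [pow_add, hDp2]; exact hD4mul a b
private lemma hDp5 (a b : ℤ) : (Gamma a b - 1) ^ 5 = D5m a b := by
  show (Gamma a b - 1) ^ (4+1) = D5m a b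
  rw [pow_add, pow_one, hDp4, Delta_eq]; exact hD5mul a b
private lemma hDp6 (a b : ℤ) : (Gamma a b - 1) ^ 6 = D6m a b := by
  show (Gamma a b - 1) ^ (4+2) = D6m a b
  rw [pow_add, hDp4, hDp2]; exact hD6mul a b
private lemma hDp7 (a b : ℤ) : (Gamma a b - 1) ^ 7 = D7m a b := by
  show (Gamma a b - 1) ^ (6+1) = D7m a b
  rw [pow_add, pow_one, hDp6, Delta_eq]; exact hD7mul a b
private lemma hDp8 (a b : ℤ) : (Gamma a b - 1) ^ 8 = D8m a b := by
  show (Gamma a b - 1) ^ (4+4) = D8m a b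
  rw [pow_add, hDp4]; exact hD8mul a b

private lemma hGq (a b : ℤ) : (a^2) • (1 : Matrix (Fin 4) (Fin 4) ℤ)
    + (2*a - 3*a^2 - 4*a*b - b^2) • G2m a b
    + (1 - 4*a + 9*a^2 - 2*b + 6*a*b + b^2) • G4m a b
    + (-2 + 6*a + 2*b) • G6m a b + G8m a b = 0 := by
  rw [one_M4, G2m, G4m, G6m, G8m, smul_M4, smul_M4, smul_M4, smul_M4,
    add_M4, add_M4, add_M4, add_M4, zero_M4]
  apply eq_M4 <;> simp only [smul_eq_mul] <;> ring

private lemma hDq (a b : ℤ) : (a^2) • (1 : Matrix (Fin 4) (Fin 4) ℤ)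
    + (2*a - 3*a^2 - 4*a*b - b^2) • D2m a b
    + (1 - 4*a + 9*a^2 - 2*b + 6*a*b + b^2) • D4m a b
    + (-2 + 6*a + 2*b) • D6m a b + D8m a b = 0 := by
  rw [one_M4, D2m, D4m, D6m, D8m, smul_M4, smul_M4, smul_M4, smul_M4,
    add_M4, add_M4, add_M4, add_M4, zero_M4]
  apply eq_M4 <;> simp only [smul_eq_mul] <;> ring

private lemma hGrec (a b : ℤ) (k : ℕ) :
    (a^2) • Gamma a b ^ k + (2*a - 3*a^2 - 4*a*b - b^2) • Gamma a b ^ (k+2)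
    + (1 - 4*a + 9*a^2 - 2*b + 6*a*b + b^2) • Gamma a b ^ (k+4)
    + (-2 + 6*a + 2*b) • Gamma a b ^ (k+6) + Gamma a b ^ (k+8) = 0 := by
  have h := congrArg (fun X => Gamma a b ^ k * X) (hGq a b)
  simp only [mul_add, mul_smul_comm, mul_one, mul_zero] at h
  rw [pow_add, pow_add, pow_add, pow_add, hGp2, hGp4, hGp6, hGp8]
  exact h

private lemma hDrec (a b : ℤ) (k : ℕ) :
    (a^2) • (Gamma a b - 1) ^ k + (2*a - 3*a^2 - 4*a*b - b^2) • (Gamma a b - 1) ^ (k+2)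
    + (1 - 4*a + 9*a^2 - 2*b + 6*a*b + b^2) • (Gamma a b - 1) ^ (k+4)
    + (-2 + 6*a + 2*b) • (Gamma a b - 1) ^ (k+6) + (Gamma a b - 1) ^ (k+8) = 0 := by
  have h := congrArg (fun X => (Gamma a b - 1) ^ k * X) (hDq a b)
  simp only [mul_add, mul_smul_comm, mul_one, mul_zero] at h
  rw [pow_add, pow_add, pow_add, pow_add, hDp2, hDp4, hDp6, hDp8]
  exact h

private lemma hBrec (a b : ℤ) (k : ℕ) :
    (a^2) • B a b k + (2*a - 3*a^2 - 4*a*b - b^2) • B a b (k+2)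
    + (1 - 4*a + 9*a^2 - 2*b + 6*a*b + b^2) • B a b (k+4)
    + (-2 + 6*a + 2*b) • B a b (k+6) + B a b (k+8) = 0 := by
  have hg := hGrec a b k
  have hd := hDrec a b k
  ext i j
  have hg' := congrFun (congrFun hg i) j
  have hd' := congrFun (congrFun hd i) j
  simp only [Matrix.add_apply, Matrix.smul_apply, Matrix.zero_apply, smul_eq_mul] at hg' hd'
  simp only [B, Matrix.sub_apply, Matrix.add_apply, Matrix.smul_apply, Matrix.zero_apply,
    smul_eq_mul]
  linarith [hg', hd']

private lemma key_base1 (a b : ℤ) : B a b 1 = 1 := by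
  simp [B, pow_one]

private lemma key (a b : ℤ) (s t : ℕ → ℤ)
    (hs_rec : ∀ n : ℕ, a ^ 2 * s n + (2 * a - 3 * a ^ 2 - 4 * a * b - b ^ 2) * s (n + 2)
      + (1 - 4 * a + 9 * a ^ 2 - 2 * b + 6 * a * b + b ^ 2) * s (n + 4)
      + (-2 + 6 * a + 2 * b) * s (n + 6) + s (n + 8) = 0)
    (ht_rec : ∀ n : ℕ, a ^ 2 * t n + (2 * a - 3 * a ^ 2 - 4 * a * b - b ^ 2) * t (n + 2)
      + (1 - 4 * a + 9 * a ^ 2 - 2 * b + 6 * a * b + b ^ 2) * t (n + 4)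
      + (-2 + 6 * a + 2 * b) * t (n + 6) + t (n + 8) = 0)
    (hs1 : s 1 = 2) (hs3 : s 3 = 2 - 9 * a - 3 * b)
    (hs5 : s 5 = 2 - 25 * a + 45 * a ^ 2 - 5 * b + 30 * a * b + 5 * b ^ 2)
    (hs7 : s 7 = 2 - 49 * a + 189 * a ^ 2 - 189 * a ^ 3 - 7 * b + 105 * a * b
      - 189 * a ^ 2 * b + 14 * b ^ 2 - 63 * a * b ^ 2 - 7 * b ^ 3)
    (ht1 : t 1 = 0) (ht3 : t 3 = -3)
    (ht5 : t 5 = 5 * (-1 + 3 * a + b))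
    (ht7 : t 7 = -7 * (1 - 7 * a + 9 * a ^ 2 - 2 * b + 6 * a * b + b ^ 2)) :
    ∀ m : ℕ, (2:ℤ) • B a b (2*m+1) = s (2*m+1) • (1 : Matrix (Fin 4) (Fin 4) ℤ) + t (2*m+1) • Ym a b := by
  intro m
  induction m using Nat.strong_induction_on with
  | _ m ih =>
    match m with
    | 0 =>
      rw [show 2*0+1 = 1 from rfl, key_base1, hs1, ht1, one_M4, Ym]
      simp only [smul_M4, add_M4]
      apply eq_M4 <;> simp only [smul_eq_mul] <;> ring
    | 1 =>
      have hB3 : B a b 3 = G3m a b - D3m a b := by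
        unfold B; rw [hGp3, hDp3]
      rw [show 2*1+1 = 3 from rfl, hB3, hs3, ht3, G3m, D3m, one_M4, Ym]
      simp only [sub_M4, smul_M4, add_M4]
      apply eq_M4 <;> simp only [smul_eq_mul] <;> ring
    | 2 =>
      have hB5 : B a b 5 = G5m a b - D5m a b := by
        unfold B; rw [hGp5, hDp5]
      rw [show 2*2+1 = 5 from rfl, hB5, hs5, ht5, G5m, D5m, one_M4, Ym]
      simp only [sub_M4, smul_M4, add_M4]
      apply eq_M4 <;> simp only [smul_eq_mul] <;> ring
    | 3 =>
      have hB7 : B a b 7 = G7m a b - D7m a b := by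
        unfold B; rw [hGp7, hDp7]
      rw [show 2*3+1 = 7 from rfl, hB7, hs7, ht7, G7m, D7m, one_M4, Ym]
      simp only [sub_M4, smul_M4, add_M4]
      apply eq_M4 <;> simp only [smul_eq_mul] <;> ring
    | (k+4) =>
      have ih0 := ih k (by omega)
      have ih1 := ih (k+1) (by omega)
      have ih2 := ih (k+2) (by omega)
      have ih3 := ih (k+3) (by omega)
      rw [show 2*(k+1)+1 = (2*k+1)+2 from by ring] at ih1
      rw [show 2*(k+2)+1 = (2*k+1)+4 from by ring] at ih2
      rw [show 2*(k+3)+1 = (2*k+1)+6 from by ring] at ih3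
      rw [show 2*(k+4)+1 = (2*k+1)+8 from by ring]
      have hb := hBrec a b (2*k+1)
      have hs := hs_rec (2*k+1)
      have ht := ht_rec (2*k+1)
      ext i j
      have hb' := congrFun (congrFun hb i) j
      have i0 := congrFun (congrFun ih0 i) j
      have i1 := congrFun (congrFun ih1 i) j
      have i2 := congrFun (congrFun ih2 i) j
      have i3 := congrFun (congrFun ih3 i) j
      simp only [Matrix.add_apply, Matrix.smul_apply, Matrix.zero_apply, smul_eq_mul] at hb' i0 i1 i2 i3 ⊢
      linear_combination 2 * hb' - a^2 * i0 - (2*a - 3*a^2 - 4*a*b - b^2) * i1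
        - (1 - 4*a + 9*a^2 - 2*b + 6*a*b + b^2) * i2 - (-2 + 6*a + 2*b) * i3
        - ((1 : Matrix (Fin 4) (Fin 4) ℤ) i j) * hs - (Ym a b i j) * ht

private noncomputable def cokerEquivOfMul (M U V Ui Vi D : Matrix (Fin 4) (Fin 4) ℤ)
    (hU : U * Ui = 1) (hUi : Ui * U = 1) (hV : V * Vi = 1) (hVi : Vi * V = 1)
    (hD : U * M * V = D) :
    ((Fin 4 → ℤ) ⧸ LinearMap.range (Matrix.toLin' M)) ≃ₗ[ℤ]
    ((Fin 4 → ℤ) ⧸ LinearMap.range (Matrix.toLin' D)) := by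
  subst hD
  refine Submodule.Quotient.equiv _ _
    (LinearEquiv.ofLinear (Matrix.toLin' U) (Matrix.toLin' Ui)
      (by rw [← Matrix.toLin'_mul, hU, Matrix.toLin'_one])
      (by rw [← Matrix.toLin'_mul, hUi, Matrix.toLin'_one])) ?_
  have hVsurj : LinearMap.range (Matrix.toLin' V) = ⊤ := by
    rw [LinearMap.range_eq_top]
    intro w
    refine ⟨Matrix.toLin' Vi w, ?_⟩
    have h2 : Matrix.toLin' (V * Vi) = (Matrix.toLin' V).comp (Matrix.toLin' Vi) :=
      Matrix.toLin'_mul V Vi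
    rw [hV, Matrix.toLin'_one] at h2
    have := LinearMap.congr_fun h2.symm w
    simpa using this
  have h1 : Matrix.toLin' (U * M * V) =
      (Matrix.toLin' U).comp ((Matrix.toLin' M).comp (Matrix.toLin' V)) := by
    rw [mul_assoc, Matrix.toLin'_mul, Matrix.toLin'_mul]
  rw [h1, LinearMap.range_comp, LinearMap.range_comp_of_range_eq_top _ hVsurj]
  rfl

private noncomputable def cokerDiag (d : Fin 4 → ℤ) :
    ((Fin 4 → ℤ) ⧸ LinearMap.range (Matrix.toLin' (Matrix.diagonal d))) ≃+
    ((i : Fin 4) → ZMod (d i).natAbs) := by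
  have hr : LinearMap.range (Matrix.toLin' (Matrix.diagonal d)) =
      Submodule.pi Set.univ (fun i : Fin 4 => Ideal.span {d i}) := by
    ext w
    simp only [LinearMap.mem_range, Submodule.mem_pi, Set.mem_univ, forall_true_left,
      Ideal.mem_span_singleton]
    constructor
    · rintro ⟨v, rfl⟩ i
      rw [Matrix.toLin'_apply, Matrix.mulVec_diagonal]
      exact ⟨v i, rfl⟩
    · intro h
      choose c hc using h
      refine ⟨c, ?_⟩
      funext i
      rw [Matrix.toLin'_apply, Matrix.mulVec_diagonal, ← hc i]
  rw [hr]
  exact (Submodule.quotientPi _).toAddEquiv.trans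
    (AddEquiv.piCongrRight fun i => (Int.quotientSpanEquivZMod (d i)).toAddEquiv)

private def pi4AddEquiv (G : Fin 4 → Type) [∀ i, AddGroup (G i)] :
    ((i : Fin 4) → G i) ≃+ (G 0 × G 1 × G 2 × G 3) where
  toFun f := (f 0, f 1, f 2, f 3)
  invFun q := Fin.cons q.1 (Fin.cons q.2.1 (Fin.cons q.2.2.1 (Fin.cons q.2.2.2 (fun i => i.elim0))))
  left_inv f := by
    funext i
    fin_cases i <;> rfl
  right_inv q := rfl
  map_add' f g := rfl
/-- For odd `n` with `t(n)` and `s(n) + (5a−b)t(n)` not both zero, setting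
`alphaHat(n) = gcd(t(n), (s(n) + (5a−b)t(n))/2)` and
`betaHat(n) = (s(n)² + (4a − (3a+b)²)t(n)²)/(4alphaHat(n))`, these quotients are integers (the
divisibilities below) and `coker B(n) ≅ ℤ_{alphaHat(n)} ⊕ ℤ_{alphaHat(n)} ⊕ ℤ_{betaHat(n)} ⊕ ℤ_{betaHat(n)}`
(with `ℤ_d` realized as `ZMod d.natAbs`). -/
theorem homology_odd (a b : ℤ)
    (s t : ℕ → ℤ)
    (hs_rec : ∀ n : ℕ, a ^ 2 * s n + (2 * a - 3 * a ^ 2 - 4 * a * b - b ^ 2) * s (n + 2)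
      + (1 - 4 * a + 9 * a ^ 2 - 2 * b + 6 * a * b + b ^ 2) * s (n + 4)
      + (-2 + 6 * a + 2 * b) * s (n + 6) + s (n + 8) = 0)
    (ht_rec : ∀ n : ℕ, a ^ 2 * t n + (2 * a - 3 * a ^ 2 - 4 * a * b - b ^ 2) * t (n + 2)
      + (1 - 4 * a + 9 * a ^ 2 - 2 * b + 6 * a * b + b ^ 2) * t (n + 4)
      + (-2 + 6 * a + 2 * b) * t (n + 6) + t (n + 8) = 0)
    (hs0 : s 0 = 0) (hs1 : s 1 = 2) (hs2 : s 2 = 2) (hs3 : s 3 = 2 - 9 * a - 3 * b)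
    (hs4 : s 4 = 2 * (1 - 3 * a - b))
    (hs5 : s 5 = 2 - 25 * a + 45 * a ^ 2 - 5 * b + 30 * a * b + 5 * b ^ 2)
    (hs6 : s 6 = 2 - 18 * a + 27 * a ^ 2 - 4 * b + 18 * a * b + 3 * b ^ 2)
    (hs7 : s 7 = 2 - 49 * a + 189 * a ^ 2 - 189 * a ^ 3 - 7 * b + 105 * a * b
      - 189 * a ^ 2 * b + 14 * b ^ 2 - 63 * a * b ^ 2 - 7 * b ^ 3)
    (ht0 : t 0 = 0) (ht1 : t 1 = 0) (ht2 : t 2 = 0) (ht3 : t 3 = -3) (ht4 : t 4 = -2)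
    (ht5 : t 5 = 5 * (-1 + 3 * a + b)) (ht6 : t 6 = -4 + 9 * a + 3 * b)
    (ht7 : t 7 = -7 * (1 - 7 * a + 9 * a ^ 2 - 2 * b + 6 * a * b + b ^ 2))
    (n : ℕ) (hn : Odd n)
    (hne : ¬(t n = 0 ∧ s n + (5 * a - b) * t n = 0))
    (alphaHat : ℕ) (halphaHat : alphaHat = Int.gcd (t n) ((s n + (5 * a - b) * t n) / 2))
    (betaHat : ℤ) (hbetaHat : betaHat = (s n ^ 2 + (4 * a - (3 * a + b) ^ 2) * t n ^ 2) / (4 * (alphaHat : ℤ))) :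
    2 ∣ s n + (5 * a - b) * t n ∧
    (4 * (alphaHat : ℤ)) ∣ (s n ^ 2 + (4 * a - (3 * a + b) ^ 2) * t n ^ 2) ∧
    Nonempty
      (((Fin 4 → ℤ) ⧸ LinearMap.range (Matrix.toLin' (B a b n)))
        ≃+ (ZMod alphaHat × ZMod alphaHat × ZMod betaHat.natAbs × ZMod betaHat.natAbs)) := by
  obtain ⟨m, hm0⟩ := hn
  have hm : n = 2 * m + 1 := by omega
  have hkey := key a b s t hs_rec ht_rec hs1 hs3 hs5 hs7 ht1 ht3 ht5 ht7 m
  rw [← hm] at hkey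
  rw [one_M4, Ym] at hkey
  simp only [smul_M4, add_M4] at hkey
  have e00 : (2:ℤ) * B a b n 0 0 = s n * 1 + t n * (-b + a) := congrFun (congrFun hkey 0) 0
  have e01 : (2:ℤ) * B a b n 0 1 = s n * 0 + t n * (-2 + 4*b + 2*a) := congrFun (congrFun hkey 0) 1
  have e02 : (2:ℤ) * B a b n 0 2 = s n * 0 + t n * (-2*b + 2*a) := congrFun (congrFun hkey 0) 2
  have e03 : (2:ℤ) * B a b n 0 3 = s n * 0 + t n * (-2*a) := congrFun (congrFun hkey 0) 3
  have e10 : (2:ℤ) * B a b n 1 0 = s n * 0 + t n * (2*a) := congrFun (congrFun hkey 1) 0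
  have e11 : (2:ℤ) * B a b n 1 1 = s n * 1 + t n * (b - a) := congrFun (congrFun hkey 1) 1
  have e12 : (2:ℤ) * B a b n 1 2 = s n * 0 + t n * (2*a) := congrFun (congrFun hkey 1) 2
  have e13 : (2:ℤ) * B a b n 1 3 = s n * 0 + t n * (0) := congrFun (congrFun hkey 1) 3
  have e20 : (2:ℤ) * B a b n 2 0 = s n * 0 + t n * (0) := congrFun (congrFun hkey 2) 0
  have e21 : (2:ℤ) * B a b n 2 1 = s n * 0 + t n * (2*a) := congrFun (congrFun hkey 2) 1
  have e22 : (2:ℤ) * B a b n 2 2 = s n * 1 + t n * (b - a) := congrFun (congrFun hkey 2) 2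
  have e23 : (2:ℤ) * B a b n 2 3 = s n * 0 + t n * (2*a) := congrFun (congrFun hkey 2) 3
  have e30 : (2:ℤ) * B a b n 3 0 = s n * 0 + t n * (-2*a) := congrFun (congrFun hkey 3) 0
  have e31 : (2:ℤ) * B a b n 3 1 = s n * 0 + t n * (-2*b + 2*a) := congrFun (congrFun hkey 3) 1
  have e32 : (2:ℤ) * B a b n 3 2 = s n * 0 + t n * (-2 + 4*b + 2*a) := congrFun (congrFun hkey 3) 2
  have e33 : (2:ℤ) * B a b n 3 3 = s n * 1 + t n * (-b + a) := congrFun (congrFun hkey 3) 3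
  obtain ⟨p, hp⟩ : ∃ p, s n + (a - b) * t n = 2 * p := ⟨B a b n 0 0, by linarith [e00]⟩
  have hMex : B a b n = M4 (p) ((a+2*b-1)*t n) ((a-b)*t n) (-(a*t n)) (a*t n) (p-(a-b)*t n) (a*t n) (0) (0) (a*t n) (p-(a-b)*t n) (a*t n) (-(a*t n)) ((a-b)*t n) ((a+2*b-1)*t n) (p) := by
    rw [eta_M4 (B a b n)]
    apply eq_M4 <;> apply mul_left_cancel₀ (two_ne_zero (α := ℤ))
    case h₁₁ => linear_combination e00 + hp
    case h₁₂ => linear_combination e01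
    case h₁₃ => linear_combination e02
    case h₁₄ => linear_combination e03
    case h₂₁ => linear_combination e10
    case h₂₂ => linear_combination e11 + hp
    case h₂₃ => linear_combination e12
    case h₂₄ => linear_combination e13
    case h₃₁ => linear_combination e20
    case h₃₂ => linear_combination e21
    case h₃₃ => linear_combination e22 + hp
    case h₃₄ => linear_combination e23
    case h₄₁ => linear_combination e30
    case h₄₂ => linear_combination e31
    case h₄₃ => linear_combination e32
    case h₄₄ => linear_combination e33 + hp
  have hhalfval : s n + (5*a - b)*t n = 2*(p + 2*a*t n) := by linear_combination hp
  have hdvd2 : (2:ℤ) ∣ s n + (5 * a - b) * t n := ⟨p + 2*a*t n, hhalfval⟩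
  have hhalf : (s n + (5*a - b)*t n)/2 = p + 2*a*t n := by
    rw [hhalfval]; exact Int.mul_ediv_cancel_left _ two_ne_zero
  have hAgcd : alphaHat = Int.gcd (t n) (p + 2*a*t n) := by rw [halphaHat, hhalf]
  have hdvd_t : (alphaHat:ℤ) ∣ t n := by rw [hAgcd]; exact Int.gcd_dvd_left _ _
  have hdvd_w : (alphaHat:ℤ) ∣ p + 2*a*t n := by rw [hAgcd]; exact Int.gcd_dvd_right _ _
  have hdvd_p : (alphaHat:ℤ) ∣ p := by
    have h := hdvd_w.sub (hdvd_t.mul_left (2*a))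
    simpa using h
  have hAne : (alphaHat:ℤ) ≠ 0 := by
    intro hA0
    have hA0' : alphaHat = 0 := by exact_mod_cast hA0
    rw [hA0'] at hAgcd
    obtain ⟨hta, htb⟩ := Int.gcd_eq_zero_iff.mp hAgcd.symm
    exact hne ⟨hta, by rw [hhalfval, htb, mul_zero]⟩
  obtain ⟨x, y, hbz2⟩ : ∃ x y, (alphaHat:ℤ) = p * x + t n * y := by
    refine ⟨Int.gcdB (t n) (p + 2*a*t n),
      Int.gcdA (t n) (p + 2*a*t n) + 2*a*Int.gcdB (t n) (p + 2*a*t n), ?_⟩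
    rw [hAgcd]
    linear_combination Int.gcd_eq_gcd_ab (t n) (p + 2*a*t n)
  obtain ⟨t1, ht1n⟩ := hdvd_t
  obtain ⟨p1, hp1⟩ := hdvd_p
  have hbez : x*p1 + y*t1 = 1 := by
    apply mul_left_cancel₀ hAne
    linear_combination -hbz2 - x*hp1 - y*ht1n
  have hs_sub : s n = 2*((alphaHat:ℤ)*p1) - (a-b)*((alphaHat:ℤ)*t1) := by
    rw [← hp1, ← ht1n]; linear_combination hp
  have hval : s n^2 + (4*a - (3*a + b)^2)*t n^2 =
      (4*(alphaHat:ℤ)) * ((alphaHat:ℤ)*(p1^2 + (b-a)*p1*t1 - (a*(2*a+2*b-1))*t1^2)) := by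
    rw [hs_sub, ht1n]; ring
  have hdvd4 : (4*(alphaHat:ℤ)) ∣ (s n ^ 2 + (4 * a - (3 * a + b) ^ 2) * t n ^ 2) := ⟨_, hval⟩
  have h4Ane : (4*(alphaHat:ℤ)) ≠ 0 := mul_ne_zero (by norm_num) hAne
  have hbeta : betaHat = (alphaHat:ℤ)*(p1^2 + (b-a)*p1*t1 - (a*(2*a+2*b-1))*t1^2) := by
    rw [hbetaHat, hval, Int.mul_ediv_cancel_left _ h4Ane]
  have hdiag : (M4 (-y + b*x + a*x) (y + x - b*x - a*x) (y + x - b*x - a*x) (-y + b*x + a*x) (0) (-y + b*x + a*x) (2*y + x - 2*b*x - 2*a*x) (-y + b*x + a*x) (-p1 - b*t1 - a*t1) (-t1 + p1 + b*t1 + a*t1) (-t1 + p1 + b*t1 + a*t1) (-p1 - b*t1 - a*t1) (0) (-p1 - b*t1 - a*t1) (-t1 + 2*p1 + 2*b*t1 + 2*a*t1) (-p1 - b*t1 - a*t1)) * (M4 (p) ((a+2*b-1)*t n) ((a-b)*t n) (-(a*t n)) (a*t n) (p-(a-b)*t n) (a*t n) (0) (0) (a*t n) (p-(a-b)*t n)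 (a*t n) (-(a*t n)) ((a-b)*t n) ((a+2*b-1)*t n) (p)) * (M4 (2) (-3) (-1 - 2*p1*y + 2*b - 2*b*t1*y + 2*a + 2*a*t1*y + 2*a*t1*x - 4*a*b*t1*x - 4*a^2*t1*x) (1 + 3*p1*y - 3*b + 3*b*t1*y - 3*a - 3*a*t1*y - 3*a*t1*x + 6*a*b*t1*x + 6*a^2*t1*x) (1) (-1) (-p1*y + b - b*t1*y + a + a*t1*y + a*t1*x - 2*a*b*t1*x - 2*a^2*t1*x) (p1*y - b + b*t1*y - a - a*t1*y - a*t1*x + 2*a*b*t1*x + 2*a^2*t1*x) (0) (1) (0) (-p1*y + b - b*t1*y + a + a*t1*y + a*t1*x - 2*a*b*t1*x - 2*a^2*t1*x) (-1) (3) (p1*y - b + b*t1*y - a - a*t1*y - a*t1*x + 2*a*b*t1*x + 2*a^2*t1*x) (-1 - 3*p1*y + 3*b - 3*b*t1*y + 3*a + 3*a*t1*y + 3*a*t1*x - 6*a*b*t1*x - 6*a^2*t1*x)) = Matrix.diagonal ![(alphaHat:ℤ), (alphaHat:ℤ), betaHat, betaHat] := by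
    rw [hbeta, diag_M4, hp1, ht1n, mul_M4, mul_M4]
    apply eq_M4
    case h₁₁ => linear_combination (((alphaHat:ℤ))) * hbez
    case h₁₂ => ring
    case h₁₃ => linear_combination (-((alphaHat:ℤ))*p1*y - b*((alphaHat:ℤ))*t1*y + a*((alphaHat:ℤ))*t1*y + a*((alphaHat:ℤ))*t1*x - 2*a*b*((alphaHat:ℤ))*t1*x - 2*a^2*((alphaHat:ℤ))*t1*x) * hbez
    case h₁₄ => ring
    case h₂₁ => ring
    case h₂₂ => linear_combination (((alphaHat:ℤ))) * hbez
    case h₂₃ => ring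
    case h₂₄ => linear_combination (-((alphaHat:ℤ))*p1*y - b*((alphaHat:ℤ))*t1*y + a*((alphaHat:ℤ))*t1*y + a*((alphaHat:ℤ))*t1*x - 2*a*b*((alphaHat:ℤ))*t1*x - 2*a^2*((alphaHat:ℤ))*t1*x) * hbez
    case h₃₁ => ring
    case h₃₂ => ring
    case h₃₃ => ring
    case h₃₄ => ring
    case h₄₁ => ring
    case h₄₂ => ring
    case h₄₃ => ring
    case h₄₄ => ring
  have hUUi : (M4 (-y + b*x + a*x) (y + x - b*x - a*x) (y + x - b*x - a*x) (-y + b*x + a*x) (0) (-y + b*x + a*x) (2*y + x - 2*b*x - 2*a*x) (-y + b*x + a*x) (-p1 - b*t1 - a*t1) (-t1 + p1 + b*t1 + a*t1) (-t1 + p1 + b*t1 + a*t1) (-p1 - b*t1 - a*t1) (0) (-p1 - b*t1 - a*t1) (-t1 + 2*p1 + 2*b*t1 + 2*a*t1) (-p1 - b*t1 - a*t1)) * (M4 (-t1 + 2*p1 + 2*b*t1 + 2*a*t1) (t1 - 3*p1 - 3*b*t1 - 3*a*t1) (-2*y - x + 2*b*x + 2*a*x) (3*y + x - 3*b*x - 3*a*x)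 (p1 + b*t1 + a*t1) (-p1 - b*t1 - a*t1) (-y + b*x + a*x) (y - b*x - a*x) (0) (p1 + b*t1 + a*t1) (0) (-y + b*x + a*x) (-p1 - b*t1 - a*t1) (-t1 + 3*p1 + 3*b*t1 + 3*a*t1) (y - b*x - a*x) (-3*y - x + 3*b*x + 3*a*x)) = 1 := by
    rw [one_M4, mul_M4]
    apply eq_M4
    case h₁₁ => linear_combination hbez
    case h₁₂ => ring
    case h₁₃ => ring
    case h₁₄ => ring
    case h₂₁ => ring
    case h₂₂ => linear_combination hbez
    case h₂₃ => ring
    case h₂₄ => ring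
    case h₃₁ => ring
    case h₃₂ => ring
    case h₃₃ => linear_combination hbez
    case h₃₄ => ring
    case h₄₁ => ring
    case h₄₂ => ring
    case h₄₃ => ring
    case h₄₄ => linear_combination hbez
  have hUiU : (M4 (-t1 + 2*p1 + 2*b*t1 + 2*a*t1) (t1 - 3*p1 - 3*b*t1 - 3*a*t1) (-2*y - x + 2*b*x + 2*a*x) (3*y + x - 3*b*x - 3*a*x) (p1 + b*t1 + a*t1) (-p1 - b*t1 - a*t1) (-y + b*x + a*x) (y - b*x - a*x) (0) (p1 + b*t1 + a*t1) (0) (-y + b*x + a*x) (-p1 - b*t1 - a*t1) (-t1 + 3*p1 + 3*b*t1 + 3*a*t1) (y - b*x - a*x) (-3*y - x + 3*b*x + 3*a*x)) * (M4 (-y + b*x + a*x) (y + x - b*x - a*x) (y + x - b*x - a*x) (-y + b*x + a*x) (0) (-y + b*x + a*x) (2*y + x - 2*b*x - 2*a*x) (-y + b*x + a*x) (-p1 - b*t1 - a*t1) (-t1 + p1 + b*t1 + a*t1) (-t1 + p1 + b*t1 + a*t1) (-p1 - b*t1 - a*t1) (0) (-p1 - b*t1 - a*t1) (-t1 + 2*p1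 + 2*b*t1 + 2*a*t1) (-p1 - b*t1 - a*t1)) = 1 := by
    rw [one_M4, mul_M4]
    apply eq_M4
    case h₁₁ => linear_combination hbez
    case h₁₂ => ring
    case h₁₃ => ring
    case h₁₄ => ring
    case h₂₁ => ring
    case h₂₂ => linear_combination hbez
    case h₂₃ => ring
    case h₂₄ => ring
    case h₃₁ => ring
    case h₃₂ => ring
    case h₃₃ => linear_combination hbez
    case h₃₄ => ring
    case h₄₁ => ring
    case h₄₂ => ring
    case h₄₃ => ring
    case h₄₄ => linear_combination hbez
  have hVVi : (M4 (2) (-3) (-1 - 2*p1*y + 2*b - 2*b*t1*y + 2*a + 2*a*t1*y + 2*a*t1*x - 4*a*b*t1*x - 4*a^2*t1*x) (1 + 3*p1*y - 3*b + 3*b*t1*y - 3*a - 3*a*t1*y - 3*a*t1*x + 6*a*b*t1*x + 6*a^2*t1*x) (1) (-1) (-p1*y + b - b*t1*y + a + a*t1*y + a*t1*x - 2*a*b*t1*x - 2*a^2*t1*x) (p1*y - b + b*t1*y - a - a*t1*y - a*t1*x + 2*a*b*t1*x + 2*a^2*t1*x) (0) (1) (0) (-p1*y + b - b*t1*y + a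 + a*t1*y + a*t1*x - 2*a*b*t1*x - 2*a^2*t1*x) (-1) (3) (p1*y - b + b*t1*y - a - a*t1*y - a*t1*x + 2*a*b*t1*x + 2*a^2*t1*x) (-1 - 3*p1*y + 3*b - 3*b*t1*y + 3*a + 3*a*t1*y + 3*a*t1*x - 6*a*b*t1*x - 6*a^2*t1*x)) * (M4 (-p1*y + b - b*t1*y + a + a*t1*y + a*t1*x - 2*a*b*t1*x - 2*a^2*t1*x) (1 + p1*y - b + b*t1*y - a - a*t1*y - a*t1*x + 2*a*b*t1*x + 2*a^2*t1*x) (1 + p1*y - b + b*t1*y - a - a*t1*y - a*t1*x + 2*a*b*t1*x + 2*a^2*t1*x) (-p1*y + b - b*t1*y + a + a*t1*y + a*t1*x - 2*a*b*t1*x - 2*a^2*t1*x) (0) (-p1*y + b - b*t1*y + a + a*t1*y + a*t1*x - 2*a*b*t1*x - 2*a^2*t1*x) (1 + 2*p1*y - 2*b + 2*b*t1*y - 2*a - 2*a*t1*y - 2*a*t1*x + 4*a*b*t1*x + 4*a^2*t1*x) (-p1*y + b - b*t1*y + a + a*t1*y + a*t1*x - 2*a*b*t1*x - 2*a^2*t1*x)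 (-1) (1) (1) (-1) (0) (-1) (2) (-1)) = 1 := by
    rw [one_M4, mul_M4]
    apply eq_M4 <;> ring
  have hViV : (M4 (-p1*y + b - b*t1*y + a + a*t1*y + a*t1*x - 2*a*b*t1*x - 2*a^2*t1*x) (1 + p1*y - b + b*t1*y - a - a*t1*y - a*t1*x + 2*a*b*t1*x + 2*a^2*t1*x) (1 + p1*y - b + b*t1*y - a - a*t1*y - a*t1*x + 2*a*b*t1*x + 2*a^2*t1*x) (-p1*y + b - b*t1*y + a + a*t1*y + a*t1*x - 2*a*b*t1*x - 2*a^2*t1*x) (0) (-p1*y + b - b*t1*y + a + a*t1*y + a*t1*x - 2*a*b*t1*x - 2*a^2*t1*x) (1 + 2*p1*y - 2*b + 2*b*t1*y - 2*a - 2*a*t1*y - 2*a*t1*x + 4*a*b*t1*x + 4*a^2*t1*x) (-p1*y + b - b*t1*y + a + a*t1*y + a*t1*x - 2*a*b*t1*x - 2*a^2*t1*x) (-1) (1) (1) (-1) (0) (-1) (2) (-1)) * (M4 (2) (-3) (-1 - 2*p1*y + 2*b - 2*b*t1*y + 2*a + 2*a*t1*y + 2*a*t1*x - 4*a*b*t1*x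 - 4*a^2*t1*x) (1 + 3*p1*y - 3*b + 3*b*t1*y - 3*a - 3*a*t1*y - 3*a*t1*x + 6*a*b*t1*x + 6*a^2*t1*x) (1) (-1) (-p1*y + b - b*t1*y + a + a*t1*y + a*t1*x - 2*a*b*t1*x - 2*a^2*t1*x) (p1*y - b + b*t1*y - a - a*t1*y - a*t1*x + 2*a*b*t1*x + 2*a^2*t1*x) (0) (1) (0) (-p1*y + b - b*t1*y + a + a*t1*y + a*t1*x - 2*a*b*t1*x - 2*a^2*t1*x) (-1) (3) (p1*y - b + b*t1*y - a - a*t1*y - a*t1*x + 2*a*b*t1*x + 2*a^2*t1*x) (-1 - 3*p1*y + 3*b - 3*b*t1*y + 3*a + 3*a*t1*y + 3*a*t1*x - 6*a*b*t1*x - 6*a^2*t1*x)) = 1 := by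
    rw [one_M4, mul_M4]
    apply eq_M4 <;> ring
  refine ⟨hdvd2, hdvd4, ?_⟩
  have equiv1 := cokerEquivOfMul _ _ _ _ _ _ hUUi hUiU hVVi hViV hdiag
  rw [hMex]
  exact ⟨equiv1.toAddEquiv.trans (((cokerDiag ![(alphaHat:ℤ), (alphaHat:ℤ), betaHat, betaHat])).trans
    (pi4AddEquiv fun i => ZMod (((![(alphaHat:ℤ), (alphaHat:ℤ), betaHat, betaHat]) i).natAbs)))⟩
end

section
/- For every odd natural number n, the integer s(n) + (a−b)·t(n) is even, and consequently s(n) + (5a−b)·t(n) is even. -/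
/-- For every odd `n`, the integer `s(n) + (a−b)·t(n)` is even, and
consequently `s(n) + (5a−b)·t(n)` is even, where `s`, `t` are the sequences associated
with the Alexander polynomial `A(z) = a + (b−a)z + (1−2b)z² + (b−a)z³ + a z⁴`. -/
theorem parity_odd (a b : ℤ)
    (s t : ℕ → ℤ)
    (hs_rec : ∀ n : ℕ, a ^ 2 * s n + (2 * a - 3 * a ^ 2 - 4 * a * b - b ^ 2) * s (n + 2)
      + (1 - 4 * a + 9 * a ^ 2 - 2 * b + 6 * a * b + b ^ 2) * s (n + 4)
      + (-2 + 6 * a + 2 * b) * s (n + 6) + s (n + 8) = 0)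
    (ht_rec : ∀ n : ℕ, a ^ 2 * t n + (2 * a - 3 * a ^ 2 - 4 * a * b - b ^ 2) * t (n + 2)
      + (1 - 4 * a + 9 * a ^ 2 - 2 * b + 6 * a * b + b ^ 2) * t (n + 4)
      + (-2 + 6 * a + 2 * b) * t (n + 6) + t (n + 8) = 0)
    (hs0 : s 0 = 0) (hs1 : s 1 = 2) (hs2 : s 2 = 2) (hs3 : s 3 = 2 - 9 * a - 3 * b)
    (hs4 : s 4 = 2 * (1 - 3 * a - b))
    (hs5 : s 5 = 2 - 25 * a + 45 * a ^ 2 - 5 * b + 30 * a * b + 5 * b ^ 2)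
    (hs6 : s 6 = 2 - 18 * a + 27 * a ^ 2 - 4 * b + 18 * a * b + 3 * b ^ 2)
    (hs7 : s 7 = 2 - 49 * a + 189 * a ^ 2 - 189 * a ^ 3 - 7 * b + 105 * a * b
      - 189 * a ^ 2 * b + 14 * b ^ 2 - 63 * a * b ^ 2 - 7 * b ^ 3)
    (ht0 : t 0 = 0) (ht1 : t 1 = 0) (ht2 : t 2 = 0) (ht3 : t 3 = -3) (ht4 : t 4 = -2)
    (ht5 : t 5 = 5 * (-1 + 3 * a + b)) (ht6 : t 6 = -4 + 9 * a + 3 * b)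
    (ht7 : t 7 = -7 * (1 - 7 * a + 9 * a ^ 2 - 2 * b + 6 * a * b + b ^ 2))
    (n : ℕ) (hn : Odd n) :
    2 ∣ s n + (a - b) * t n ∧ 2 ∣ s n + (5 * a - b) * t n := by
  have hstep : ∀ m : ℕ, 2 ∣ (s m + (a - b) * t m) → 2 ∣ (s (m+2) + (a - b) * t (m+2)) →
      2 ∣ (s (m+4) + (a - b) * t (m+4)) → 2 ∣ (s (m+8) + (a - b) * t (m+8)) := by
    intro m hx hy hz
    obtain ⟨x, hx⟩ := hx
    obtain ⟨y, hy⟩ := hy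
    obtain ⟨z, hz⟩ := hz
    have h1 := hs_rec m
    have h2 := ht_rec m
    refine ⟨-(a^2 * x + (2*a-3*a^2-4*a*b-b^2) * y + (1-4*a+9*a^2-2*b+6*a*b+b^2) * z
      + (-1+3*a+b) * (s (m+6) + (a - b) * t (m+6))), ?_⟩
    linear_combination h1 + (a - b) * h2 - a^2 * hx
      - (2*a-3*a^2-4*a*b-b^2) * hy - (1-4*a+9*a^2-2*b+6*a*b+b^2) * hz
  have main : ∀ k : ℕ, 2 ∣ (s (2*k+1) + (a - b) * t (2*k+1)) := by
    intro k
    induction k using Nat.strong_induction_on with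
    | _ k ih =>
      match k, ih with
      | 0, _ => rw [show 2*0+1 = 1 from rfl, hs1, ht1]; exact ⟨1, by ring⟩
      | 1, _ => rw [show 2*1+1 = 3 from rfl, hs3, ht3]; exact ⟨1 - 6*a, by ring⟩
      | 2, _ => rw [show 2*2+1 = 5 from rfl, hs5, ht5]
                exact ⟨1 - 15*a + 30*a^2 + 10*a*b, by ring⟩
      | 3, _ => rw [show 2*3+1 = 7 from rfl, hs7, ht7]
                exact ⟨1 - 28*a + 119*a^2 - 126*a^3 + 35*a*b - 84*a^2*b - 14*a*b^2, by ring⟩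
      | (m+4), ih =>
        have h := hstep (2*m+1) (ih m (by omega))
          (by have := ih (m+1) (by omega); rwa [show 2*(m+1)+1 = 2*m+1+2 by ring] at this)
          (by have := ih (m+2) (by omega); rwa [show 2*(m+2)+1 = 2*m+1+4 by ring] at this)
        rwa [show 2*(m+4)+1 = 2*m+1+8 by ring]
  obtain ⟨k, hk⟩ := hn
  subst hk
  have h := main k
  refine ⟨h, ?_⟩
  obtain ⟨w, hw⟩ := h
  exact ⟨w + 2 * a * t (2*k+1), by linarith [hw]⟩
end

section
/- For every even natural number n, the integer s(n) + (5a−b)·t(n) is even, and 4 divides s(n)² + (4a − (3a+b)²)·t(n)². In particular ζ(n) = (s(n) + (5a−b)·t(n))/2 and μ(n) = (s(n)² + (4a − (3a+b)²)·t(n)²)/4 are integers. -/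
/-- For every even `n`, the integer `s(n) + (5a−b)·t(n)` is even and
`4` divides `s(n)² + (4a − (3a+b)²)·t(n)²`; in particular
`ζ(n) = (s(n) + (5a−b)t(n))/2` and `μ(n) = (s(n)² + (4a − (3a+b)²)t(n)²)/4` are
integers. Here `s`, `t` are the sequences associated with the Alexander polynomial
`A(z) = a + (b−a)z + (1−2b)z² + (b−a)z³ + a z⁴`. -/
theorem parity_even (a b : ℤ)
    (s t : ℕ → ℤ)
    (hs_rec : ∀ n : ℕ, a ^ 2 * s n + (2 * a - 3 * a ^ 2 - 4 * a * b - b ^ 2) * s (n + 2)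
      + (1 - 4 * a + 9 * a ^ 2 - 2 * b + 6 * a * b + b ^ 2) * s (n + 4)
      + (-2 + 6 * a + 2 * b) * s (n + 6) + s (n + 8) = 0)
    (ht_rec : ∀ n : ℕ, a ^ 2 * t n + (2 * a - 3 * a ^ 2 - 4 * a * b - b ^ 2) * t (n + 2)
      + (1 - 4 * a + 9 * a ^ 2 - 2 * b + 6 * a * b + b ^ 2) * t (n + 4)
      + (-2 + 6 * a + 2 * b) * t (n + 6) + t (n + 8) = 0)
    (hs0 : s 0 = 0) (hs1 : s 1 = 2) (hs2 : s 2 = 2) (hs3 : s 3 = 2 - 9 * a - 3 * b)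
    (hs4 : s 4 = 2 * (1 - 3 * a - b))
    (hs5 : s 5 = 2 - 25 * a + 45 * a ^ 2 - 5 * b + 30 * a * b + 5 * b ^ 2)
    (hs6 : s 6 = 2 - 18 * a + 27 * a ^ 2 - 4 * b + 18 * a * b + 3 * b ^ 2)
    (hs7 : s 7 = 2 - 49 * a + 189 * a ^ 2 - 189 * a ^ 3 - 7 * b + 105 * a * b
      - 189 * a ^ 2 * b + 14 * b ^ 2 - 63 * a * b ^ 2 - 7 * b ^ 3)
    (ht0 : t 0 = 0) (ht1 : t 1 = 0) (ht2 : t 2 = 0) (ht3 : t 3 = -3) (ht4 : t 4 = -2)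
    (ht5 : t 5 = 5 * (-1 + 3 * a + b)) (ht6 : t 6 = -4 + 9 * a + 3 * b)
    (ht7 : t 7 = -7 * (1 - 7 * a + 9 * a ^ 2 - 2 * b + 6 * a * b + b ^ 2))
    (n : ℕ) (hn : Even n) :
    2 ∣ s n + (5 * a - b) * t n ∧
    4 ∣ s n ^ 2 + (4 * a - (3 * a + b) ^ 2) * t n ^ 2 := by
  have key : ∀ k : ℕ, 2 ∣ s (2 * k) + (5 * a - b) * t (2 * k)
      ∧ 2 ∣ s (2 * k + 2) + (5 * a - b) * t (2 * k + 2)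
      ∧ 2 ∣ s (2 * k + 4) + (5 * a - b) * t (2 * k + 4)
      ∧ 2 ∣ s (2 * k + 6) + (5 * a - b) * t (2 * k + 6) := by
    intro k
    induction k with
    | zero =>
      refine ⟨⟨0, ?_⟩, ⟨1, ?_⟩, ⟨1 - 8 * a, ?_⟩,
        ⟨1 - 19 * a + 36 * a ^ 2 + 12 * a * b, ?_⟩⟩ <;>
        simp only [Nat.mul_zero, Nat.zero_add, hs0, hs2, hs4, hs6, ht0, ht2, ht4, ht6] <;>
        ring
    | succ k ih =>
      obtain ⟨⟨x1, h1⟩, ⟨x2, h2⟩, ⟨x3, h3⟩, ⟨x4, h4⟩⟩ := ih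
      have e1 : 2 * (k + 1) = 2 * k + 2 := by omega
      have e2 : 2 * k + 2 + 2 = 2 * k + 4 := by omega
      have e3 : 2 * k + 2 + 4 = 2 * k + 6 := by omega
      have e4 : 2 * k + 2 + 6 = 2 * k + 8 := by omega
      rw [e1, e2, e3, e4]
      refine ⟨⟨x2, h2⟩, ⟨x3, h3⟩, ⟨x4, h4⟩,
        ⟨-(a ^ 2 * x1 + (2 * a - 3 * a ^ 2 - 4 * a * b - b ^ 2) * x2
          + (1 - 4 * a + 9 * a ^ 2 - 2 * b + 6 * a * b + b ^ 2) * x3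
          + (-2 + 6 * a + 2 * b) * x4), ?_⟩⟩
      linear_combination (hs_rec (2 * k)) + (5 * a - b) * (ht_rec (2 * k))
        - a ^ 2 * h1 - (2 * a - 3 * a ^ 2 - 4 * a * b - b ^ 2) * h2
        - (1 - 4 * a + 9 * a ^ 2 - 2 * b + 6 * a * b + b ^ 2) * h3
        - (-2 + 6 * a + 2 * b) * h4
  obtain ⟨m, hm⟩ := hn
  have hn2 : n = 2 * m := by omega
  subst hn2
  have h1 := (key m).1
  refine ⟨h1, ?_⟩
  obtain ⟨c, hc⟩ := h1
  refine ⟨c ^ 2 - c * (5 * a - b) * t (2 * m)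
    + (4 * a ^ 2 - 4 * a * b + a) * t (2 * m) ^ 2, ?_⟩
  linear_combination (s (2 * m) - (5 * a - b) * t (2 * m) + 2 * c) * hc
end
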